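/- arXiv:2109.12555 — 14 statements merged into one kernel-verified Lean document; each statement's English description precedes it below -/
import Mathlib

section
/- Let W define a connected signed network with signed Laplacian L. If the positive subgraph G⁺ — the simple graph on the same n nodes whose edges are exactly the pairs {i,j} with W_{ij} > 0 — is disconnected, then L has at least one negative eigenvalue, i.e., i₋(L) ≥ 1, so L is not positive semidefinite. -/
open Matrix Finset Filter

/-- The signed Laplacian of a signed network with weight matrix `W`. -/
noncomputable def signedLaplacian {n : ℕ} (W : Matrix (Fin n) (Fin n) ℝ) :
    Matrix (Fin n) (Fin n) ℝ :=
  Matrix.of fun i j => if i = j then ∑ k, W i k else -W i j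

/-- The number of negative eigenvalues (with multiplicity) of a Hermitian real matrix. -/
noncomputable def negEigCount {n : ℕ} (L : Matrix (Fin n) (Fin n) ℝ)
    (hL : L.IsHermitian) : ℕ :=
  letI := Classical.decPred (fun i : Fin n => hL.eigenvalues i < 0)
  (Finset.univ.filter fun i : Fin n => hL.eigenvalues i < 0).card

/-- The underlying simple graph of a signed network: `i` and `j` are adjacent
iff they are distinct and `W i j ≠ 0`. -/
def underlyingGraph {n : ℕ} (W : Matrix (Fin n) (Fin n) ℝ) : SimpleGraph (Fin n) :=
  SimpleGraph.fromRel (fun i j => W i j ≠ 0)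

/-- The number of negative edges of a signed network: the number of unordered
pairs `{i, j}` with `W i j < 0` (counted via ordered pairs with `i < j`). -/
noncomputable def negEdgeCount {n : ℕ} (W : Matrix (Fin n) (Fin n) ℝ) : ℕ :=
  letI := Classical.decPred (fun p : Fin n × Fin n => p.1 < p.2 ∧ W p.1 p.2 < 0)
  (Finset.univ.filter fun p : Fin n × Fin n => p.1 < p.2 ∧ W p.1 p.2 < 0).card

theorem disconnected_positive_subgraph_not_posSemidef
    {n : ℕ} (W : Matrix (Fin n) (Fin n) ℝ)
    (hsymm : W.IsSymm) (hdiag : ∀ i, W i i = 0)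
    (hconn : (underlyingGraph W).Connected)
    (L : Matrix (Fin n) (Fin n) ℝ) (hLdef : L = signedLaplacian W)
    (hL : L.IsHermitian)
    (hplus : ¬ (SimpleGraph.fromRel (fun i j => 0 < W i j)).Connected) :
    1 ≤ negEigCount L hL ∧ ¬ L.PosSemidef := by
  classical
  set Gp := SimpleGraph.fromRel (fun i j => 0 < W i j) with hGp
  have hne : Nonempty (Fin n) := hconn.nonempty
  have hnp : ¬ Gp.Preconnected := by
    intro h
    exact hplus ((SimpleGraph.connected_iff _).mpr ⟨h, hne⟩)
  rw [SimpleGraph.Preconnected] at hnp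
  push_neg at hnp
  obtain ⟨u, v, huv⟩ := hnp
  have hWsymm : ∀ i j, W j i = W i j := by
    intro i j
    have := congrFun (congrFun hsymm j) i
    simpa [Matrix.transpose_apply] using this.symm
  -- there is a crossing edge (which must be negative)
  have hcross : ∃ i j, Gp.Reachable u i ∧ ¬ Gp.Reachable u j ∧ W i j ≠ 0 := by
    by_contra hc
    push_neg at hc
    have step : ∀ a b, (underlyingGraph W).Walk a b → Gp.Reachable u a → Gp.Reachable u b := by
      intro a b p
      induction p with
      | nil => exact id
      | @cons s t r h p ih =>
        intro ha
        have hW : W s t ≠ 0 := by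
          rcases h.2 with h1 | h1
          · exact h1
          · rw [hWsymm] at h1; exact h1
        by_cases hy : Gp.Reachable u t
        · exact ih hy
        · exact absurd (hc s t ha hy) hW
    obtain ⟨p⟩ := hconn.preconnected u v
    exact huv (step u v p (SimpleGraph.Reachable.refl u))
  obtain ⟨i0, j0, hri0, hrj0, hW0⟩ := hcross
  -- no positive edge crosses the reachability cut
  have hnopos : ∀ i j, Gp.Reachable u i → ¬ Gp.Reachable u j → W i j ≤ 0 := by
    intro i j hi hj
    by_contra h
    push_neg at h
    have hij : i ≠ j := fun e => hj (e ▸ hi)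
    have hadj : Gp.Adj i j := by
      rw [hGp]
      exact ⟨hij, Or.inl h⟩
    exact hj (hi.trans hadj.reachable)
  have hW0' : W i0 j0 < 0 := lt_of_le_of_ne (hnopos i0 j0 hri0 hrj0) hW0
  -- the test vector: indicator of the reachable set
  set x : Fin n → ℝ := fun i => if Gp.Reachable u i then 1 else 0 with hx
  have row : ∀ i, (L *ᵥ x) i = ∑ j, W i j * (x i - x j) := by
    intro i
    have hLent : ∀ j, L i j = (if i = j then (∑ k, W i k) else 0) - W i j := by
      intro j
      by_cases h : i = j
      · subst h; simp [hLdef, signedLaplacian, hdiag]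
      · simp [hLdef, signedLaplacian, h]
    simp only [mulVec, dotProduct, hLent, sub_mul, Finset.sum_sub_distrib, ite_mul, zero_mul,
      Finset.sum_ite_eq, Finset.mem_univ, if_true]
    simp [mul_sub, Finset.sum_sub_distrib, Finset.sum_mul]
  have hq : x ⬝ᵥ (L *ᵥ x) = ∑ i, ∑ j, W i j * (x i * (x i - x j)) := by
    simp only [dotProduct, row]
    refine Finset.sum_congr rfl fun i _ => ?_
    rw [Finset.mul_sum]
    exact Finset.sum_congr rfl fun j _ => by ring
  have hterm : ∀ i j, W i j * (x i * (x i - x j)) ≤ 0 := by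
    intro i j
    by_cases hi : Gp.Reachable u i
    · by_cases hj : Gp.Reachable u j
      · simp [hx, hi, hj]
      · have h1 : x i * (x i - x j) = 1 := by simp [hx, hi, hj]
        rw [h1, mul_one]
        exact hnopos i j hi hj
    · simp [hx, hi]
  have hterm0 : W i0 j0 * (x i0 * (x i0 - x j0)) < 0 := by
    simpa [hx, hri0, hrj0] using hW0'
  have hqneg : x ⬝ᵥ (L *ᵥ x) < 0 := by
    rw [hq]
    have hlt : ∑ i, ∑ j, W i j * (x i * (x i - x j)) < ∑ _i : Fin n, (0 : ℝ) := by
      apply Finset.sum_lt_sum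
      · intro i _
        exact Finset.sum_nonpos fun j _ => hterm i j
      · refine ⟨i0, Finset.mem_univ _, ?_⟩
        have := Finset.sum_lt_sum (fun j (_ : j ∈ Finset.univ) => hterm i0 j)
          ⟨j0, Finset.mem_univ _, hterm0⟩
        simpa using this
    simpa using hlt
  have hnotPSD : ¬ L.PosSemidef := by
    intro hP
    have h2 := hP.dotProduct_mulVec_nonneg x
    have hsx : star x = x := by
      funext i; simp
    rw [hsx] at h2
    linarith
  have hev : ∃ i, hL.eigenvalues i < 0 := by
    by_contra h
    push_neg at h
    exact hnotPSD (hL.posSemidef_iff_eigenvalues_nonneg.mpr h)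
  refine ⟨?_, hnotPSD⟩
  unfold negEigCount
  obtain ⟨i, hi⟩ := hev
  exact Finset.card_pos.mpr ⟨i, by simp [hi]⟩
end

section
/- Let W define a connected signed network with signed Laplacian L. If every negative edge of the network is a cut edge (bridge) of the underlying graph — i.e., for every pair {i,j} with W_{ij} < 0, deleting the edge {i,j} disconnects the underlying graph — then i₋(L) equals the number of negative edges of the network. -/
open Matrix Finset Filter

lemma reachable_lift {V : Type*} {G H : SimpleGraph V}
    (h : ∀ a b, G.Adj a b → H.Reachable a b) {a b : V} (hr : G.Reachable a b) :
    H.Reachable a b := by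
  obtain ⟨w⟩ := hr
  induction w with
  | nil => exact SimpleGraph.Reachable.refl _
  | cons ha _ ih => exact (h _ _ ha).trans ih

lemma underlying_adj {n : ℕ} (W : Matrix (Fin n) (Fin n) ℝ) (hsymm : W.IsSymm) {a b : Fin n} :
    (underlyingGraph W).Adj a b ↔ a ≠ b ∧ W a b ≠ 0 := by
  rw [underlyingGraph, SimpleGraph.fromRel_adj]
  constructor
  · rintro ⟨hne, h | h⟩
    · exact ⟨hne, h⟩
    · exact ⟨hne, by rw [← hsymm.apply a b]; exact h⟩
  · rintro ⟨hne, h⟩; exact ⟨hne, Or.inl h⟩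

lemma li_of_dot {n : ℕ} {ι : Type*} [Fintype ι] [DecidableEq ι] (v φ : ι → Fin n → ℝ)
    (h : ∀ i j, φ i ⬝ᵥ v j = if i = j then 1 else 0) : LinearIndependent ℝ v := by
  rw [Fintype.linearIndependent_iff]
  intro g hg i
  have h2 := congrArg (fun y => φ i ⬝ᵥ y) hg
  simp only [dotProduct_zero] at h2
  have h3 : φ i ⬝ᵥ (∑ j, g j • v j) = ∑ j, g j * (φ i ⬝ᵥ v j) := by
    simp only [dotProduct, Finset.sum_apply, Pi.smul_apply, smul_eq_mul, Finset.mul_sum]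
    rw [Finset.sum_comm]
    exact sum_congr rfl fun j _ => sum_congr rfl fun k _ => by ring
  rw [h3] at h2
  simpa [h, mul_ite] using h2

lemma lap_mulVec {n : ℕ} (W : Matrix (Fin n) (Fin n) ℝ) (hdiag : ∀ i, W i i = 0)
    (x : Fin n → ℝ) (i : Fin n) :
    (signedLaplacian W *ᵥ x) i = ∑ j, W i j * (x i - x j) := by
  have key : ∀ j, (if i = j then ∑ k, W i k else -W i j) * x j
      = (if i = j then (∑ k, W i k) * x i else 0) + (- (W i j * x j)) := by
    intro j
    by_cases h : i = j
    · subst h; simp [hdiag i]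
    · simp [h]
  calc (signedLaplacian W *ᵥ x) i = ∑ j, (if i = j then ∑ k, W i k else -W i j) * x j := by
        simp [signedLaplacian, mulVec, dotProduct]
    _ = ∑ j, ((if i = j then (∑ k, W i k) * x i else 0) + (- (W i j * x j))) :=
        Finset.sum_congr rfl fun j _ => key j
    _ = (∑ k, W i k) * x i - ∑ j, W i j * x j := by
        rw [Finset.sum_add_distrib, Finset.sum_ite_eq univ i]
        simp [sub_eq_add_neg, Finset.sum_neg_distrib]
    _ = ∑ j, W i j * (x i - x j) := by
        rw [Finset.sum_mul]
        rw [← Finset.sum_sub_distrib]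
        exact Finset.sum_congr rfl fun j _ => by ring

lemma quad_form {n : ℕ} (W : Matrix (Fin n) (Fin n) ℝ) (hsymm : W.IsSymm)
    (hdiag : ∀ i, W i i = 0) (x : Fin n → ℝ) :
    x ⬝ᵥ (signedLaplacian W *ᵥ x) = (1/2) * ∑ i, ∑ j, W i j * (x i - x j)^2 := by
  have h1 : x ⬝ᵥ (signedLaplacian W *ᵥ x) = ∑ i, ∑ j, W i j * (x i * (x i - x j)) := by
    simp only [dotProduct, lap_mulVec W hdiag x, Finset.mul_sum]
    exact sum_congr rfl fun i _ => sum_congr rfl fun j _ => by ring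
  have h2 : ∑ i, ∑ j, W i j * (x j * (x j - x i)) = ∑ i, ∑ j, W i j * (x i * (x i - x j)) := by
    rw [Finset.sum_comm]
    exact sum_congr rfl fun i _ => sum_congr rfl fun j _ => by rw [hsymm.apply i j]
  have h3 : ∑ i, ∑ j, W i j * (x i - x j)^2
      = (∑ i, ∑ j, W i j * (x i * (x i - x j))) + ∑ i, ∑ j, W i j * (x j * (x j - x i)) := by
    rw [← Finset.sum_add_distrib]
    refine sum_congr rfl fun i _ => ?_
    rw [← Finset.sum_add_distrib]
    exact sum_congr rfl fun j _ => by ring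
  rw [h3, h2, ← h1]; ring

lemma dot_sum_smul {n : ℕ} {ι : Type*} (t : Finset ι) (y : Fin n → ℝ) (c : ι → ℝ)
    (v : ι → Fin n → ℝ) :
    y ⬝ᵥ (∑ j ∈ t, c j • v j) = ∑ j ∈ t, c j * (y ⬝ᵥ v j) := by
  simp only [dotProduct, Finset.sum_apply, Pi.smul_apply, smul_eq_mul, Finset.mul_sum]
  rw [Finset.sum_comm]
  exact sum_congr rfl fun j _ => sum_congr rfl fun k _ => by ring

section Eigen
variable {n : ℕ} {L : Matrix (Fin n) (Fin n) ℝ}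

noncomputable def gv (hL : L.IsHermitian) : Fin n → Fin n → ℝ :=
  fun i => ⇑(hL.eigenvectorBasis i)

lemma gv_dot (hL : L.IsHermitian) (i j : Fin n) :
    gv hL i ⬝ᵥ gv hL j = if i = j then 1 else 0 := by
  have h := hL.eigenvectorBasis.orthonormal
  rw [orthonormal_iff_ite] at h
  have h2 := h i j
  rw [← h2]
  simp [gv, PiLp.inner_apply, RCLike.inner_apply, dotProduct]
  exact Finset.sum_congr rfl fun _ _ => mul_comm _ _

lemma gv_mulVec (hL : L.IsHermitian) (i : Fin n) :
    L *ᵥ gv hL i = hL.eigenvalues i • gv hL i :=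
  hL.mulVec_eigenvectorBasis i

lemma gv_li (hL : L.IsHermitian) : LinearIndependent ℝ (gv hL) :=
  li_of_dot _ _ (gv_dot hL)

lemma gv_span (hL : L.IsHermitian) : Submodule.span ℝ (Set.range (gv hL)) = ⊤ := by
  apply Submodule.eq_top_of_finrank_eq
  rw [finrank_span_eq_card (gv_li hL)]
  simp [Module.finrank_fintype_fun_eq_card]

lemma gv_complete (hL : L.IsHermitian) (x : Fin n → ℝ) (h : ∀ i, gv hL i ⬝ᵥ x = 0) :
    x = 0 := by
  have hx : x ∈ Submodule.span ℝ (Set.range (gv hL)) := by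
    rw [gv_span hL]; trivial
  obtain ⟨c, hc⟩ := (Submodule.mem_span_range_iff_exists_fun ℝ).1 hx
  have e : x ⬝ᵥ (∑ i, c i • gv hL i) = 0 := by
    rw [dot_sum_smul]
    exact Finset.sum_eq_zero fun i _ => by
      rw [dotProduct_comm x (gv hL i), h i, mul_zero]
  rw [hc] at e
  simpa [dotProduct_self_eq_zero] using e

lemma gv_expand (hL : L.IsHermitian) (x : Fin n → ℝ) :
    x = ∑ i, (gv hL i ⬝ᵥ x) • gv hL i := by
  have hz : ∀ j, gv hL j ⬝ᵥ (x - ∑ i, (gv hL i ⬝ᵥ x) • gv hL i) = 0 := by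
    intro j
    rw [dotProduct_sub, dot_sum_smul]
    simp [gv_dot, mul_ite, dotProduct_comm (gv hL j) x]
  have h0 := gv_complete hL _ hz
  exact (sub_eq_zero.mp h0)

lemma quad_eig (hL : L.IsHermitian) (x : Fin n → ℝ) :
    x ⬝ᵥ (L *ᵥ x) = ∑ i, hL.eigenvalues i * (gv hL i ⬝ᵥ x)^2 := by
  set d : Fin n → ℝ := fun i => gv hL i ⬝ᵥ x with hd
  have hx : x = ∑ i, d i • gv hL i := gv_expand hL x
  have hmv : L *ᵥ x = ∑ i, d i • (hL.eigenvalues i • gv hL i) := by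
    conv_lhs => rw [hx]
    rw [show L *ᵥ (∑ i, d i • gv hL i) = L.mulVecLin (∑ i, d i • gv hL i) from rfl]
    rw [map_sum]
    exact sum_congr rfl fun i _ => by
      rw [_root_.map_smul, Matrix.mulVecLin_apply, gv_mulVec]
  rw [hmv]
  have := dot_sum_smul Finset.univ x (fun i => d i) (fun i => hL.eigenvalues i • gv hL i)
  rw [this]
  exact sum_congr rfl fun i _ => by
    rw [dotProduct_smul]
    simp only [smul_eq_mul]
    rw [dotProduct_comm x (gv hL i)]
    rw [hd]; ring

end Eigen

theorem negEig_eq_of_all_negative_edges_are_bridges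
    {n : ℕ} (W : Matrix (Fin n) (Fin n) ℝ)
    (hsymm : W.IsSymm) (hdiag : ∀ i, W i i = 0)
    (hconn : (underlyingGraph W).Connected)
    (L : Matrix (Fin n) (Fin n) ℝ) (hLdef : L = signedLaplacian W)
    (hL : L.IsHermitian)
    (hbridge : ∀ i j, W i j < 0 →
      ¬ ((underlyingGraph W).deleteEdges {s(i, j)}).Connected) :
    negEigCount L hL = negEdgeCount W := by
  classical
  subst hLdef
  set G := underlyingGraph W with hGdef
  set s : Finset (Fin n × Fin n) :=
    (univ.filter fun p : Fin n × Fin n => p.1 < p.2 ∧ W p.1 p.2 < 0) with hsdef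
  have hmem : ∀ p : Fin n × Fin n, p ∈ s ↔ p.1 < p.2 ∧ W p.1 p.2 < 0 := by
    intro p; rw [hsdef]; simp
  set ev := hL.eigenvalues with hevdef
  set neg : Finset (Fin n) := (univ.filter fun i => ev i < 0) with hnegdef
  have hnegmem : ∀ i, i ∈ neg ↔ ev i < 0 := by intro i; rw [hnegdef]; simp
  have hcount1 : negEigCount _ hL = neg.card := by
    rw [negEigCount, hnegdef]
  have hcount2 : negEdgeCount W = s.card := by
    rw [negEdgeCount, hsdef]
    congr 1
    exact Finset.filter_congr_decidable _ _ _
  -- graph facts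
  have hadj : ∀ a b : Fin n, G.Adj a b ↔ a ≠ b ∧ W a b ≠ 0 := fun a b =>
    underlying_adj W hsymm
  haveI : Nonempty (Fin n) := hconn.nonempty
  have hnr : ∀ i j : Fin n, W i j < 0 → ¬ (G.deleteEdges {s(i, j)}).Reachable i j := by
    intro i j hw hr
    refine hbridge i j hw ⟨?_⟩
    intro a b
    refine reachable_lift ?_ (hconn.preconnected a b)
    intro u v huv
    by_cases he : s(u, v) = s(i, j)
    · rcases Sym2.eq_iff.1 he with ⟨rfl, rfl⟩ | ⟨rfl, rfl⟩
      · exact hr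
      · exact hr.symm
    · exact SimpleGraph.Adj.reachable
        (by rw [SimpleGraph.deleteEdges_adj]; exact ⟨huv, by simpa using he⟩)
  -- the indicator functions
  set chi : Fin n × Fin n → Fin n → ℝ := fun p v =>
    if (G.deleteEdges {s(p.1, p.2)}).Reachable p.1 v then 1 else 0 with hchidef
  have chi_diff_self : ∀ p ∈ s, chi p p.1 - chi p p.2 = 1 := by
    intro p hp
    have hw := (hmem p).1 hp
    rw [hchidef]; simp only
    rw [if_pos (SimpleGraph.Reachable.refl _), if_neg (hnr p.1 p.2 hw.2)]
    norm_num
  have chi_const : ∀ (p : Fin n × Fin n), ∀ u v : Fin n, W u v ≠ 0 →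
      s(u, v) ≠ s(p.1, p.2) → chi p u = chi p v := by
    intro p u v hw hne
    have huv : u ≠ v := fun h => hw (h ▸ hdiag u)
    have hadjuv : (G.deleteEdges {s(p.1, p.2)}).Adj u v := by
      rw [SimpleGraph.deleteEdges_adj]
      exact ⟨(hadj u v).2 ⟨huv, hw⟩, by simpa using hne⟩
    have hiff : (G.deleteEdges {s(p.1, p.2)}).Reachable p.1 u ↔
        (G.deleteEdges {s(p.1, p.2)}).Reachable p.1 v :=
      ⟨fun h => h.trans hadjuv.reachable, fun h => h.trans hadjuv.symm.reachable⟩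
    rw [hchidef]; simp only
    exact if_congr hiff rfl rfl
  have hedge_ne : ∀ p ∈ s, ∀ q ∈ s, s(q.1, q.2) = s(p.1, p.2) → q = p := by
    intro p hp q hq h
    rcases Sym2.eq_iff.1 h with ⟨h1, h2⟩ | ⟨h1, h2⟩
    · exact Prod.ext h1 h2
    · exfalso
      have o1 := ((hmem p).1 hp).1
      have o2 := ((hmem q).1 hq).1
      rw [h1, h2] at o2
      exact absurd o1 (not_lt.2 o2.le)
  have chi_diff : ∀ p ∈ s, ∀ q ∈ s, chi p q.1 - chi p q.2 = if q = p then 1 else 0 := by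
    intro p hp q hq
    by_cases h : q = p
    · subst h; rw [chi_diff_self q hq]; simp
    · rw [if_neg h]
      have hwq := ((hmem q).1 hq).2
      have hcc := chi_const p q.1 q.2 hwq.ne fun hc => h (hedge_ne p hp q hq hc)
      rw [hcc]; ring
  -- combinations of the indicators
  set xc : (Fin n × Fin n → ℝ) → Fin n → ℝ := fun c => ∑ p ∈ s, c p • chi p with hxcdef
  have hx_negpair : ∀ c, ∀ q ∈ s, xc c q.1 - xc c q.2 = c q := by
    intro c q hq
    rw [hxcdef]; simp only [Finset.sum_apply, Pi.smul_apply, smul_eq_mul]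
    rw [← Finset.sum_sub_distrib]
    have hterm : ∀ p ∈ s, c p * chi p q.1 - c p * chi p q.2 = if q = p then c p else 0 := by
      intro p hp
      rw [← mul_sub, chi_diff p hp q hq]
      split_ifs <;> simp
    rw [Finset.sum_congr rfl hterm, Finset.sum_ite_eq s q c, if_pos hq]
  have hx_pospair : ∀ c, ∀ u v : Fin n, W u v ≠ 0 → ¬ W u v < 0 → xc c u = xc c v := by
    intro c u v hw hneg
    rw [hxcdef]; simp only [Finset.sum_apply, Pi.smul_apply, smul_eq_mul]
    refine Finset.sum_congr rfl fun p hp => ?_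
    have hwp := ((hmem p).1 hp).2
    have hne : s(u, v) ≠ s(p.1, p.2) := by
      intro hc
      rcases Sym2.eq_iff.1 hc with ⟨h1, h2⟩ | ⟨h1, h2⟩
      · exact hneg (by rw [h1, h2]; exact hwp)
      · exact hneg (by rw [h1, h2, hsymm.apply p.1 p.2]; exact hwp)
    rw [chi_const p u v hw hne]
  have hQVc : ∀ c : Fin n × Fin n → ℝ,
      xc c ⬝ᵥ (signedLaplacian W *ᵥ xc c) = ∑ p ∈ s, W p.1 p.2 * (c p)^2 := by
    intro c
    rw [quad_form W hsymm hdiag]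
    set F : Fin n × Fin n → ℝ := fun p => W p.1 p.2 * (xc c p.1 - xc c p.2)^2 with hFdef
    have hsum1 : ∑ i, ∑ j, W i j * (xc c i - xc c j)^2 = ∑ p ∈ univ ×ˢ univ, F p := by
      rw [Finset.sum_product]
    set t : Finset (Fin n × Fin n) := s ∪ s.image Prod.swap with htdef
    have hF0 : ∀ p ∈ (univ ×ˢ univ : Finset (Fin n × Fin n)), p ∉ t → F p = 0 := by
      intro p _ hpt
      rw [htdef, Finset.mem_union, not_or] at hpt
      obtain ⟨hp1, hp2⟩ := hpt
      rcases lt_trichotomy (W p.1 p.2) 0 with hw | hw | hw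
      · exfalso
        have hne : p.1 ≠ p.2 := fun h => by rw [h, hdiag p.2] at hw; exact lt_irrefl 0 hw
        rcases lt_or_gt_of_ne hne with h | h
        · exact hp1 ((hmem p).2 ⟨h, hw⟩)
        · refine hp2 (Finset.mem_image.2 ⟨p.swap, ?_, Prod.swap_swap p⟩)
          refine (hmem p.swap).2 ⟨h, ?_⟩
          rw [Prod.fst_swap, Prod.snd_swap, hsymm.apply p.1 p.2]
          exact hw
      · rw [hFdef]; simp [hw]
      · rw [hFdef]; simp only
        rw [hx_pospair c p.1 p.2 hw.ne' (not_lt.2 hw.le)]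
        simp
    have hsum2 : ∑ p ∈ (univ ×ˢ univ : Finset (Fin n × Fin n)), F p = ∑ p ∈ t, F p :=
      (Finset.sum_subset (fun p _ => Finset.mem_product.2 ⟨Finset.mem_univ _, Finset.mem_univ _⟩)
        hF0).symm
    have hdisj : Disjoint s (s.image Prod.swap) := by
      rw [Finset.disjoint_left]
      intro p hp hp'
      obtain ⟨q, hq, hqe⟩ := Finset.mem_image.1 hp'
      have o1 := ((hmem p).1 hp).1
      have o2 := ((hmem q).1 hq).1
      rw [← hqe, Prod.fst_swap, Prod.snd_swap] at o1
      exact absurd o2 (not_lt.2 o1.le)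
    have hsum3 : ∑ p ∈ t, F p = ∑ p ∈ s, F p + ∑ p ∈ s.image Prod.swap, F p :=
      Finset.sum_union hdisj
    have hsum4 : ∑ p ∈ s.image Prod.swap, F p = ∑ p ∈ s, F p.swap :=
      Finset.sum_image (fun a _ b _ h => Prod.swap_injective h)
    have hFswap : ∀ p ∈ s, F p.swap = F p := by
      intro p hp
      rw [hFdef]; simp only [Prod.fst_swap, Prod.snd_swap]
      rw [hsymm.apply p.1 p.2]; ring
    have hFval : ∀ p ∈ s, F p = W p.1 p.2 * (c p)^2 := by
      intro p hp
      rw [hFdef]; simp only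
      rw [hx_negpair c p hp]
    rw [hsum1, hsum2, hsum3, hsum4, Finset.sum_congr rfl hFswap,
      Finset.sum_congr rfl hFval]
    ring
  -- the negative-definite subspace V
  set phi : Fin n × Fin n → Fin n → ℝ := fun p => Pi.single p.1 1 - Pi.single p.2 1 with hphidef
  have hphidot : ∀ p q : Fin n × Fin n, phi p ⬝ᵥ chi q = chi q p.1 - chi q p.2 := by
    intro p q
    rw [hphidef]; simp only
    rw [sub_dotProduct, single_dotProduct, single_dotProduct, one_mul, one_mul]
  have hdual : ∀ p q : {x // x ∈ s}, phi ↑p ⬝ᵥ chi ↑q = if p = q then 1 else 0 := by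
    intro p q
    rw [hphidot, chi_diff (↑q) q.2 (↑p) p.2]
    exact if_congr Subtype.ext_iff.symm rfl rfl
  have hchili : LinearIndependent ℝ (fun p : {x // x ∈ s} => chi ↑p) :=
    li_of_dot _ (fun p => phi ↑p) hdual
  set V : Submodule ℝ (Fin n → ℝ) :=
    Submodule.span ℝ (Set.range (fun p : {x // x ∈ s} => chi ↑p)) with hVdef
  have hVrank : Module.finrank ℝ V = s.card := by
    rw [hVdef, finrank_span_eq_card hchili, Fintype.card_coe]
  have hVQ : ∀ x ∈ V, x ⬝ᵥ (signedLaplacian W *ᵥ x) ≤ 0 ∧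
      (x ⬝ᵥ (signedLaplacian W *ᵥ x) = 0 → x = 0) := by
    intro x hx
    obtain ⟨cc, hcc⟩ := (Submodule.mem_span_range_iff_exists_fun ℝ).1 hx
    set c : Fin n × Fin n → ℝ := fun p => if h : p ∈ s then cc ⟨p, h⟩ else 0 with hcdef
    have hxeq : x = xc c := by
      rw [← hcc, hxcdef]; simp only
      rw [← Finset.sum_coe_sort s (fun p => c p • chi p)]
      refine Fintype.sum_congr _ _ fun i => ?_
      rw [hcdef]; simp only
      rw [dif_pos i.2]
    have hterm : ∀ p ∈ s, W p.1 p.2 * (c p)^2 ≤ 0 := by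
      intro p hp
      have hwp := ((hmem p).1 hp).2
      nlinarith [sq_nonneg (c p)]
    rw [hxeq, hQVc c]
    refine ⟨Finset.sum_nonpos hterm, fun h0 => ?_⟩
    have hall := (Finset.sum_eq_zero_iff_of_nonpos hterm).1 h0
    have hc0 : ∀ p ∈ s, c p = 0 := by
      intro p hp
      have hwp := ((hmem p).1 hp).2
      have h2 : (c p)^2 = 0 := by
        rcases mul_eq_zero.1 (hall p hp) with h | h
        · exact absurd h hwp.ne
        · exact h
      exact sq_eq_zero_iff.1 h2
    rw [hxcdef]; simp only
    exact Finset.sum_eq_zero fun p hp => by rw [hc0 p hp, zero_smul]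
  -- the eigenspace subspaces
  have hgcoef : ∀ (T : Finset (Fin n)) (x : Fin n → ℝ),
      x ∈ Submodule.span ℝ (Set.range (fun i : {i // i ∈ T} => gv hL ↑i)) →
      ∀ j, j ∉ T → gv hL j ⬝ᵥ x = 0 := by
    intro T x hx j hj
    obtain ⟨cc, hcc⟩ := (Submodule.mem_span_range_iff_exists_fun ℝ).1 hx
    rw [← hcc, dot_sum_smul]
    refine Finset.sum_eq_zero fun i _ => ?_
    rw [gv_dot hL j ↑i, if_neg (fun h => hj (by rw [h]; exact i.2)), mul_zero]
  set Eneg : Submodule ℝ (Fin n → ℝ) :=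
    Submodule.span ℝ (Set.range (fun i : {i // i ∈ neg} => gv hL ↑i)) with hEnegdef
  set Epos : Submodule ℝ (Fin n → ℝ) :=
    Submodule.span ℝ (Set.range (fun i : {i // i ∈ negᶜ} => gv hL ↑i)) with hEposdef
  have hEnegrank : Module.finrank ℝ Eneg = neg.card := by
    have hli : LinearIndependent ℝ (fun i : {i // i ∈ neg} => gv hL ↑i) :=
      (gv_li hL).comp _ Subtype.val_injective
    rw [hEnegdef, finrank_span_eq_card hli, Fintype.card_coe]
  have hEposrank : Module.finrank ℝ Epos = n - neg.card := by
    have hli : LinearIndependent ℝ (fun i : {i // i ∈ negᶜ} => gv hL ↑i) :=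
      (gv_li hL).comp _ Subtype.val_injective
    rw [hEposdef, finrank_span_eq_card hli, Fintype.card_coe, Finset.card_compl,
      Fintype.card_fin]
  have hQpos : ∀ x ∈ Epos, 0 ≤ x ⬝ᵥ (signedLaplacian W *ᵥ x) := by
    intro x hx
    rw [quad_eig hL]
    refine Finset.sum_nonneg fun i _ => ?_
    by_cases hi : i ∈ neg
    · rw [hgcoef negᶜ x hx i (by simpa using hi)]
      simp
    · have h0 : (0:ℝ) ≤ ev i := not_lt.1 fun hlt => hi ((hnegmem i).2 hlt)
      exact mul_nonneg h0 (sq_nonneg _)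
  have hQneg : ∀ x ∈ Eneg, x ⬝ᵥ (signedLaplacian W *ᵥ x) ≤ 0 ∧
      (x ⬝ᵥ (signedLaplacian W *ᵥ x) = 0 → x = 0) := by
    intro x hx
    have hterm : ∀ i : Fin n, ev i * (gv hL i ⬝ᵥ x)^2 ≤ 0 := by
      intro i
      by_cases hi : i ∈ neg
      · have hev := (hnegmem i).1 hi
        nlinarith [sq_nonneg (gv hL i ⬝ᵥ x)]
      · rw [hgcoef neg x hx i hi]; simp
    constructor
    · rw [quad_eig hL]; exact Finset.sum_nonpos fun i _ => hterm i
    · intro h0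
      rw [quad_eig hL] at h0
      have hall := (Finset.sum_eq_zero_iff_of_nonpos fun i _ => hterm i).1 h0
      refine gv_complete hL x fun i => ?_
      by_cases hi : i ∈ neg
      · have hev := (hnegmem i).1 hi
        have h2 : (gv hL i ⬝ᵥ x)^2 = 0 := by
          rcases mul_eq_zero.1 (hall i (Finset.mem_univ i)) with h | h
          · exact absurd h hev.ne
          · exact h
        exact sq_eq_zero_iff.1 h2
      · exact hgcoef neg x hx i hi
  -- the nonnegative subspace: kernel of the constraint map
  set Phi : (Fin n → ℝ) →ₗ[ℝ] ({x // x ∈ s} → ℝ) :=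
    LinearMap.pi (fun p =>
      LinearMap.proj (R := ℝ) (ι := Fin n) (φ := fun _ => ℝ) p.val.1 -
      LinearMap.proj (R := ℝ) (ι := Fin n) (φ := fun _ => ℝ) p.val.2) with hPhidef
  have hPhiapp : ∀ (x : Fin n → ℝ) (p : {x // x ∈ s}), Phi x p = x p.val.1 - x p.val.2 := by
    intro x p
    rw [hPhidef]
    simp [LinearMap.pi_apply, LinearMap.sub_apply, LinearMap.proj_apply]
  have hkerQ : ∀ x ∈ LinearMap.ker Phi, 0 ≤ x ⬝ᵥ (signedLaplacian W *ᵥ x) := by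
    intro x hx
    have hx0 := LinearMap.mem_ker.1 hx
    have hconst : ∀ i j : Fin n, W i j < 0 → x i = x j := by
      intro i j hw
      have hne : i ≠ j := fun h => by rw [h, hdiag j] at hw; exact lt_irrefl 0 hw
      rcases lt_or_gt_of_ne hne with h | h
      · have hp : (i, j) ∈ s := (hmem _).2 ⟨h, hw⟩
        have he := congrFun hx0 ⟨(i, j), hp⟩
        rw [hPhiapp] at he
        exact sub_eq_zero.1 he
      · have hw' : W j i < 0 := by rw [hsymm.apply i j]; exact hw
        have hp : (j, i) ∈ s := (hmem _).2 ⟨h, hw'⟩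
        have he := congrFun hx0 ⟨(j, i), hp⟩
        rw [hPhiapp] at he
        exact (sub_eq_zero.1 he).symm
    rw [quad_form W hsymm hdiag]
    have h0 : (0:ℝ) ≤ ∑ i, ∑ j, W i j * (x i - x j)^2 :=
      Finset.sum_nonneg fun i _ => Finset.sum_nonneg fun j _ => by
        by_cases h : W i j < 0
        · rw [hconst i j h]; simp
        · exact mul_nonneg (not_lt.1 h) (sq_nonneg _)
    linarith
  have hkerrank : n ≤ Module.finrank ℝ (LinearMap.ker Phi) + s.card := by
    have h1 := LinearMap.finrank_range_add_finrank_ker Phi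
    rw [Module.finrank_fintype_fun_eq_card, Fintype.card_fin] at h1
    have h2 : Module.finrank ℝ (LinearMap.range Phi) ≤ s.card := by
      have h3 := Submodule.finrank_le (LinearMap.range Phi)
      rwa [Module.finrank_fintype_fun_eq_card, Fintype.card_coe] at h3
    omega
  -- dimension counting
  have hdim : ∀ (A B : Submodule ℝ (Fin n → ℝ)), Disjoint A B →
      Module.finrank ℝ A + Module.finrank ℝ B ≤ n := by
    intro A B hAB
    have h1 := Submodule.finrank_sup_add_finrank_inf_eq A B
    rw [disjoint_iff.1 hAB] at h1
    have h2 : Module.finrank ℝ ↥(A ⊔ B) ≤ n := by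
      have h3 := Submodule.finrank_le (A ⊔ B)
      rwa [Module.finrank_fintype_fun_eq_card, Fintype.card_fin] at h3
    rw [finrank_bot] at h1
    omega
  have hdisj1 : Disjoint V Epos := by
    rw [Submodule.disjoint_def]
    intro x hxV hxE
    exact (hVQ x hxV).2 (le_antisymm (hVQ x hxV).1 (hQpos x hxE))
  have hdisj2 : Disjoint Eneg (LinearMap.ker Phi) := by
    rw [Submodule.disjoint_def]
    intro x hxE hxU
    exact (hQneg x hxE).2 (le_antisymm (hQneg x hxE).1 (hkerQ x hxU))
  have hineq1 := hdim V Epos hdisj1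
  rw [hVrank, hEposrank] at hineq1
  have hineq2 := hdim Eneg (LinearMap.ker Phi) hdisj2
  rw [hEnegrank] at hineq2
  have hnegcard : neg.card ≤ n := by
    simpa using Finset.card_le_univ neg
  rw [hcount1, hcount2]
  omega
end

section
/- Let W define a signed network whose underlying graph is a tree (connected and acyclic). Then i₋(L), the number of negative eigenvalues of the signed Laplacian L, equals the number of negative edges of the network. -/
/-!
The quadratic form of the signed Laplacian is `x ↦ ∑ W i j (x i - x j) ^ 2`, the sum running over
the edges `{i, j}`. It is therefore a weighted sum of squares in two systems of linear coordinates: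
the edge differences, with weights `W i j`, and the coordinates of `x` in an orthonormal eigenbasis,
with weights the eigenvalues. On a tree the coboundary map `x ↦ (x i - x j)_{ij}` is surjective,
since its kernel consists of the constants and there are `n - 1` edges. By Sylvester's law of
inertia, two such representations of one form through surjective coordinate maps have the same
number of negative weights.
-/


open Matrix Finset Filter

theorem card_neg_le_of_sum_mul_sq_eq {V ι κ : Type*} [AddCommGroup V] [Module ℝ V]
    [Fintype ι] [Fintype κ] {d : ι → ℝ} {w : κ → ℝ} {A : V →ₗ[ℝ] ι → ℝ} {B : V →ₗ[ℝ] κ → ℝ}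
    (hA : Function.Surjective A) (h : ∀ v, ∑ i, d i * A v i ^ 2 = ∑ k, w k * B v k ^ 2) :
    Nat.card {i // d i < 0} ≤ Nat.card {k // w k < 0} := by
  classical
  obtain ⟨s, hs⟩ := A.exists_rightInverse_of_surjective (LinearMap.range_eq_top.2 hA)
  let extend := Function.ExtendByZero.linearMap ℝ (Subtype.val : {i // d i < 0} → ι)
  let restrict := LinearMap.funLeft ℝ ℝ (Subtype.val : {k // w k < 0} → κ)
  suffices hinj : Function.Injective (restrict ∘ₗ B ∘ₗ s ∘ₗ extend) by
    simpa [Nat.card_eq_fintype_card, Module.finrank_fintype_fun_eq_card] using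
      LinearMap.finrank_le_finrank_of_injective hinj
  -- At `v = s (extend y)` with `restrict (B v) = 0`, the left side of `h v` is `≤ 0` term by term
  -- and the right side `≥ 0`, so every term `d i * y i ^ 2` with `d i < 0` vanishes.
  refine (injective_iff_map_eq_zero _).2 fun y hy => ?_
  set v := s (extend y)
  have hAv : A v = extend y := congr($hs (extend y))
  have hd : ∀ i, d i * A v i ^ 2 ≤ 0 := fun i => by
    by_cases hi : d i < 0
    · exact mul_nonpos_of_nonpos_of_nonneg hi.le (sq_nonneg _)
    · have : extend y i = 0 :=
        Function.extend_apply' (f := Subtype.val) _ _ _ (by rintro ⟨j, rfl⟩; exact hi j.2)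
      simp [hAv, this]
  have hw : ∀ k, 0 ≤ w k * B v k ^ 2 := fun k => by
    by_cases hk : w k < 0
    · simp [show B v k = 0 from congr_fun hy ⟨k, hk⟩]
    · exact mul_nonneg (not_lt.1 hk) (sq_nonneg _)
  have hzero : ∀ i, d i * A v i ^ 2 = 0 := fun i =>
    (Finset.sum_eq_zero_iff_of_nonpos fun i _ => hd i).1
      (le_antisymm (Finset.sum_nonpos fun i _ => hd i) (h v ▸ Finset.sum_nonneg fun k _ => hw k))
      i (Finset.mem_univ i)
  ext i
  have := hzero i
  rw [hAv] at this
  simpa [extend, Subtype.val_injective.extend_apply, i.2.ne] using this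

theorem Matrix.IsHermitian.dotProduct_mulVec_eq_sum_eigenvalues {ι : Type*} [Fintype ι]
    [DecidableEq ι] {A : Matrix ι ι ℝ} (hA : A.IsHermitian) (x : ι → ℝ) :
    x ⬝ᵥ (A *ᵥ x) =
      ∑ i, hA.eigenvalues i * (star (hA.eigenvectorUnitary : Matrix ι ι ℝ) *ᵥ x) i ^ 2 := by
  have hstar : star (hA.eigenvectorUnitary : Matrix ι ι ℝ) =
      (hA.eigenvectorUnitary : Matrix ι ι ℝ)ᵀ :=
    conjTranspose_eq_transpose_of_trivial _
  conv_lhs => rw [hA.spectral_theorem, Unitary.conjStarAlgAut_apply, ← mulVec_mulVec,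
    ← mulVec_mulVec, dotProduct_mulVec, ← mulVec_transpose, ← hstar]
  simp [dotProduct, mulVec_diagonal, sq, mul_left_comm]

theorem Fintype.sum_sum_eq_sum_lt_add_swap {ι M : Type*} [Fintype ι] [LinearOrder ι]
    [AddCommMonoid M] (f : ι → ι → M) (hf : ∀ i, f i i = 0) :
    ∑ i, ∑ j, f i j = ∑ p : ι × ι with p.1 < p.2, (f p.1 p.2 + f p.2 p.1) := by
  have hswap : ∑ p : ι × ι with p.1 < p.2, f p.2 p.1 = ∑ p : ι × ι with p.2 < p.1, f p.1 p.2 :=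
    Finset.sum_equiv (Equiv.prodComm ι ι) (by simp) (by simp)
  rw [Finset.sum_add_distrib, hswap, Finset.sum_filter, Finset.sum_filter,
    ← Finset.sum_add_distrib, ← Fintype.sum_prod_type']
  refine Finset.sum_congr rfl fun p _ => ?_
  rcases lt_trichotomy p.1 p.2 with h | h | h
  · simp [h, h.not_gt]
  · simp [h, hf]
  · simp [h, h.not_gt]

namespace SimpleGraph

variable {V : Type*} [LinearOrder V] (G : SimpleGraph V)

abbrev SortedEdge : Type _ := {p : V × V // p.1 < p.2 ∧ G.Adj p.1 p.2}

def coboundary : (V → ℝ) →ₗ[ℝ] (G.SortedEdge → ℝ) where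
  toFun x e := x e.1.1 - x e.1.2
  map_add' x y := by ext; simp only [Pi.add_apply]; ring
  map_smul' c x := by ext; simp only [Pi.smul_apply, smul_eq_mul, RingHom.id_apply]; ring

variable {G}

theorem mem_ker_coboundary_iff {x : V → ℝ} :
    x ∈ LinearMap.ker G.coboundary ↔ ∀ i j, G.Adj i j → x i = x j := by
  refine ⟨fun hx i j hij => ?_, fun h => funext fun e => sub_eq_zero.2 (h _ _ e.2.2)⟩
  rcases hij.ne.lt_or_gt with hlt | hlt
  · exact sub_eq_zero.1 (congr_fun hx ⟨(i, j), hlt, hij⟩)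
  · exact (sub_eq_zero.1 (congr_fun hx ⟨(j, i), hlt, hij.symm⟩)).symm

variable [Fintype V] [DecidableRel G.Adj]

theorem ker_coboundary :
    LinearMap.ker G.coboundary = LinearMap.ker (G.lapMatrix ℝ).toLin' := by
  ext x
  rw [mem_ker_coboundary_iff, LinearMap.mem_ker, toLin'_apply,
    lapMatrix_mulVec_eq_zero_iff_forall_adj]

theorem card_sortedEdge : Fintype.card G.SortedEdge = #G.edgeFinset := by
  rw [edgeFinset_card]
  refine Fintype.card_of_bijective (f := fun e => ⟨s(e.1.1, e.1.2), e.2.2⟩) ⟨?_, ?_⟩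
  · rintro ⟨⟨a, b⟩, hab, _⟩ ⟨⟨c, d⟩, hcd, _⟩ h
    obtain ⟨rfl, rfl⟩ | ⟨rfl, rfl⟩ := Sym2.eq_iff.1 (congrArg Subtype.val h)
    · rfl
    · exact absurd (hab.trans hcd) (lt_irrefl _)
  · rintro ⟨e, he⟩
    induction e using Sym2.ind with | _ a b => ?_
    rcases (G.ne_of_adj he).lt_or_gt with hab | hba
    · exact ⟨⟨(a, b), hab, he⟩, rfl⟩
    · exact ⟨⟨(b, a), hba, he.symm⟩, Subtype.ext Sym2.eq_swap⟩

theorem IsTree.coboundary_surjective (hG : G.IsTree) : Function.Surjective G.coboundary := by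
  have hker : Module.finrank ℝ (LinearMap.ker G.coboundary) = 1 := by
    obtain ⟨v⟩ := hG.connected.nonempty
    rw [ker_coboundary, ← card_connectedComponent_eq_finrank_ker_toLin'_lapMatrix]
    exact Fintype.card_eq_one_iff.2 ⟨G.connectedComponentMk v,
      fun c => c.ind fun w => ConnectedComponent.sound (hG.connected w v)⟩
  have hrank := G.coboundary.finrank_range_add_finrank_ker
  rw [hker, Module.finrank_fintype_fun_eq_card, ← hG.card_edgeFinset, ← card_sortedEdge] at hrank
  rw [← LinearMap.range_eq_top]
  apply Submodule.eq_top_of_finrank_eq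
  rw [Module.finrank_fintype_fun_eq_card]
  omega

end SimpleGraph

section SignedNetwork

variable {n : ℕ} {W : Matrix (Fin n) (Fin n) ℝ}

theorem underlyingGraph_adj (hsymm : W.IsSymm) {i j : Fin n} :
    (underlyingGraph W).Adj i j ↔ i ≠ j ∧ W i j ≠ 0 := by
  rw [underlyingGraph, SimpleGraph.fromRel_adj, hsymm.apply j i, or_self]

theorem signedLaplacian_mulVec_apply (hdiag : ∀ i, W i i = 0) (x : Fin n → ℝ) (i : Fin n) :
    (signedLaplacian W *ᵥ x) i = ∑ j, W i j * (x i - x j) := by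
  have h : ∀ j, signedLaplacian W i j * x j =
      (if i = j then (∑ k, W i k) * x i else 0) - W i j * x j := by
    intro j
    by_cases hij : i = j
    · subst hij; simp [signedLaplacian, hdiag]
    · simp [signedLaplacian, hij]
  simp only [mulVec, dotProduct, h, Finset.sum_sub_distrib, Finset.sum_ite_eq, Finset.mem_univ,
    if_true, mul_sub, Finset.sum_mul]

theorem dotProduct_signedLaplacian_mulVec (hsymm : W.IsSymm) (hdiag : ∀ i, W i i = 0)
    [DecidableRel (underlyingGraph W).Adj] (x : Fin n → ℝ) :
    x ⬝ᵥ (signedLaplacian W *ᵥ x) = ∑ e : (underlyingGraph W).SortedEdge,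
      W e.1.1 e.1.2 * (underlyingGraph W).coboundary x e ^ 2 := by
  calc x ⬝ᵥ (signedLaplacian W *ᵥ x)
      = ∑ i, ∑ j, x i * (W i j * (x i - x j)) := by
        simp only [dotProduct, signedLaplacian_mulVec_apply hdiag, Finset.mul_sum]
    _ = ∑ p : Fin n × Fin n with p.1 < p.2, W p.1 p.2 * (x p.1 - x p.2) ^ 2 := by
        rw [Fintype.sum_sum_eq_sum_lt_add_swap _ (by simp)]
        refine Finset.sum_congr rfl fun p _ => ?_
        rw [hsymm.apply p.1 p.2]
        ring
    _ = ∑ p : Fin n × Fin n with p.1 < p.2 ∧ (underlyingGraph W).Adj p.1 p.2,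
          W p.1 p.2 * (x p.1 - x p.2) ^ 2 := by
        rw [← Finset.filter_filter]
        refine (Finset.sum_filter_of_ne fun p hp hne => ?_).symm
        rw [Finset.mem_filter] at hp
        exact (underlyingGraph_adj hsymm).2 ⟨hp.2.ne, left_ne_zero_of_mul hne⟩
    _ = ∑ e : (underlyingGraph W).SortedEdge, W e.1.1 e.1.2 * (x e.1.1 - x e.1.2) ^ 2 :=
        Finset.sum_subtype _ (by simp) _

theorem negEdgeCount_eq_natCard (hsymm : W.IsSymm) :
    negEdgeCount W = Nat.card {e : (underlyingGraph W).SortedEdge // W e.1.1 e.1.2 < 0} := by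
  rw [negEdgeCount, ← Fintype.card_subtype, ← Nat.card_eq_fintype_card]
  refine Nat.card_congr ((Equiv.subtypeEquivRight fun p => ?_).trans
    (Equiv.subtypeSubtypeEquivSubtypeInter
      (fun p : Fin n × Fin n => p.1 < p.2 ∧ (underlyingGraph W).Adj p.1 p.2)
      (fun p => W p.1 p.2 < 0)).symm)
  rw [underlyingGraph_adj hsymm]
  exact ⟨fun h => ⟨⟨h.1, h.1.ne, h.2.ne⟩, h.2⟩, fun h => ⟨h.1.1, h.2⟩⟩

end SignedNetwork

theorem negEig_eq_negEdgeCount_of_tree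
    {n : ℕ} (W : Matrix (Fin n) (Fin n) ℝ)
    (hsymm : W.IsSymm) (hdiag : ∀ i, W i i = 0)
    (htree : (underlyingGraph W).IsTree)
    (L : Matrix (Fin n) (Fin n) ℝ) (hLdef : L = signedLaplacian W)
    (hL : L.IsHermitian) :
    negEigCount L hL = negEdgeCount W := by
  classical
  subst hLdef
  set G := underlyingGraph W
  set P := (star (hL.eigenvectorUnitary : Matrix (Fin n) (Fin n) ℝ)).mulVecLin
  have hP : Function.Surjective P := fun y => ⟨hL.eigenvectorUnitary *ᵥ y, by
    rw [mulVecLin_apply, mulVec_mulVec, Unitary.coe_star_mul_self, one_mulVec]⟩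
  have hquad : ∀ x, ∑ i, hL.eigenvalues i * P x i ^ 2 =
      ∑ e : G.SortedEdge, W e.1.1 e.1.2 * G.coboundary x e ^ 2 := fun x => by
    rw [← dotProduct_signedLaplacian_mulVec hsymm hdiag, hL.dotProduct_mulVec_eq_sum_eigenvalues]
    rfl
  rw [negEigCount, ← Fintype.card_subtype, ← Nat.card_eq_fintype_card,
    negEdgeCount_eq_natCard hsymm]
  exact le_antisymm (card_neg_le_of_sum_mul_sq_eq hP hquad)
    (card_neg_le_of_sum_mul_sq_eq htree.coboundary_surjective fun x => (hquad x).symm)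
end

section
/- Let W define a connected, structurally balanced signed network having at least one negative edge (some pair {i,j} with W_{ij} < 0). Then the signed Laplacian L is not positive semidefinite, i.e., i₋(L) ≥ 1; in particular the signed Laplacian dynamics ẋ = −Lx on a structurally balanced signed network with a negative edge is always unstable. -/
open Matrix Finset Filter

lemma exp_mulVec_eq {n : ℕ} (A : Matrix (Fin n) (Fin n) ℝ) (v : Fin n → ℝ) (c : ℝ)
    (h : A *ᵥ v = c • v) :
    (NormedSpace.exp A) *ᵥ v = Real.exp c • v := by
  letI : NormedRing (Matrix (Fin n) (Fin n) ℝ) := Matrix.linftyOpNormedRing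
  letI : NormedAlgebra ℝ (Matrix (Fin n) (Fin n) ℝ) := Matrix.linftyOpNormedAlgebra
  have hpow : ∀ k : ℕ, (A ^ k) *ᵥ v = (c ^ k) • v := by
    intro k
    induction k with
    | zero => simp [Matrix.one_mulVec]
    | succ k ih =>
      rw [pow_succ, ← Matrix.mulVec_mulVec, h, Matrix.mulVec_smul, ih, smul_smul, pow_succ]
      ring_nf
  let Φ : Matrix (Fin n) (Fin n) ℝ →ₗ[ℝ] (Fin n → ℝ) :=
    { toFun := fun B => B *ᵥ v
      map_add' := fun B C => Matrix.add_mulVec B C v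
      map_smul' := fun a B => Matrix.smul_mulVec a B v }
  let Φc : Matrix (Fin n) (Fin n) ℝ →L[ℝ] (Fin n → ℝ) := LinearMap.toContinuousLinearMap Φ
  have hs : Summable (fun k : ℕ => ((k.factorial : ℝ))⁻¹ • A ^ k) :=
    NormedSpace.expSeries_summable' A
  have hΦ : (NormedSpace.exp A) *ᵥ v = Φc (NormedSpace.exp A) := rfl
  rw [hΦ]
  simp only [NormedSpace.exp_eq_tsum ℝ]
  rw [Φc.map_tsum hs]
  have h1 : ∀ k : ℕ, Φc (((k.factorial : ℝ))⁻¹ • A ^ k)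
      = (((k.factorial : ℝ))⁻¹ * c ^ k) • v := by
    intro k
    have h2 : Φc (((k.factorial : ℝ))⁻¹ • A ^ k)
        = ((k.factorial : ℝ))⁻¹ • ((A ^ k) *ᵥ v) := by
      simp [Φc, Φ, Matrix.smul_mulVec]
    rw [h2, hpow k, smul_smul]
  simp_rw [h1]
  have hsum : Summable (fun k : ℕ => ((k.factorial : ℝ))⁻¹ * c ^ k) := by
    simpa [smul_eq_mul] using NormedSpace.expSeries_summable' (𝕂 := ℝ) c
  rw [hsum.tsum_smul_const]
  congr 1
  rw [Real.exp_eq_exp_ℝ]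
  simp only [NormedSpace.exp_eq_tsum ℝ, smul_eq_mul]

lemma quad_form_neg {n : ℕ} (W : Matrix (Fin n) (Fin n) ℝ)
    (hdiag : ∀ i, W i i = 0)
    (g : Fin n → ℝ) (hg : ∀ i, g i = 1 ∨ g i = -1)
    (hb : ∀ i j, 0 ≤ g i * W i j * g j)
    {i0 j0 : Fin n} (hneg : W i0 j0 < 0) :
    dotProduct g ((signedLaplacian W) *ᵥ g) < 0 := by
  have hg2 : ∀ i, g i * g i = 1 := by
    intro i; rcases hg i with h | h <;> rw [h] <;> norm_num
  have hLij : ∀ i j, signedLaplacian W i j = (if i = j then ∑ k, W i k else 0) - W i j := by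
    intro i j
    simp only [signedLaplacian, Matrix.of_apply]
    split_ifs with h
    · subst h; rw [hdiag i]; ring
    · ring
  have inner : ∀ i, ∑ j, g i * (signedLaplacian W i j * g j)
      = ∑ j, (W i j - g i * W i j * g j) := by
    intro i
    have step : ∀ j, g i * (signedLaplacian W i j * g j)
        = (if i = j then (∑ k, W i k) * (g j * g j) else 0) - g i * W i j * g j := by
      intro j
      rw [hLij]
      split_ifs with h
      · subst h; ring
      · ring
    simp_rw [step]
    rw [Finset.sum_sub_distrib, Finset.sum_sub_distrib, Finset.sum_ite_eq]
    simp only [Finset.mem_univ, if_true]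
    rw [hg2 i, mul_one]
  have expand : dotProduct g ((signedLaplacian W) *ᵥ g)
      = ∑ i, ∑ j, g i * (signedLaplacian W i j * g j) := by
    simp [dotProduct, Matrix.mulVec, Finset.mul_sum]
  have key : dotProduct g ((signedLaplacian W) *ᵥ g)
      = ∑ i, ∑ j, (W i j - g i * W i j * g j) := by
    rw [expand]; exact Finset.sum_congr rfl fun i _ => inner i
  rw [key]
  have hterm : ∀ i j, W i j - g i * W i j * g j ≤ 0 := by
    intro i j
    have h := hb i j
    rcases hg i with hi | hi <;> rcases hg j with hj | hj <;>
      rw [hi, hj] at h ⊢ <;> nlinarith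
  calc ∑ i, ∑ j, (W i j - g i * W i j * g j)
      = ∑ p : Fin n × Fin n, (W p.1 p.2 - g p.1 * W p.1 p.2 * g p.2) := by
        rw [Fintype.sum_prod_type]
    _ < ∑ _p : Fin n × Fin n, (0 : ℝ) := by
        refine Finset.sum_lt_sum (fun p _ => hterm p.1 p.2) ⟨(i0, j0), Finset.mem_univ _, ?_⟩
        have := hb i0 j0
        simp only
        linarith
    _ = 0 := by simp

theorem structurally_balanced_with_negative_edge_unstable
    {n : ℕ} (W : Matrix (Fin n) (Fin n) ℝ)
    (hsymm : W.IsSymm) (hdiag : ∀ i, W i i = 0)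
    (hconn : (underlyingGraph W).Connected)
    (hbal : ∃ g : Fin n → ℝ, (∀ i, g i = 1 ∨ g i = -1) ∧
      ∀ i j, 0 ≤ g i * W i j * g j)
    (hneg : ∃ i j, W i j < 0)
    (L : Matrix (Fin n) (Fin n) ℝ) (hLdef : L = signedLaplacian W)
    (hL : L.IsHermitian) :
    ¬ L.PosSemidef ∧ 1 ≤ negEigCount L hL ∧
    (∃ x0 : Fin n → ℝ, ∀ C : ℝ, ∃ t : ℝ, 0 ≤ t ∧
      C < ‖(NormedSpace.exp ((-t) • L)).mulVec x0‖) := by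
  obtain ⟨g, hg, hb⟩ := hbal
  obtain ⟨i0, j0, hneg⟩ := hneg
  have hquad : dotProduct g (L *ᵥ g) < 0 := by
    rw [hLdef]; exact quad_form_neg W hdiag g hg hb hneg
  have hnps : ¬ L.PosSemidef := by
    intro hps
    have := hps.dotProduct_mulVec_nonneg g
    rw [star_trivial] at this
    linarith
  have hexists : ∃ i, hL.eigenvalues i < 0 := by
    by_contra hno
    push_neg at hno
    exact hnps (hL.posSemidef_iff_eigenvalues_nonneg.mpr hno)
  refine ⟨hnps, ?_, ?_⟩
  · obtain ⟨i, hi⟩ := hexists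
    classical
    have : i ∈ Finset.univ.filter fun i : Fin n => hL.eigenvalues i < 0 :=
      Finset.mem_filter.mpr ⟨Finset.mem_univ _, hi⟩
    unfold negEigCount
    exact Finset.card_pos.mpr ⟨i, Finset.mem_filter.mpr ⟨Finset.mem_univ _, hi⟩⟩
  · obtain ⟨i, hi⟩ := hexists
    set v : Fin n → ℝ := ⇑(hL.eigenvectorBasis i) with hv
    have hvne : v ≠ 0 := by
      have h1 : ‖hL.eigenvectorBasis i‖ = 1 := hL.eigenvectorBasis.orthonormal.1 i
      intro h0
      have : hL.eigenvectorBasis i = 0 := by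
        ext k
        have := congrFun h0 k
        simpa [hv] using this
      rw [this, norm_zero] at h1
      norm_num at h1
    have hK : 0 < ‖v‖ := norm_pos_iff.mpr hvne
    set K := ‖v‖
    have heig : L *ᵥ v = hL.eigenvalues i • v := hL.mulVec_eigenvectorBasis i
    refine ⟨v, fun C => ?_⟩
    have hmu : 0 < -(hL.eigenvalues i) := by linarith
    have hD1 : (1:ℝ) ≤ max (C / ‖v‖) 1 := le_max_right _ _
    have hDpos : (0:ℝ) < max (C / ‖v‖) 1 + 1 := by linarith
    have hDgt : C / ‖v‖ < max (C / ‖v‖) 1 + 1 := lt_of_le_of_lt (le_max_left _ _) (by linarith)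
    have hlog : 0 ≤ Real.log (max (C / ‖v‖) 1 + 1) := Real.log_nonneg (by linarith)
    refine ⟨Real.log (max (C / ‖v‖) 1 + 1) / (-(hL.eigenvalues i)),
      div_nonneg hlog hmu.le, ?_⟩
    have heig' : ((-(Real.log (max (C / ‖v‖) 1 + 1) / (-(hL.eigenvalues i)))) • L) *ᵥ v
        = ((-(Real.log (max (C / ‖v‖) 1 + 1) / (-(hL.eigenvalues i)))) * hL.eigenvalues i) • v := by
      rw [Matrix.smul_mulVec, heig, smul_smul]
    rw [exp_mulVec_eq _ _ _ heig']
    have hμne : hL.eigenvalues i ≠ 0 := by linarith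
    have hexpo : (-(Real.log (max (C / ‖v‖) 1 + 1) / (-(hL.eigenvalues i)))) * hL.eigenvalues i
        = Real.log (max (C / ‖v‖) 1 + 1) := by
      field_simp
    rw [hexpo, norm_smul, Real.norm_eq_abs, Real.abs_exp, Real.exp_log hDpos]
    calc C = (C / ‖v‖) * ‖v‖ := by field_simp
      _ < (max (C / ‖v‖) 1 + 1) * ‖v‖ := mul_lt_mul_of_pos_right hDgt hK
end

section
/- Let n ≥ 3 and let W define a circle (cycle) signed network on n nodes in which all n edge weights are negative (W_{i,i+1} < 0 for every i ∈ ℤ/nℤ). Then the signed Laplacian L satisfies i₋(L) = n − 1, i.e., L has exactly n − 1 negative eigenvalues. -/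
open Matrix Finset Filter

theorem cycle_all_negative_edges_negEig
    {n : ℕ} [NeZero n] (hn : 3 ≤ n) (W : Matrix (Fin n) (Fin n) ℝ)
    (hsymm : W.IsSymm) (hdiag : ∀ i, W i i = 0)
    (hcycle : ∀ i j : Fin n, W i j ≠ 0 ↔ (j = i + 1 ∨ i = j + 1))
    (hneg : ∀ i : Fin n, W i (i + 1) < 0)
    (L : Matrix (Fin n) (Fin n) ℝ) (hLdef : L = signedLaplacian W)
    (hL : L.IsHermitian) :
    negEigCount L hL = n - 1 := by
  classical
  -- all entries of W are nonpositive
  have hWn : ∀ i j : Fin n, W i j ≤ 0 := by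
    intro i j
    by_cases h : W i j = 0
    · exact le_of_eq h
    · rcases (hcycle i j).1 h with h1 | h1
      · subst h1; exact (hneg i).le
      · subst h1
        have := hneg j
        rw [hsymm.apply]; exact this.le
  -- entrywise description of L
  have hLij : ∀ i j, L i j = (if i = j then ∑ k, W i k else 0) - W i j := by
    intro i j
    rw [hLdef]
    simp only [signedLaplacian, of_apply]
    by_cases h : i = j
    · subst h; simp [hdiag]
    · simp [h]
  -- quadratic form
  have hquad : ∀ x : Fin n → ℝ,
      x ⬝ᵥ (L *ᵥ x) = ∑ i, ∑ j, W i j * (x i ^ 2 - x i * x j) := by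
    intro x
    have key : ∀ i, (∑ j, L i j * x j) = (∑ k, W i k) * x i - ∑ j, W i j * x j := by
      intro i
      have h1 : ∀ j, L i j * x j
          = (if j = i then (∑ k, W i k) * x j else 0) - W i j * x j := by
        intro j
        rw [hLij i j, sub_mul]
        by_cases h : i = j
        · subst h; simp
        · simp [h, Ne.symm h]
      rw [Finset.sum_congr rfl fun j _ => h1 j, Finset.sum_sub_distrib,
        Finset.sum_ite_eq' Finset.univ i (fun j => (∑ k, W i k) * x j)]
      simp
    simp only [dotProduct, mulVec]
    refine Finset.sum_congr rfl fun i _ => ?_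
    rw [key i, mul_sub, Finset.sum_mul, Finset.mul_sum, Finset.mul_sum,
      ← Finset.sum_sub_distrib]
    refine Finset.sum_congr rfl fun j _ => ?_
    ring
  -- symmetrized quadratic form
  have hsum2 : ∀ x : Fin n → ℝ,
      2 * (x ⬝ᵥ (L *ᵥ x)) = ∑ i, ∑ j, W i j * (x i - x j) ^ 2 := by
    intro x
    have h2 : x ⬝ᵥ (L *ᵥ x) = ∑ i, ∑ j, W i j * (x j ^ 2 - x j * x i) := by
      rw [hquad x, Finset.sum_comm]
      exact Finset.sum_congr rfl fun i _ => Finset.sum_congr rfl fun j _ => by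
        rw [hsymm.apply]
    rw [two_mul]
    nth_rewrite 1 [hquad x]
    rw [h2, ← Finset.sum_add_distrib]
    refine Finset.sum_congr rfl fun i _ => ?_
    rw [← Finset.sum_add_distrib]
    refine Finset.sum_congr rfl fun j _ => ?_
    ring
  have hterm : ∀ (x : Fin n → ℝ) i j, W i j * (x i - x j) ^ 2 ≤ 0 := fun x i j =>
    mul_nonpos_iff.2 (Or.inr ⟨hWn i j, sq_nonneg _⟩)
  have hqnonpos : ∀ x : Fin n → ℝ, x ⬝ᵥ (L *ᵥ x) ≤ 0 := by
    intro x
    have h1 : ∑ i, ∑ j, W i j * (x i - x j) ^ 2 ≤ 0 :=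
      Finset.sum_nonpos fun i _ => Finset.sum_nonpos fun j _ => hterm x i j
    nlinarith [hsum2 x]
  -- all eigenvalues are nonpositive
  have heig : ∀ i, hL.eigenvalues i ≤ 0 := by
    intro i
    have hv := hL.mulVec_eigenvectorBasis i
    set v : Fin n → ℝ := ⇑(hL.eigenvectorBasis i) with hvdef
    have hvne : v ≠ 0 := by
      intro h
      exact hL.eigenvectorBasis.orthonormal.ne_zero i (by
        ext k; exact congrFun h k)
    have hvv : 0 < v ⬝ᵥ v := by
      obtain ⟨k, hk⟩ : ∃ k, v k ≠ 0 := by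
        by_contra h; push_neg at h; exact hvne (funext h)
      exact Finset.sum_pos' (fun k _ => mul_self_nonneg _)
        ⟨k, Finset.mem_univ k, mul_self_pos.2 hk⟩
    have hq : v ⬝ᵥ (L *ᵥ v) = hL.eigenvalues i * (v ⬝ᵥ v) := by
      rw [hv]; exact dotProduct_smul _ _ _
    have := hqnonpos v
    nlinarith
  -- the all-ones vector is in the kernel
  have hone : L *ᵥ (fun _ => (1 : ℝ)) = 0 := by
    funext i
    show (∑ j, L i j * 1) = 0
    simp only [mul_one]
    rw [Finset.sum_congr rfl fun j _ => hLij i j, Finset.sum_sub_distrib]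
    simp [hdiag]
  -- kernel vectors are constant
  have hker : ∀ x : Fin n → ℝ, L *ᵥ x = 0 → ∀ i, x i = x 0 := by
    intro x hx
    have h0 : x ⬝ᵥ (L *ᵥ x) = 0 := by rw [hx]; simp
    have hzero : ∑ i, ∑ j, W i j * (x i - x j) ^ 2 = 0 := by
      rw [← hsum2 x, h0, mul_zero]
    have hij : ∀ i j : Fin n, W i j * (x i - x j) ^ 2 = 0 := by
      intro i j
      have houter := (Finset.sum_eq_zero_iff_of_nonpos
        (fun i _ => Finset.sum_nonpos fun j _ => hterm x i j)).1 hzero i (Finset.mem_univ i)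
      exact (Finset.sum_eq_zero_iff_of_nonpos
        (fun j _ => hterm x i j)).1 houter j (Finset.mem_univ j)
    have hstep : ∀ i : Fin n, x (i + 1) = x i := by
      intro i
      have h := hij i (i + 1)
      rcases mul_eq_zero.1 h with h' | h'
      · exact absurd h' (hneg i).ne
      · have := sq_eq_zero_iff.1 h'
        linarith [sub_eq_zero.1 this]
    open Fin.NatCast in
    have hnat : ∀ m : ℕ, x ((m : Fin n)) = x 0 := by
      intro m
      induction m with
      | zero => simp
      | succ k ih =>
        have : ((k + 1 : ℕ) : Fin n) = ((k : ℕ) : Fin n) + 1 := by push_cast; ring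
        rw [this, hstep, ih]
    intro i
    have := hnat i.val
    open Fin.NatCast in
    rwa [Fin.cast_val_eq_self] at this
  -- kernel is the span of the all-ones vector
  have hkerSpan : LinearMap.ker L.mulVecLin
      = Submodule.span ℝ {(fun _ => (1 : ℝ) : Fin n → ℝ)} := by
    apply le_antisymm
    · intro x hx
      have hx' : L *ᵥ x = 0 := by
        have := LinearMap.mem_ker.1 hx
        rwa [Matrix.mulVecLin_apply] at this
      have hxc := hker x hx'
      have hxe : x = x 0 • (fun _ => (1 : ℝ)) := by
        funext i; simp [hxc i]
      rw [hxe]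
      exact Submodule.smul_mem _ _ (Submodule.mem_span_singleton_self _)
    · rw [Submodule.span_le, Set.singleton_subset_iff]
      exact LinearMap.mem_ker.2 (by rw [Matrix.mulVecLin_apply]; exact hone)
  have honene : (fun _ => (1 : ℝ) : Fin n → ℝ) ≠ 0 := by
    intro h
    have := congrFun h ⟨0, Nat.pos_of_ne_zero (NeZero.ne n)⟩
    simp at this
  have hfr : Module.finrank ℝ (LinearMap.ker L.mulVecLin) = 1 := by
    rw [hkerSpan]
    exact finrank_span_singleton honene
  have hrank : L.rank = n - 1 := by
    have h1 := LinearMap.finrank_range_add_finrank_ker L.mulVecLin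
    rw [hfr] at h1
    have h2 : Module.finrank ℝ (Fin n → ℝ) = n := by simp
    rw [h2] at h1
    have : L.rank = Module.finrank ℝ (LinearMap.range L.mulVecLin) := rfl
    omega
  -- eigenvalue counting
  have hcard : Fintype.card {i // hL.eigenvalues i ≠ 0} = n - 1 := by
    rw [← hL.rank_eq_card_non_zero_eigs, hrank]
  have hfilter : (Finset.univ.filter fun i : Fin n => hL.eigenvalues i < 0)
      = (Finset.univ.filter fun i : Fin n => hL.eigenvalues i ≠ 0) := by
    refine Finset.filter_congr fun i _ => ?_
    constructor
    · exact fun h => ne_of_lt h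
    · exact fun h => lt_of_le_of_ne (heig i) h
  rw [negEigCount]
  rw [show (Finset.univ.filter fun i : Fin n => hL.eigenvalues i < 0)
      = (Finset.univ.filter fun i : Fin n => hL.eigenvalues i ≠ 0) from hfilter]
  rw [← hcard, Fintype.card_subtype]
end

section
/- Let n ≥ 3 and let W define a circle (cycle) signed network on n nodes having exactly m negative edges, where m < n. Then the signed Laplacian L satisfies m − 1 ≤ i₋(L) ≤ m; that is, the number of negative eigenvalues of L is either m − 1 or m. -/
open Matrix Finset Filter

open Classical in
lemma quad_eq_sum_aux {n : ℕ} (L : Matrix (Fin n) (Fin n) ℝ) (hL : L.IsHermitian)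
    (x : Fin n → ℝ) :
    x ⬝ᵥ (L *ᵥ x) = ∑ i, hL.eigenvalues i *
      ((star (hL.eigenvectorUnitary : Matrix (Fin n) (Fin n) ℝ) *ᵥ x) i)^2 := by
  have hvm : x ᵥ* (hL.eigenvectorUnitary : Matrix (Fin n) (Fin n) ℝ)
      = star (hL.eigenvectorUnitary : Matrix (Fin n) (Fin n) ℝ) *ᵥ x := by
    ext j
    simp [vecMul, mulVec, dotProduct, conjTranspose_apply, mul_comm]
  conv_lhs => rw [hL.spectral_theorem, Unitary.conjStarAlgAut_apply]
  rw [← mulVec_mulVec, ← mulVec_mulVec, dotProduct_mulVec, hvm]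
  simp only [dotProduct, mulVec_diagonal, Function.comp_apply, RCLike.ofReal_real_eq_id, id_eq]
  exact Finset.sum_congr rfl fun i _ => by ring

open Classical in
lemma negdef_le_negEigCount_aux {n : ℕ} (L : Matrix (Fin n) (Fin n) ℝ) (hL : L.IsHermitian)
    (V : Submodule ℝ (Fin n → ℝ)) (hV : ∀ x ∈ V, x ≠ 0 → x ⬝ᵥ (L *ᵥ x) < 0) :
    Module.finrank ℝ V ≤ negEigCount L hL := by
  classical
  set P : Finset (Fin n) := Finset.univ.filter (fun i => hL.eigenvalues i < 0) with hP
  let f : V →ₗ[ℝ] (↥P → ℝ) :=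
    (LinearMap.funLeft ℝ ℝ Subtype.val) ∘ₗ
      (star (hL.eigenvectorUnitary : Matrix (Fin n) (Fin n) ℝ)).mulVecLin ∘ₗ V.subtype
  have hf : Function.Injective f := by
    rw [← LinearMap.ker_eq_bot, LinearMap.ker_eq_bot']
    intro ⟨x, hxV⟩ hfx
    ext1
    by_contra hx0
    have hq := hV x hxV hx0
    rw [quad_eq_sum_aux L hL x] at hq
    have hnn : ∀ i ∈ Finset.univ, (0:ℝ) ≤ hL.eigenvalues i *
        ((star (hL.eigenvectorUnitary : Matrix (Fin n) (Fin n) ℝ) *ᵥ x) i)^2 := by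
      intro i _
      by_cases hiP : i ∈ P
      · have hzz : (star (hL.eigenvectorUnitary : Matrix (Fin n) (Fin n) ℝ) *ᵥ x) i = 0 := by
          have := congrFun hfx ⟨i, hiP⟩
          simpa [f] using this
        simp [hzz]
      · have hge : ¬ hL.eigenvalues i < 0 := by simpa [hP] using hiP
        exact mul_nonneg (not_lt.1 hge) (sq_nonneg _)
    have := Finset.sum_nonneg hnn
    linarith
  have h1 : Module.finrank ℝ V ≤ Module.finrank ℝ (↥P → ℝ) :=
    LinearMap.finrank_le_finrank_of_injective hf
  rw [Module.finrank_fintype_fun_eq_card, Fintype.card_coe] at h1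
  have h2 : negEigCount L hL = P.card := by
    unfold negEigCount
    rw [hP]
  omega

open Classical in
lemma exists_negdef_subspace_aux {n : ℕ} (L : Matrix (Fin n) (Fin n) ℝ) (hL : L.IsHermitian) :
    ∃ V : Submodule ℝ (Fin n → ℝ), Module.finrank ℝ V = negEigCount L hL ∧
      ∀ x ∈ V, x ≠ 0 → x ⬝ᵥ (L *ᵥ x) < 0 := by
  classical
  set U : Matrix (Fin n) (Fin n) ℝ := (hL.eigenvectorUnitary : Matrix (Fin n) (Fin n) ℝ) with hU
  have hUU : U * star U = 1 := mem_unitaryGroup_iff.mp hL.eigenvectorUnitary.2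
  have hUU' : star U * U = 1 := mem_unitaryGroup_iff'.mp hL.eigenvectorUnitary.2
  set P : Finset (Fin n) := Finset.univ.filter (fun i => hL.eigenvalues i < 0) with hP
  let e : (↥P → ℝ) →ₗ[ℝ] (Fin n → ℝ) :=
    { toFun := fun z j => if h : j ∈ P then z ⟨j, h⟩ else 0
      map_add' := by
        intro z w; funext j; by_cases h : j ∈ P <;> simp [h]
      map_smul' := by
        intro c z; funext j; by_cases h : j ∈ P <;> simp [h] }
  let F : (↥P → ℝ) →ₗ[ℝ] (Fin n → ℝ) := U.mulVecLin ∘ₗ e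
  have hstarF : ∀ z, star U *ᵥ (F z) = e z := by
    intro z
    show star U *ᵥ (U *ᵥ e z) = e z
    rw [mulVec_mulVec, hUU', one_mulVec]
  have hFinj : Function.Injective F := by
    rw [← LinearMap.ker_eq_bot, LinearMap.ker_eq_bot']
    intro z hz
    have h1 : e z = 0 := by rw [← hstarF z, hz, mulVec_zero]
    funext i
    have := congrFun h1 i.val
    simpa [e, i.prop] using this
  refine ⟨LinearMap.range F, ?_, ?_⟩
  · rw [LinearMap.finrank_range_of_inj hFinj, Module.finrank_fintype_fun_eq_card,
      Fintype.card_coe]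
    unfold negEigCount
    rw [hP]
  · rintro x ⟨z, rfl⟩ hx0
    rw [quad_eq_sum_aux L hL (F z), ← hU]
    have hez : ∀ j, (star U *ᵥ F z) j = e z j := fun j => congrFun (hstarF z) j
    have hez0 : e z ≠ 0 := by
      intro h
      apply hx0
      show U.mulVecLin (e z) = 0
      rw [h, map_zero]
    obtain ⟨j, hj⟩ : ∃ j, e z j ≠ 0 := by
      by_contra h
      push_neg at h
      exact hez0 (funext h)
    have hjP : j ∈ P := by
      by_contra hjP
      exact hj (by simp [e, hjP])
    have hterm : ∀ i ∈ Finset.univ, hL.eigenvalues i * ((star U *ᵥ F z) i)^2 ≤ 0 := by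
      intro i _
      rw [hez i]
      by_cases hiP : i ∈ P
      · have : hL.eigenvalues i < 0 := by simpa [hP] using hiP
        exact mul_nonpos_of_nonpos_of_nonneg this.le (sq_nonneg _)
      · simp [e, hiP]
    have hjneg : hL.eigenvalues j * ((star U *ᵥ F z) j)^2 < 0 := by
      rw [hez j]
      have h1 : hL.eigenvalues j < 0 := by simpa [hP] using hjP
      exact mul_neg_of_neg_of_pos h1 (by positivity)
    calc ∑ i, hL.eigenvalues i * ((star U *ᵥ F z) i)^2
        < ∑ _i : Fin n, (0:ℝ) := by
          apply Finset.sum_lt_sum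
          · intro i hi; exact hterm i hi
          · exact ⟨j, Finset.mem_univ j, hjneg⟩
      _ = 0 := by simp

lemma fin_add_ne_sub_aux {n : ℕ} [NeZero n] (hn : 3 ≤ n) (i : Fin n) : i + 1 ≠ i - 1 := by
  intro h
  have h1 : i + 1 + 1 = i - 1 + 1 := by rw [h]
  rw [sub_add_cancel, add_assoc] at h1
  nth_rewrite 2 [← add_zero i] at h1
  have h2 := add_left_cancel h1
  have h3 := congrArg Fin.val h2
  simp only [Fin.add_def, Fin.val_one', Fin.val_zero] at h3
  rw [Nat.mod_eq_of_lt (show 1 < n by omega)] at h3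
  rw [Nat.mod_eq_of_lt (show 1 + 1 < n by omega)] at h3
  omega

open Fin.NatCast in
lemma fin_const_of_step_aux {n : ℕ} [NeZero n] (x : Fin n → ℝ)
    (h : ∀ i : Fin n, x i = x (i + 1)) (k : Fin n) : x k = x 0 := by
  have key : ∀ j : ℕ, x ((0 : Fin n) + (j : Fin n)) = x 0 := by
    intro j
    induction j with
    | zero => simp
    | succ j ih =>
      have hc : ((j + 1 : ℕ) : Fin n) = ((j : ℕ) : Fin n) + 1 := by push_cast; ring
      rw [hc, ← add_assoc, ← h ((0 : Fin n) + (j : Fin n)), ih]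
  have := key k.val
  rwa [zero_add, Fin.cast_val_eq_self] at this

lemma cycle_quad_aux {n : ℕ} [NeZero n] (hn : 3 ≤ n) (W : Matrix (Fin n) (Fin n) ℝ)
    (hsymm : W.IsSymm) (hdiag : ∀ i, W i i = 0)
    (hz : ∀ i j : Fin n, j ≠ i + 1 → i ≠ j + 1 → W i j = 0) (x : Fin n → ℝ) :
    x ⬝ᵥ (signedLaplacian W *ᵥ x) = ∑ i, W i (i + 1) * (x i - x (i + 1))^2 := by
  classical
  have hrow : ∀ i, (signedLaplacian W *ᵥ x) i
      = (∑ k, W i k) * x i - ∑ j, W i j * x j := by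
    intro i
    show (∑ j, (if i = j then ∑ k, W i k else -W i j) * x j) = _
    have hsplit : ∀ j, (if i = j then (∑ k, W i k) else -W i j) * x j
        = (if i = j then (∑ k, W i k) * x j else 0) - W i j * x j
          + (if i = j then W i j * x j else 0) := by
      intro j
      by_cases h : i = j <;> simp [h]
    rw [Finset.sum_congr rfl fun j _ => hsplit j]
    rw [Finset.sum_add_distrib, Finset.sum_sub_distrib, Finset.sum_ite_eq, Finset.sum_ite_eq]
    simp [hdiag i]
  have step1 : x ⬝ᵥ (signedLaplacian W *ᵥ x) = ∑ i, ∑ j, W i j * (x i ^ 2 - x i * x j) := by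
    unfold dotProduct
    rw [Finset.sum_congr rfl fun i _ => by rw [hrow i]]
    apply Finset.sum_congr rfl
    intro i _
    have hR : ∑ j, W i j * (x i ^ 2 - x i * x j)
        = (∑ j, W i j) * x i ^ 2 - x i * ∑ j, W i j * x j := by
      rw [Finset.sum_mul, Finset.mul_sum, ← Finset.sum_sub_distrib]
      exact Finset.sum_congr rfl fun j _ => by ring
    rw [hR]
    ring
  rw [step1]
  have step2 : ∀ i : Fin n, ∑ j, W i j * (x i ^ 2 - x i * x j)
      = W i (i+1) * (x i ^ 2 - x i * x (i+1)) + W i (i-1) * (x i ^ 2 - x i * x (i-1)) := by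
    intro i
    have hne := fin_add_ne_sub_aux hn i
    have hsub : ∑ j, W i j * (x i ^ 2 - x i * x j)
        = ∑ j ∈ ({i+1, i-1} : Finset (Fin n)), W i j * (x i ^ 2 - x i * x j) := by
      apply (Finset.sum_subset (Finset.subset_univ _) ?_).symm
      intro j _ hj
      simp only [Finset.mem_insert, Finset.mem_singleton] at hj
      push_neg at hj
      have h2 : i ≠ j + 1 := by
        intro h
        apply hj.2
        rw [h]; simp
      rw [hz i j hj.1 h2, zero_mul]
    rw [hsub, Finset.sum_pair hne]
  rw [Finset.sum_congr rfl fun i _ => step2 i, Finset.sum_add_distrib]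
  have step3 : ∑ i : Fin n, W i (i+1) * (x (i+1) ^ 2 - x (i+1) * x i)
      = ∑ i : Fin n, W i (i-1) * (x i ^ 2 - x i * x (i-1)) := by
    apply Fintype.sum_equiv (Equiv.addRight (1 : Fin n))
    intro i
    simp only [Equiv.coe_addRight, add_sub_cancel_right]
    rw [hsymm.apply i (i+1)]
  rw [← step3, ← Finset.sum_add_distrib]
  exact Finset.sum_congr rfl fun i _ => by ring

theorem cycle_negEig_bounds
    {n : ℕ} [NeZero n] (hn : 3 ≤ n) (W : Matrix (Fin n) (Fin n) ℝ)
    (hsymm : W.IsSymm) (hdiag : ∀ i, W i i = 0)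
    (hcycle : ∀ i j : Fin n, W i j ≠ 0 ↔ (j = i + 1 ∨ i = j + 1))
    (m : ℕ)
    (hm : m = (letI := Classical.decPred (fun i : Fin n => W i (i + 1) < 0)
      (Finset.univ.filter fun i : Fin n => W i (i + 1) < 0).card))
    (hmn : m < n)
    (L : Matrix (Fin n) (Fin n) ℝ) (hLdef : L = signedLaplacian W)
    (hL : L.IsHermitian) :
    m - 1 ≤ negEigCount L hL ∧ negEigCount L hL ≤ m := by
  classical
  have hz : ∀ i j : Fin n, j ≠ i + 1 → i ≠ j + 1 → W i j = 0 := by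
    intro i j h1 h2
    by_contra hw
    rcases (hcycle i j).mp hw with h | h
    · exact h1 h
    · exact h2 h
  have hq : ∀ x : Fin n → ℝ, x ⬝ᵥ (L *ᵥ x) = ∑ i, W i (i + 1) * (x i - x (i + 1))^2 := by
    intro x
    rw [hLdef]
    exact cycle_quad_aux hn W hsymm hdiag hz x
  set Neg : Finset (Fin n) := Finset.univ.filter (fun i => W i (i + 1) < 0) with hNegDef
  have hm' : m = Neg.card := by rw [hm, hNegDef]
  have hmlen : Neg.card ≤ n := by
    have := Finset.card_le_univ Neg
    simpa using this
  let dmap : (Fin n → ℝ) →ₗ[ℝ] (Fin n → ℝ) :=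
    { toFun := fun x i => x i - x (i + 1)
      map_add' := by intro x y; funext i; simp [Pi.add_apply]; ring
      map_smul' := by intro c x; funext i; simp [Pi.smul_apply, smul_eq_mul]; ring }
  constructor
  · -- lower bound : m - 1 ≤ negEigCount
    let g1 : (Fin n → ℝ) →ₗ[ℝ] (↥(Negᶜ) → ℝ) :=
      (LinearMap.funLeft ℝ ℝ Subtype.val) ∘ₗ dmap
    set V0 : Submodule ℝ (Fin n → ℝ) := LinearMap.ker g1 with hV0def
    have hrank0 : m ≤ Module.finrank ℝ V0 := by
      have hrn := LinearMap.finrank_range_add_finrank_ker g1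
      rw [Module.finrank_fintype_fun_eq_card, Fintype.card_fin] at hrn
      have hrle : Module.finrank ℝ (LinearMap.range g1)
          ≤ Module.finrank ℝ (↥(Negᶜ) → ℝ) := Submodule.finrank_le _
      rw [Module.finrank_fintype_fun_eq_card, Fintype.card_coe, Finset.card_compl,
        Fintype.card_fin] at hrle
      have hVeq : Module.finrank ℝ (LinearMap.ker g1) = Module.finrank ℝ V0 := rfl
      omega
    let smap : (Fin n → ℝ) →ₗ[ℝ] ℝ :=
      { toFun := fun x => ∑ i, x i
        map_add' := by intro x y; simp [Finset.sum_add_distrib]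
        map_smul' := by intro c x; simp [Finset.mul_sum] }
    let g := smap ∘ₗ V0.subtype
    set V1 : Submodule ℝ (Fin n → ℝ) := (LinearMap.ker g).map V0.subtype with hV1def
    have hrank1 : Module.finrank ℝ V1 = Module.finrank ℝ (LinearMap.ker g) := by
      set_option synthInstance.maxHeartbeats 1000000 in
      rw [hV1def]
      exact (Submodule.equivMapOfInjective V0.subtype (Submodule.injective_subtype V0)
        (LinearMap.ker g)).finrank_eq.symm
    have hrankker : Module.finrank ℝ V0 - 1 ≤ Module.finrank ℝ (LinearMap.ker g) := by
      have hrn := LinearMap.finrank_range_add_finrank_ker g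
      have hrle : Module.finrank ℝ (LinearMap.range g) ≤ Module.finrank ℝ ℝ :=
        Submodule.finrank_le _
      rw [Module.finrank_self] at hrle
      omega
    have hV1neg : ∀ x ∈ V1, x ≠ 0 → x ⬝ᵥ (L *ᵥ x) < 0 := by
      rintro x ⟨⟨y, hyV0⟩, hyker, rfl⟩ hx0
      simp only [Submodule.coe_subtype] at hx0 ⊢
      have hy0 : ∀ i : Fin n, i ∉ Neg → y i - y (i + 1) = 0 := by
        intro i hi
        have hmem : y ∈ LinearMap.ker g1 := hyV0
        rw [LinearMap.mem_ker] at hmem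
        have := congrFun hmem ⟨i, by simpa using hi⟩
        simpa [g1, dmap] using this
      have hsum0 : ∑ i, y i = 0 := by
        have : g ⟨y, hyV0⟩ = 0 := hyker
        simpa [g, smap] using this
      rw [hq y]
      have hterm : ∀ i ∈ Finset.univ, W i (i+1) * (y i - y (i+1))^2 ≤ 0 := by
        intro i _
        by_cases hi : i ∈ Neg
        · have : W i (i+1) < 0 := by
            rw [hNegDef] at hi
            simpa using hi
          exact mul_nonpos_of_nonpos_of_nonneg this.le (sq_nonneg _)
        · rw [hy0 i hi]
          simp
      obtain ⟨j, hjd⟩ : ∃ j : Fin n, y j - y (j+1) ≠ 0 := by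
        by_contra hc
        push_neg at hc
        have hstep : ∀ i : Fin n, y i = y (i + 1) := by
          intro i
          have := hc i
          linarith
        have hconst : ∀ k : Fin n, y k = y 0 := fin_const_of_step_aux y hstep
        have : ∑ i : Fin n, y i = n * y 0 := by
          rw [Finset.sum_congr rfl fun i _ => hconst i]
          simp [Finset.sum_const, mul_comm]
        rw [hsum0] at this
        have hy00 : y 0 = 0 := by
          rcases mul_eq_zero.mp this.symm with h | h
          · exact absurd h (Nat.cast_ne_zero.mpr (NeZero.ne n))
          · exact h
        apply hx0
        ext k
        rw [hconst k, hy00]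
        rfl
      have hjNeg : j ∈ Neg := by
        by_contra hjn
        exact hjd (hy0 j hjn)
      have hjneg : W j (j+1) * (y j - y (j+1))^2 < 0 := by
        have h1 : W j (j+1) < 0 := by
          rw [hNegDef] at hjNeg
          simpa using hjNeg
        exact mul_neg_of_neg_of_pos h1 (by positivity)
      calc ∑ i, W i (i+1) * (y i - y (i+1))^2
          < ∑ _i : Fin n, (0:ℝ) := by
            apply Finset.sum_lt_sum
            · intro i hi; exact hterm i hi
            · exact ⟨j, Finset.mem_univ j, hjneg⟩
        _ = 0 := by simp
    have hle := negdef_le_negEigCount_aux L hL V1 hV1neg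
    omega
  · -- upper bound : negEigCount ≤ m
    obtain ⟨V, hVrank, hVneg⟩ := exists_negdef_subspace_aux L hL
    let f : V →ₗ[ℝ] (↥Neg → ℝ) :=
      (LinearMap.funLeft ℝ ℝ Subtype.val) ∘ₗ dmap ∘ₗ V.subtype
    have hfinj : Function.Injective f := by
      rw [← LinearMap.ker_eq_bot, LinearMap.ker_eq_bot']
      intro ⟨x, hxV⟩ hfx
      ext1
      by_contra hx0
      have hqx := hVneg x hxV hx0
      rw [hq x] at hqx
      have hnn : ∀ i ∈ Finset.univ, (0:ℝ) ≤ W i (i+1) * (x i - x (i+1))^2 := by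
        intro i _
        by_cases hi : i ∈ Neg
        · have hzr : x i - x (i+1) = 0 := by
            have := congrFun hfx ⟨i, hi⟩
            simpa [f, dmap] using this
          rw [hzr]
          simp
        · have : ¬ W i (i+1) < 0 := by
            rw [hNegDef] at hi
            simpa using hi
          exact mul_nonneg (not_lt.1 this) (sq_nonneg _)
      have := Finset.sum_nonneg hnn
      linarith
    have h1 : Module.finrank ℝ V ≤ Module.finrank ℝ (↥Neg → ℝ) :=
      LinearMap.finrank_le_finrank_of_injective hfinj
    rw [Module.finrank_fintype_fun_eq_card, Fintype.card_coe] at h1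
    omega
end

section
/- Let W define a structurally balanced, connected signed network with signed Laplacian L, and let k ∈ ℝⁿ be a compensation vector with k ≤ δ entrywise and k ≠ δ. Then the compensated Laplacian L^k = L + diag(k) has at least one negative eigenvalue (L^k is not positive semidefinite), so the compensated network ẋ = −L^k x is unstable. -/
open Matrix Finset Filter

/-- The compensation threshold vector `δ`, with `δ i = Σ_j (|W i j| − W i j)`. -/
noncomputable def deltaVec {n : ℕ} (W : Matrix (Fin n) (Fin n) ℝ) : Fin n → ℝ :=
  fun i => ∑ j, (|W i j| - W i j)

/-- A signed network is structurally balanced if some ±1 sign vector `g`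
makes all the products `g i * W i j * g j` nonnegative. -/
def StructurallyBalanced {n : ℕ} (W : Matrix (Fin n) (Fin n) ℝ) : Prop :=
  ∃ g : Fin n → ℝ, (∀ i, g i = 1 ∨ g i = -1) ∧ ∀ i j, 0 ≤ g i * W i j * g j

/-- If `v` is an eigenvector of `M` with eigenvalue `μ`, then `v` is an eigenvector of
`exp M` with eigenvalue `exp μ`. -/
lemma exp_mulVec_eigen {n : ℕ} (M : Matrix (Fin n) (Fin n) ℝ) (v : Fin n → ℝ) (μ : ℝ)
    (h : M *ᵥ v = μ • v) :
    (NormedSpace.exp M) *ᵥ v = (Real.exp μ) • v := by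
  letI : SeminormedRing (Matrix (Fin n) (Fin n) ℝ) := Matrix.linftyOpSemiNormedRing
  letI : NormedRing (Matrix (Fin n) (Fin n) ℝ) := Matrix.linftyOpNormedRing
  letI : NormedAlgebra ℝ (Matrix (Fin n) (Fin n) ℝ) := Matrix.linftyOpNormedAlgebra
  have hpow : ∀ m : ℕ, (M ^ m) *ᵥ v = (μ ^ m) • v := by
    intro m
    induction m with
    | zero => simp
    | succ m ih =>
      rw [pow_succ, ← Matrix.mulVec_mulVec, h, Matrix.mulVec_smul, ih, smul_smul,
        pow_succ, mul_comm]
  let f : Matrix (Fin n) (Fin n) ℝ →ₗ[ℝ] (Fin n → ℝ) :=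
    { toFun := fun A => A *ᵥ v
      map_add' := fun A B => Matrix.add_mulVec A B v
      map_smul' := fun c A => Matrix.smul_mulVec c A v }
  have hf : (NormedSpace.exp M) *ᵥ v = f (NormedSpace.exp M) := rfl
  rw [hf, NormedSpace.exp_eq_tsum ℝ]
  show f.toContinuousLinearMap (∑' m : ℕ, (m.factorial⁻¹ : ℝ) • M ^ m) = _
  rw [f.toContinuousLinearMap.map_tsum (NormedSpace.expSeries_summable' (𝕂 := ℝ) M)]
  have : ∀ m : ℕ, f.toContinuousLinearMap ((m.factorial⁻¹ : ℝ) • M ^ m)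
      = ((m.factorial⁻¹ : ℝ) * μ ^ m) • v := by
    intro m
    show f _ = _
    simp only [f, LinearMap.coe_mk, AddHom.coe_mk, Matrix.smul_mulVec, hpow, smul_smul]
  simp_rw [this]
  rw [Summable.tsum_smul_const ?_]
  · congr 1
    rw [Real.exp_eq_exp_ℝ, NormedSpace.exp_eq_tsum ℝ]
    simp [smul_eq_mul]
  · simpa [smul_eq_mul] using NormedSpace.expSeries_summable' (𝕂 := ℝ) μ

theorem compensated_unstable_of_le_delta
    {n : ℕ} (W : Matrix (Fin n) (Fin n) ℝ)
    (hsymm : W.IsSymm) (hdiag : ∀ i, W i i = 0)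
    (hconn : (underlyingGraph W).Connected)
    (hbal : StructurallyBalanced W)
    (L : Matrix (Fin n) (Fin n) ℝ) (hLdef : L = signedLaplacian W)
    (k : Fin n → ℝ) (hk0 : ∀ i, 0 ≤ k i)
    (hkle : ∀ i, k i ≤ deltaVec W i) (hkne : k ≠ deltaVec W)
    (hLk : (L + Matrix.diagonal k).IsHermitian) :
    (∃ i, hLk.eigenvalues i < 0) ∧
    ¬ (L + Matrix.diagonal k).PosSemidef ∧
    (∃ x0 : Fin n → ℝ, ∀ C : ℝ, ∃ t : ℝ, 0 ≤ t ∧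
      C < ‖(NormedSpace.exp ((-t) • (L + Matrix.diagonal k))).mulVec x0‖) := by
  obtain ⟨g, hg1, hg2⟩ := hbal
  set M := L + Matrix.diagonal k with hM
  have hgsq : ∀ i, g i * g i = 1 := by
    intro i; rcases hg1 i with h | h <;> rw [h] <;> norm_num
  have hgabs : ∀ i, |g i| = 1 := by
    intro i; rcases hg1 i with h | h <;> rw [h] <;> norm_num
  have habs : ∀ i j, g i * W i j * g j = |W i j| := by
    intro i j
    have h1 : |g i * W i j * g j| = |W i j| := by
      rw [abs_mul, abs_mul, hgabs, hgabs]; ring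
    rw [← h1, abs_of_nonneg (hg2 i j)]
  have hLe : ∀ i j, L i j = (if i = j then ∑ c, W i c else 0) - W i j := by
    intro i j
    rw [hLdef]
    simp only [signedLaplacian, Matrix.of_apply]
    split
    · next h => subst h; rw [hdiag]; ring
    · ring
  -- the quadratic form at g
  have hrow : ∀ i, ∑ j, g i * (L i j * g j) = -deltaVec W i := by
    intro i
    have hterm : ∀ j, g i * (L i j * g j) =
        (if i = j then ∑ c, W i c else 0) * (g i * g j) - |W i j| := by
      intro j
      rw [hLe, ← habs i j]; ring
    rw [Finset.sum_congr rfl fun j _ => hterm j, Finset.sum_sub_distrib]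
    have h2 : ∑ j, (if i = j then ∑ c, W i c else 0) * (g i * g j)
        = (∑ c, W i c) * (g i * g i) := by
      rw [Finset.sum_eq_single i]
      · simp
      · intro b _ hb; simp [Ne.symm hb |> fun h => h]
      · intro h; exact absurd (Finset.mem_univ i) h
    rw [h2, hgsq, mul_one]
    unfold deltaVec
    rw [Finset.sum_sub_distrib]
    ring
  have hquad : g ⬝ᵥ (M *ᵥ g) = ∑ i, (k i - deltaVec W i) := by
    rw [hM, Matrix.add_mulVec, dotProduct_add]
    have h1 : g ⬝ᵥ (L *ᵥ g) = ∑ i, -deltaVec W i := by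
      simp only [dotProduct, Matrix.mulVec, Finset.mul_sum]
      exact Finset.sum_congr rfl fun i _ => hrow i
    have h2 : g ⬝ᵥ (Matrix.diagonal k *ᵥ g) = ∑ i, k i := by
      simp only [dotProduct, Matrix.mulVec_diagonal]
      refine Finset.sum_congr rfl fun i _ => ?_
      rw [show g i * (k i * g i) = k i * (g i * g i) by ring, hgsq, mul_one]
    rw [h1, h2, ← Finset.sum_add_distrib]
    exact Finset.sum_congr rfl fun i _ => by ring
  obtain ⟨i0, hi0⟩ := Function.ne_iff.mp hkne
  have hneg : g ⬝ᵥ (M *ᵥ g) < 0 := by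
    rw [hquad]
    have : ∑ i, (k i - deltaVec W i) < ∑ _i : Fin n, (0 : ℝ) := by
      refine Finset.sum_lt_sum (fun i _ => by linarith [hkle i]) ⟨i0, Finset.mem_univ _, ?_⟩
      have := lt_of_le_of_ne (hkle i0) hi0
      linarith
    simpa using this
  have hnpsd : ¬ M.PosSemidef := by
    intro hpsd
    have h := hpsd.dotProduct_mulVec_nonneg g
    rw [show star g = g from star_trivial g] at h
    linarith
  have hev : ∃ i, hLk.eigenvalues i < 0 := by
    by_contra hc
    push_neg at hc
    exact hnpsd ((Matrix.IsHermitian.posSemidef_iff_eigenvalues_nonneg hLk).mpr hc)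
  refine ⟨hev, hnpsd, ?_⟩
  obtain ⟨i, hi⟩ := hev
  set μ := hLk.eigenvalues i with hμ
  set v : Fin n → ℝ := ⇑(hLk.eigenvectorBasis i) with hv
  have hvec : M *ᵥ v = μ • v := hLk.mulVec_eigenvectorBasis i
  have hvne : v ≠ 0 := by
    intro h0
    have := hLk.eigenvectorBasis.orthonormal.ne_zero i
    apply this
    ext j
    exact congrFun h0 j
  have hnv : (0 : ℝ) < ‖v‖ := norm_pos_iff.mpr hvne
  refine ⟨v, fun C => ?_⟩
  set T := max 0 (Real.log ((|C| + 1) / ‖v‖) / (-μ)) with hT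
  refine ⟨T, le_max_left _ _, ?_⟩
  have hexp : (NormedSpace.exp ((-T) • M)) *ᵥ v = Real.exp (T * (-μ)) • v := by
    apply exp_mulVec_eigen
    rw [Matrix.smul_mulVec, hvec, smul_smul]
    ring_nf
  rw [hexp, norm_smul, Real.norm_eq_abs, abs_of_pos (Real.exp_pos _)]
  have hμpos : (0 : ℝ) < -μ := by linarith
  have hlog : Real.log ((|C| + 1) / ‖v‖) ≤ T * (-μ) := by
    have h1 : Real.log ((|C| + 1) / ‖v‖) / (-μ) ≤ T := le_max_right _ _
    have := mul_le_mul_of_nonneg_right h1 (le_of_lt hμpos)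
    rwa [div_mul_cancel₀ _ (ne_of_gt hμpos)] at this
  have hquot : (|C| + 1) / ‖v‖ ≤ Real.exp (T * (-μ)) := by
    rw [← Real.exp_log (div_pos (by positivity) hnv)]
    exact Real.exp_le_exp.mpr hlog
  have hfin : (|C| + 1) ≤ Real.exp (T * (-μ)) * ‖v‖ := (div_le_iff₀ hnv).mp hquot
  have : C ≤ |C| := le_abs_self C
  linarith
end

section
/- Let W define a structurally balanced, connected signed network with signed Laplacian L, and let k ∈ ℝⁿ be a compensation vector with k ≥ δ entrywise and k ≠ δ. Then the compensated network achieves trivial consensus: the compensated Laplacian L^k = L + diag(k) is positive definite, and for every initial state x(0) ∈ ℝⁿ the trajectory x(t) = e^{−t L^k} x(0) converges to the zero vector as t → ∞. -/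
open Matrix Finset Filter

/-- Key quadratic-form identity for the compensated signed Laplacian. -/
lemma quad_key_aux {n : ℕ} (W : Matrix (Fin n) (Fin n) ℝ)
    (hdiag : ∀ i, W i i = 0) (hWsymm : ∀ i j, W i j = W j i)
    (k : Fin n → ℝ) (x : Fin n → ℝ) :
    x ⬝ᵥ ((signedLaplacian W + Matrix.diagonal k) *ᵥ x)
      = (1/2) * ∑ i, ∑ j, (|W i j| * x i^2 - 2 * W i j * (x i * x j) + |W i j| * x j^2)
        + ∑ i, (k i - deltaVec W i) * x i ^ 2 := by
  have hsum : ∀ i, ((signedLaplacian W + Matrix.diagonal k) *ᵥ x) i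
      = ((∑ m, W i m) + k i) * x i - ∑ j, W i j * x j := by
    intro i
    have hentry : ∀ j, (signedLaplacian W + Matrix.diagonal k) i j
        = (if i = j then (∑ m, W i m) + k i else 0) - W i j := by
      intro j; by_cases h : i = j
      · subst h; simp [signedLaplacian, Matrix.add_apply, Matrix.diagonal_apply, hdiag]
      · simp [signedLaplacian, Matrix.add_apply, Matrix.diagonal_apply_ne _ h, h]
    simp only [mulVec, dotProduct, hentry, sub_mul, Finset.sum_sub_distrib, ite_mul, zero_mul,
      Finset.sum_ite_eq, Finset.mem_univ, if_true]
  have S1 : ∑ i, ∑ j, |W i j| * x j^2 = ∑ i, ∑ j, |W i j| * x i^2 := by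
    rw [Finset.sum_comm]
    exact Finset.sum_congr rfl fun a _ => Finset.sum_congr rfl fun b _ => by rw [hWsymm b a]
  have lhs_eq : x ⬝ᵥ ((signedLaplacian W + Matrix.diagonal k) *ᵥ x)
      = ∑ i, ((∑ j, W i j * x i^2) + k i * x i^2 - ∑ j, W i j * (x i * x j)) := by
    simp only [dotProduct, hsum]
    refine Finset.sum_congr rfl fun i _ => ?_
    have h1 : x i * ∑ j, W i j * x j = ∑ j, W i j * (x i * x j) := by
      rw [Finset.mul_sum]; exact Finset.sum_congr rfl fun j _ => by ring
    have e1 : ∑ j, W i j * x i^2 = (∑ j, W i j) * x i^2 := by rw [Finset.sum_mul]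
    rw [mul_sub, h1, e1]; ring
  rw [lhs_eq]
  have rhs_split : ∀ i, ∑ j, (|W i j| * x i^2 - 2 * W i j * (x i * x j) + |W i j| * x j^2)
      = (∑ j, (|W i j| * x i^2 - 2 * W i j * (x i * x j))) + ∑ j, |W i j| * x j^2 := by
    intro i; rw [← Finset.sum_add_distrib]
  simp only [rhs_split]
  rw [Finset.sum_add_distrib, S1, ← Finset.sum_add_distrib]
  rw [Finset.mul_sum, ← Finset.sum_add_distrib]
  refine Finset.sum_congr rfl fun i _ => ?_
  simp only [deltaVec, Finset.sum_sub_distrib]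
  have e1 : ∑ j, W i j * x i^2 = (∑ j, W i j) * x i^2 := by rw [Finset.sum_mul]
  have e2 : ∑ j, |W i j| * x i^2 = (∑ j, |W i j|) * x i^2 := by rw [Finset.sum_mul]
  have e4 : ∑ j, W i j * (x i * x j) = x i * ∑ j, W i j * x j := by
    rw [Finset.mul_sum]; exact Finset.sum_congr rfl fun j _ => by ring
  have e5 : ∑ j, 2 * W i j * (x i * x j) = 2 * (x i * ∑ j, W i j * x j) := by
    rw [Finset.mul_sum, Finset.mul_sum]; exact Finset.sum_congr rfl fun j _ => by ring
  have e6 : ∑ j, x i ^ 2 * |W i j| = x i ^ 2 * ∑ j, |W i j| := by rw [Finset.mul_sum]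
  have e7 : ∑ j, |W i j| * x i ^ 2 = x i ^ 2 * ∑ j, |W i j| := by
    rw [Finset.mul_sum]; exact Finset.sum_congr rfl fun j _ => mul_comm _ _
  rw [e1, e4, e5]; ring_nf
  rw [e6]; ring_nf
  try linarith

/-- Positive definiteness of the compensated Laplacian. -/
lemma posdef_aux {n : ℕ} (W : Matrix (Fin n) (Fin n) ℝ)
    (hsymm : W.IsSymm) (hdiag : ∀ i, W i i = 0)
    (hconn : (underlyingGraph W).Connected)
    (k : Fin n → ℝ)
    (hkge : ∀ i, deltaVec W i ≤ k i) (hkne : k ≠ deltaVec W) :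
    (signedLaplacian W + Matrix.diagonal k).PosDef := by
  classical
  have hWsymm : ∀ i j, W i j = W j i := by
    intro i j
    exact (congrFun (congrFun hsymm i) j).symm
  have hherm : (signedLaplacian W + Matrix.diagonal k).IsHermitian := by
    have hsym2 : (signedLaplacian W + Matrix.diagonal k).IsSymm := by
      rw [Matrix.IsSymm]
      ext i j
      by_cases h : i = j
      · subst h; rfl
      · simp [Matrix.transpose_apply, Matrix.add_apply, signedLaplacian, h, Ne.symm h,
          Matrix.diagonal_apply_ne _ h, Matrix.diagonal_apply_ne _ (Ne.symm h), hWsymm i j]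
    rw [Matrix.IsHermitian, Matrix.conjTranspose_eq_transpose_of_trivial]
    exact hsym2
  rw [Matrix.posDef_iff_dotProduct_mulVec]
  refine ⟨hherm, ?_⟩
  intro x hx
  rw [star_trivial]
  rw [quad_key_aux W hdiag hWsymm k x]
  -- nonnegativity of individual terms
  have Tnn : ∀ i j, 0 ≤ |W i j| * x i^2 - 2 * W i j * (x i * x j) + |W i j| * x j^2 := by
    intro i j
    nlinarith [le_abs_self (W i j), neg_abs_le (W i j), sq_nonneg (x i - x j), sq_nonneg (x i + x j)]
  have Snn : ∀ i, (0:ℝ) ≤ ∑ j, (|W i j| * x i^2 - 2 * W i j * (x i * x j) + |W i j| * x j^2) :=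
    fun i => Finset.sum_nonneg fun j _ => Tnn i j
  have Knn : ∀ i, (0:ℝ) ≤ (k i - deltaVec W i) * x i ^ 2 :=
    fun i => mul_nonneg (by linarith [hkge i]) (sq_nonneg _)
  have htot : 0 ≤ (1/2) * ∑ i, ∑ j, (|W i j| * x i^2 - 2 * W i j * (x i * x j) + |W i j| * x j^2)
        + ∑ i, (k i - deltaVec W i) * x i ^ 2 := by
    have := Finset.sum_nonneg (fun i (_ : i ∈ Finset.univ) => Snn i)
    have := Finset.sum_nonneg (fun i (_ : i ∈ Finset.univ) => Knn i)
    positivity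
  rcases lt_or_eq_of_le htot with h | h
  · exact h
  exfalso
  -- total is zero, so each part is zero
  have hS := Finset.sum_nonneg (fun i (_ : i ∈ (Finset.univ : Finset (Fin n))) => Snn i)
  have hK := Finset.sum_nonneg (fun i (_ : i ∈ (Finset.univ : Finset (Fin n))) => Knn i)
  have hSzero : ∑ i, ∑ j, (|W i j| * x i^2 - 2 * W i j * (x i * x j) + |W i j| * x j^2) = 0 := by
    linarith
  have hKzero : ∑ i, (k i - deltaVec W i) * x i ^ 2 = 0 := by linarith
  have hTzero : ∀ i j, |W i j| * x i^2 - 2 * W i j * (x i * x j) + |W i j| * x j^2 = 0 := by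
    intro i j
    have h1 := (Finset.sum_eq_zero_iff_of_nonneg
      (fun i (_ : i ∈ (Finset.univ : Finset (Fin n))) => Snn i)).mp hSzero i (Finset.mem_univ i)
    exact (Finset.sum_eq_zero_iff_of_nonneg
      (fun j (_ : j ∈ (Finset.univ : Finset (Fin n))) => Tnn i j)).mp h1 j (Finset.mem_univ j)
  -- squares are constant along edges
  have hedge : ∀ i j, W i j ≠ 0 → x i ^ 2 = x j ^ 2 := by
    intro i j hW
    have h0 := hTzero i j
    rcases lt_or_gt_of_ne hW with h | h
    · -- W i j < 0
      have h2 : (-(W i j)) * (x i + x j)^2 = 0 := by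
        rw [abs_of_neg h] at h0; linear_combination h0
      have h3 : (x i + x j) ^ 2 = 0 := by
        rcases mul_eq_zero.mp h2 with h4 | h4
        · exfalso; linarith
        · exact h4
      have h5 : x i = -x j := by
        have := pow_eq_zero_iff (n := 2) (by norm_num) |>.mp h3
        linarith
      rw [h5]; ring
    · -- W i j > 0
      have h2 : (W i j) * (x i - x j)^2 = 0 := by
        rw [abs_of_pos h] at h0; linear_combination h0
      have h3 : (x i - x j) ^ 2 = 0 := by
        rcases mul_eq_zero.mp h2 with h4 | h4
        · exfalso; linarith
        · exact h4
      have h5 : x i = x j := by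
        have := pow_eq_zero_iff (n := 2) (by norm_num) |>.mp h3
        linarith
      rw [h5]
  -- squares are globally constant by connectivity
  have hreach : ∀ {a b : Fin n}, (underlyingGraph W).Reachable a b → x a ^ 2 = x b ^ 2 := by
    intro a b h
    obtain ⟨p⟩ := h
    induction p with
    | nil => rfl
    | cons hadj q ih =>
      rename_i u v w
      have hadj' := hadj
      rw [underlyingGraph, SimpleGraph.fromRel_adj] at hadj'
      have hWuv : W u v ≠ 0 := by
        rcases hadj'.2 with h' | h'
        · exact h'
        · rw [hWsymm u v]; exact h'
      exact (hedge u v hWuv).trans ih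
  -- there is a site with strict compensation
  obtain ⟨i0, hi0⟩ : ∃ i0, k i0 ≠ deltaVec W i0 := Function.ne_iff.mp hkne
  have hx0 : x i0 = 0 := by
    have h1 := (Finset.sum_eq_zero_iff_of_nonneg
      (fun i (_ : i ∈ (Finset.univ : Finset (Fin n))) => Knn i)).mp hKzero i0 (Finset.mem_univ i0)
    have h2 : k i0 - deltaVec W i0 ≠ 0 := sub_ne_zero_of_ne hi0
    have h3 : x i0 ^ 2 = 0 := by
      rcases mul_eq_zero.mp h1 with h | h
      · exact absurd h h2
      · exact h
    exact pow_eq_zero_iff (n := 2) (by norm_num) |>.mp h3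
  apply hx
  funext i
  have := hreach (hconn.preconnected i i0)
  rw [hx0] at this
  simp only [Pi.zero_apply]
  have : x i ^ 2 = 0 := by simpa using this
  exact pow_eq_zero_iff (n := 2) (by norm_num) |>.mp this

/-- Trajectories of a positive-definite linear system decay to zero. -/
lemma tendsto_exp_neg_smul_posdef {n : ℕ} (A : Matrix (Fin n) (Fin n) ℝ) (hPD : A.PosDef)
    (x0 : Fin n → ℝ) :
    Filter.Tendsto (fun t : ℝ => (NormedSpace.exp ((-t) • A)).mulVec x0)
      Filter.atTop (nhds 0) := by
  classical
  have hA : A.IsHermitian := hPD.1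
  set U : Matrix (Fin n) (Fin n) ℝ :=
    (Matrix.IsHermitian.eigenvectorUnitary hA : Matrix (Fin n) (Fin n) ℝ) with hU
  set lam : Fin n → ℝ := hA.eigenvalues with hlam
  have hUU : U * star U = 1 :=
    (Matrix.mem_unitaryGroup_iff).mp (Matrix.IsHermitian.eigenvectorUnitary hA).2
  have hUinv : U⁻¹ = star U := Matrix.inv_eq_right_inv hUU
  have hUisUnit : IsUnit U := ⟨Unitary.toUnits (Matrix.IsHermitian.eigenvectorUnitary hA), rfl⟩
  have hspec : A = U * Matrix.diagonal lam * U⁻¹ := by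
    rw [hUinv]
    have := Matrix.IsHermitian.spectral_theorem hA
    simpa [Function.comp] using this
  have hexp : ∀ t : ℝ, NormedSpace.exp ((-t) • A)
      = U * Matrix.diagonal (fun i => Real.exp (-t * lam i)) * U⁻¹ := by
    intro t
    have h1 : (-t) • A = U * Matrix.diagonal (fun i => -t * lam i) * U⁻¹ := by
      rw [hspec, ← Matrix.smul_mul, ← Matrix.mul_smul, ← Matrix.diagonal_smul]
      rfl
    rw [h1, Matrix.exp_conj U _ hUisUnit, Matrix.exp_diagonal]
    congr 1
    congr 1
    rw [Pi.exp_def]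
    funext i
    rw [Real.exp_eq_exp_ℝ]
  set c : Fin n → ℝ := U⁻¹ *ᵥ x0 with hc
  have hcomp : ∀ t : ℝ, (NormedSpace.exp ((-t) • A)) *ᵥ x0
      = fun j => ∑ i, U j i * (Real.exp (-t * lam i) * c i) := by
    intro t
    funext j
    rw [hexp t, ← Matrix.mulVec_mulVec, ← Matrix.mulVec_mulVec]
    simp [Matrix.mulVec, dotProduct, Matrix.diagonal_apply, ite_mul, zero_mul,
      Finset.sum_ite_eq, hc]
  simp only [hcomp]
  rw [tendsto_pi_nhds]
  intro j
  have : Tendsto (fun t : ℝ => ∑ i, U j i * (Real.exp (-t * lam i) * c i)) atTop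
      (nhds (∑ i : Fin n, 0)) := by
    apply tendsto_finset_sum
    intro i _
    have hpos : 0 < lam i := hPD.eigenvalues_pos i
    have hbot : Tendsto (fun t : ℝ => -t * lam i) atTop atBot := by
      have h1 : Tendsto (fun t : ℝ => t * lam i) atTop atTop :=
        Tendsto.atTop_mul_const hpos tendsto_id
      exact (tendsto_neg_atTop_atBot.comp h1).congr fun t => by
        simp [Function.comp, neg_mul]
    have hexp0 : Tendsto (fun t : ℝ => Real.exp (-t * lam i)) atTop (nhds 0) :=
      Real.tendsto_exp_atBot.comp hbot
    have := (hexp0.mul_const (c i)).const_mul (U j i)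
    simpa using this
  simpa using this

theorem compensated_trivial_consensus_of_ge_delta
    {n : ℕ} (W : Matrix (Fin n) (Fin n) ℝ)
    (hsymm : W.IsSymm) (hdiag : ∀ i, W i i = 0)
    (hconn : (underlyingGraph W).Connected)
    (hbal : StructurallyBalanced W)
    (L : Matrix (Fin n) (Fin n) ℝ) (hLdef : L = signedLaplacian W)
    (k : Fin n → ℝ) (hk0 : ∀ i, 0 ≤ k i)
    (hkge : ∀ i, deltaVec W i ≤ k i) (hkne : k ≠ deltaVec W) :
    (L + Matrix.diagonal k).PosDef ∧
    (∀ x0 : Fin n → ℝ, Filter.Tendsto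
      (fun t : ℝ => (NormedSpace.exp ((-t) • (L + Matrix.diagonal k))).mulVec x0)
      Filter.atTop (nhds 0)) := by
  subst hLdef
  have hPD := posdef_aux W hsymm hdiag hconn k hkge hkne
  exact ⟨hPD, fun x0 => tendsto_exp_neg_smul_posdef _ hPD x0⟩
end

section
/- Let W define a structurally balanced, connected signed network with signed Laplacian L, and let k ∈ ℝⁿ be a compensation vector (k_i ≥ 0 for all i) such that k_i > δ_i for at least one index i and k_j < δ_j for at least one index j. Then for every sign vector g ∈ {−1,1}ⁿ one has (L + diag(k)) g ≠ 0; in particular the compensated network cannot achieve bipartite consensus. -/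
open Matrix Finset Filter

/-- The compensated network with (compensated Laplacian) matrix `M` achieves
bipartite consensus if `M` is positive semidefinite and its kernel is
one-dimensional, spanned by a ±1 sign vector. -/
def BipartiteConsensus {n : ℕ} (M : Matrix (Fin n) (Fin n) ℝ) : Prop :=
  M.PosSemidef ∧ ∃ g : Fin n → ℝ, (∀ i, g i = 1 ∨ g i = -1) ∧
    LinearMap.ker (Matrix.toLin' M) = Submodule.span ℝ {g}

theorem no_bipartite_consensus_of_incomparable_compensation
    {n : ℕ} (W : Matrix (Fin n) (Fin n) ℝ)
    (hsymm : W.IsSymm) (hdiag : ∀ i, W i i = 0)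
    (hconn : (underlyingGraph W).Connected)
    (hbal : StructurallyBalanced W)
    (L : Matrix (Fin n) (Fin n) ℝ) (hLdef : L = signedLaplacian W)
    (k : Fin n → ℝ) (hk0 : ∀ i, 0 ≤ k i)
    (hgt : ∃ i, deltaVec W i < k i) (hlt : ∃ j, k j < deltaVec W j) :
    (∀ g : Fin n → ℝ, (∀ i, g i = 1 ∨ g i = -1) →
      (L + Matrix.diagonal k).mulVec g ≠ 0) ∧
    ¬ BipartiteConsensus (L + Matrix.diagonal k) := by
  obtain ⟨i, hi⟩ := hgt
  have key : ∀ g : Fin n → ℝ, (∀ i, g i = 1 ∨ g i = -1) →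
      (L + Matrix.diagonal k).mulVec g ≠ 0 := by
    intro g hg heq
    have hgsq : ∀ m, g m * g m = 1 := by
      intro m; rcases hg m with h | h <;> rw [h] <;> ring
    have h0 : ∑ j, (L i j + Matrix.diagonal k i j) * g j = 0 := by
      have := congrFun heq i
      simpa [Matrix.mulVec, dotProduct, Matrix.add_apply] using this
    have hdsum : ∑ j, Matrix.diagonal k i j * g j = k i * g i := by
      rw [Finset.sum_eq_single i]
      · simp [Matrix.diagonal]
      · intro b _ hb
        simp [Matrix.diagonal, (Ne.symm hb : i ≠ b)]
      · simp
    have hLsum : ∑ j, L i j * g j = -(∑ j, W i j * g j) + (∑ m, W i m) * g i := by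
      subst hLdef
      have step : ∀ j ∈ Finset.univ,
          (if i = j then ∑ m, W i m else -W i j) * g j
            = (-(W i j * g j)) + (if i = j then ((∑ m, W i m) + W i j) * g j else 0) := by
        intro j _
        split <;> ring
      calc ∑ j, signedLaplacian W i j * g j
          = ∑ j, ((-(W i j * g j)) + (if i = j then ((∑ m, W i m) + W i j) * g j else 0)) := by
            rw [← Finset.sum_congr rfl step]; rfl
        _ = -(∑ j, W i j * g j) + (∑ m, W i m) * g i := by
            rw [Finset.sum_add_distrib, Finset.sum_ite_eq Finset.univ i
              (fun j => ((∑ m, W i m) + W i j) * g j)]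
            simp [hdiag i, Finset.sum_neg_distrib]
    have heq2 : -(∑ j, W i j * g j) + (∑ m, W i m) * g i + k i * g i = 0 := by
      simp only [add_mul] at h0
      rw [Finset.sum_add_distrib, hdsum, hLsum] at h0
      linarith
    have hki : k i = ∑ j, W i j * (g i * g j - 1) := by
      have hmul := congrArg (fun x => x * g i) heq2
      simp only [add_mul, neg_mul, zero_mul, mul_assoc, hgsq i, mul_one] at hmul
      have : k i = (∑ j, W i j * g j) * g i - (∑ m, W i m) := by linarith
      rw [this, Finset.sum_mul, ← Finset.sum_sub_distrib]
      apply Finset.sum_congr rfl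
      intro j _
      ring
    have hkd : k i ≤ deltaVec W i := by
      rw [hki, deltaVec]
      apply Finset.sum_le_sum
      intro j _
      have h1 : W i j * (g i * g j) ≤ |W i j| := by
        rcases hg i with h | h <;> rcases hg j with h' | h' <;>
          simp [h, h'] <;> [exact le_abs_self _; exact neg_le_abs _; exact neg_le_abs _;
            exact le_abs_self _]
      nlinarith [abs_nonneg (W i j)]
    linarith
  refine ⟨key, ?_⟩
  rintro ⟨-, g, hg, hker⟩
  have hmem : g ∈ LinearMap.ker (Matrix.toLin' (L + Matrix.diagonal k)) := by
    rw [hker]; exact Submodule.mem_span_singleton_self g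
  rw [LinearMap.mem_ker, Matrix.toLin'_apply] at hmem
  exact key g hg hmem
end

section
/- Let W define a structurally balanced, connected signed network with signed Laplacian L, realized by the sign vector g ∈ {−1,1}ⁿ (so g_i W_{ij} g_j ≥ 0 for all i,j), and let k ∈ ℝⁿ be a compensation vector (k_i ≥ 0 for all i). Then the compensated network achieves bipartite consensus if and only if k = δ; moreover, when k = δ, for every initial state x(0) ∈ ℝⁿ the trajectory x(t) = e^{−t L^δ} x(0) converges as t → ∞ to (1/n) G 𝟙 𝟙ᵀ G x(0), i.e., the limit has i-th entry g_i · (Σ_j g_j x_j(0))/n, where G = diag(g) and 𝟙 is the all-ones vector. -/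
open Matrix Finset Filter

lemma compLap_apply {n : ℕ} (W : Matrix (Fin n) (Fin n) ℝ) (hdiag : ∀ i, W i i = 0)
    (k : Fin n → ℝ) (i j : Fin n) :
    (signedLaplacian W + Matrix.diagonal k) i j
      = (if j = i then ((∑ c, W i c) + k i) else 0) - W i j := by
  rcases eq_or_ne i j with rfl | h
  · simp [signedLaplacian, hdiag i]
  · simp [signedLaplacian, h, Ne.symm h, Matrix.diagonal_apply_ne _ h]

lemma compLap_mulVec {n : ℕ} (W : Matrix (Fin n) (Fin n) ℝ) (hdiag : ∀ i, W i i = 0)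
    (k x : Fin n → ℝ) (i : Fin n) :
    ((signedLaplacian W + Matrix.diagonal k) *ᵥ x) i
      = ((∑ j, W i j) + k i) * x i - ∑ j, W i j * x j := by
  simp only [Matrix.mulVec, dotProduct, compLap_apply W hdiag, sub_mul, ite_mul,
    zero_mul, Finset.sum_sub_distrib, Finset.sum_ite_eq]
  simp

theorem bipartite_consensus_iff_k_eq_delta
    {n : ℕ} (W : Matrix (Fin n) (Fin n) ℝ)
    (hsymm : W.IsSymm) (hdiag : ∀ i, W i i = 0)
    (hconn : (underlyingGraph W).Connected)
    (g : Fin n → ℝ) (hg : ∀ i, g i = 1 ∨ g i = -1)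
    (hbal : ∀ i j, 0 ≤ g i * W i j * g j)
    (L : Matrix (Fin n) (Fin n) ℝ) (hLdef : L = signedLaplacian W)
    (k : Fin n → ℝ) (hk0 : ∀ i, 0 ≤ k i) :
    (BipartiteConsensus (L + Matrix.diagonal k) ↔ k = deltaVec W) ∧
    (∀ x0 : Fin n → ℝ, Filter.Tendsto
      (fun t : ℝ =>
        (NormedSpace.exp ((-t) • (L + Matrix.diagonal (deltaVec W)))).mulVec x0)
      Filter.atTop (nhds (fun i => g i * (∑ j, g j * x0 j) / n))) := by
  subst hLdef
  have hne : Nonempty (Fin n) := hconn.nonempty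
  have hnpos : 0 < n := Fin.pos_iff_nonempty.mpr hne
  have hn0 : (n : ℝ) ≠ 0 := Nat.cast_ne_zero.mpr hnpos.ne'
  have hgsq : ∀ i, g i * g i = 1 := fun i => by rcases hg i with h | h <;> rw [h] <;> norm_num
  have hgabs : ∀ i, |g i| = 1 := fun i => by rcases hg i with h | h <;> rw [h] <;> norm_num
  have hWsym : ∀ i j, W j i = W i j := fun i j => by
    conv_lhs => rw [← hsymm]
    rfl
  have habs : ∀ i j, g i * W i j * g j = |W i j| := by
    intro i j
    have h1 : |g i * W i j * g j| = |W i j| := by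
      rw [abs_mul, abs_mul, hgabs, hgabs, one_mul, mul_one]
    rw [← h1, abs_of_nonneg (hbal i j)]
  have hWg : ∀ i j, W i j = g i * |W i j| * g j := by
    intro i j
    calc W i j = (g i * g i) * W i j * (g j * g j) := by rw [hgsq i, hgsq j]; ring
    _ = g i * (g i * W i j * g j) * g j := by ring
    _ = g i * |W i j| * g j := by rw [habs]
  -- the compensated Laplacian with k = δ
  set M : Matrix (Fin n) (Fin n) ℝ := signedLaplacian W + Matrix.diagonal (deltaVec W) with hMdef
  have hrow : ∀ i, (∑ j, W i j) + deltaVec W i = ∑ j, |W i j| := by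
    intro i
    rw [deltaVec, ← Finset.sum_add_distrib]
    simp
  have hMrow : ∀ (x : Fin n → ℝ) i, (M *ᵥ x) i = (∑ j, |W i j|) * x i - ∑ j, W i j * x j := by
    intro x i
    rw [hMdef, compLap_mulVec W hdiag, hrow]
  have hMg : M *ᵥ g = 0 := by
    funext i
    rw [hMrow]
    have e1 : ∑ j, W i j * g j = (∑ j, |W i j|) * g i := by
      rw [Finset.sum_mul]
      refine Finset.sum_congr rfl fun j _ => ?_
      linear_combination (g j) * hWg i j + (g i * |W i j|) * hgsq j
    rw [e1]
    simp
  -- quadratic form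
  have hqf : ∀ x : Fin n → ℝ, x ⬝ᵥ (M *ᵥ x)
      = (∑ i, ∑ j, |W i j| * (g i * x i - g j * x j) ^ 2) / 2 := by
    intro x
    have e1 : x ⬝ᵥ (M *ᵥ x) = ∑ i, ∑ j,
        (|W i j| * ((g i * x i) * (g i * x i)) - |W i j| * ((g i * x i) * (g j * x j))) := by
      simp only [dotProduct, hMrow]
      refine Finset.sum_congr rfl fun i _ => ?_
      calc x i * ((∑ j, |W i j|) * x i - ∑ j, W i j * x j)
          = ∑ j, (|W i j| * (x i * x i)) - ∑ j, (W i j * (x i * x j)) := by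
            rw [mul_sub]
            congr 1
            · rw [Finset.sum_mul, Finset.mul_sum]
              exact Finset.sum_congr rfl fun j _ => by ring
            · rw [Finset.mul_sum]
              exact Finset.sum_congr rfl fun j _ => by ring
        _ = ∑ j, (|W i j| * ((g i * x i) * (g i * x i))
              - |W i j| * ((g i * x i) * (g j * x j))) := by
            rw [Finset.sum_sub_distrib]
            congr 1
            · refine Finset.sum_congr rfl fun j _ => ?_
              linear_combination (-(|W i j| * (x i * x i))) * hgsq i
            · refine Finset.sum_congr rfl fun j _ => ?_
              linear_combination (x i * x j) * hWg i j
    rw [e1, eq_div_iff (by norm_num : (2:ℝ) ≠ 0)]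
    have swap : (∑ i, ∑ j,
        (|W i j| * ((g i * x i) * (g i * x i)) - |W i j| * ((g i * x i) * (g j * x j))))
        = ∑ i, ∑ j,
        (|W i j| * ((g j * x j) * (g j * x j)) - |W i j| * ((g i * x i) * (g j * x j))) := by
      rw [Finset.sum_comm]
      refine Finset.sum_congr rfl fun i _ => Finset.sum_congr rfl fun j _ => ?_
      rw [hWsym i j]
      ring
    calc (∑ i, ∑ j, (|W i j| * ((g i * x i) * (g i * x i))
            - |W i j| * ((g i * x i) * (g j * x j)))) * 2
        = (∑ i, ∑ j, (|W i j| * ((g i * x i) * (g i * x i))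
            - |W i j| * ((g i * x i) * (g j * x j))))
          + (∑ i, ∑ j, (|W i j| * ((g j * x j) * (g j * x j))
            - |W i j| * ((g i * x i) * (g j * x j)))) := by rw [← swap]; ring
      _ = ∑ i, ∑ j, |W i j| * (g i * x i - g j * x j) ^ 2 := by
          rw [← Finset.sum_add_distrib]
          refine Finset.sum_congr rfl fun i _ => ?_
          rw [← Finset.sum_add_distrib]
          refine Finset.sum_congr rfl fun j _ => by ring
  have hqf_nonneg : ∀ x : Fin n → ℝ, 0 ≤ x ⬝ᵥ (M *ᵥ x) := by
    intro x
    rw [hqf]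
    apply div_nonneg _ (by norm_num)
    refine Finset.sum_nonneg fun i _ => Finset.sum_nonneg fun j _ => ?_
    exact mul_nonneg (abs_nonneg _) (sq_nonneg _)
  -- kernel characterization
  have hker_char : ∀ x : Fin n → ℝ, M *ᵥ x = 0 → ∃ c : ℝ, x = c • g := by
    intro x hx
    have h0 : x ⬝ᵥ (M *ᵥ x) = 0 := by rw [hx, dotProduct_zero]
    rw [hqf] at h0
    have hsum0 : ∑ i, ∑ j, |W i j| * (g i * x i - g j * x j) ^ 2 = 0 := by
      field_simp at h0
      linarith
    have hterm : ∀ i j : Fin n, W i j ≠ 0 → g i * x i = g j * x j := by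
      intro i j hW
      have h1 := (Finset.sum_eq_zero_iff_of_nonneg (fun i _ =>
        Finset.sum_nonneg fun j _ => mul_nonneg (abs_nonneg _) (sq_nonneg _))).mp hsum0 i
        (Finset.mem_univ i)
      have h2 := (Finset.sum_eq_zero_iff_of_nonneg (fun j _ =>
        mul_nonneg (abs_nonneg _) (sq_nonneg _))).mp h1 j (Finset.mem_univ j)
      have h3 : (g i * x i - g j * x j) ^ 2 = 0 := by
        rcases mul_eq_zero.mp h2 with h | h
        · exact absurd (abs_eq_zero.mp h) hW
        · exact h
      have := pow_eq_zero_iff (n := 2) (by norm_num) |>.mp h3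
      linarith [sub_eq_zero.mp this]
    have hadj : ∀ i j : Fin n, (underlyingGraph W).Adj i j → g i * x i = g j * x j := by
      intro i j h
      rw [underlyingGraph, SimpleGraph.fromRel_adj] at h
      rcases h.2 with h' | h'
      · exact hterm i j h'
      · exact (hterm j i h').symm
    have hall : ∀ i j : Fin n, g i * x i = g j * x j := by
      intro i j
      obtain ⟨w⟩ := hconn.preconnected i j
      induction w with
      | nil => rfl
      | cons h p ih => exact (hadj _ _ h).trans ih
    obtain ⟨i0⟩ := hne
    refine ⟨g i0 * x i0, funext fun i => ?_⟩
    have h1 := hall i i0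
    have h2 := hgsq i
    simp only [Pi.smul_apply, smul_eq_mul]
    linear_combination (g i) * h1 + (-(x i)) * h2
  have hHerm : M.IsHermitian := by
    rw [Matrix.IsHermitian]
    ext i j
    rw [Matrix.conjTranspose_apply]
    rw [hMdef, compLap_apply W hdiag, compLap_apply W hdiag]
    rcases eq_or_ne i j with rfl | h
    · simp
    · simp [h, Ne.symm h, hWsym i j]
  have hpsdM : M.PosSemidef := by
    refine .of_dotProduct_mulVec_nonneg hHerm fun x => ?_
    have : star x = x := by
      funext i; simp
    rw [this]
    exact hqf_nonneg x
  have hker : LinearMap.ker (Matrix.toLin' M) = Submodule.span ℝ {g} := by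
    ext x
    simp only [LinearMap.mem_ker, Matrix.toLin'_apply, Submodule.mem_span_singleton]
    constructor
    · intro hx
      obtain ⟨c, hc⟩ := hker_char x hx
      exact ⟨c, hc.symm⟩
    · rintro ⟨c, rfl⟩
      rw [Matrix.mulVec_smul, hMg]
      simp
  constructor
  · -- the iff
    constructor
    · rintro ⟨hpsd, h, hh, hkerh⟩
      have hh2 : ∀ i, h i * h i = 1 := fun i => by
        rcases hh i with e | e <;> rw [e] <;> norm_num
      have hhabs : ∀ i, |h i| = 1 := fun i => by
        rcases hh i with e | e <;> rw [e] <;> norm_num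
      have hMh : (signedLaplacian W + Matrix.diagonal k) *ᵥ h = 0 := by
        have hmem : h ∈ LinearMap.ker (Matrix.toLin' (signedLaplacian W + Matrix.diagonal k)) := by
          rw [hkerh]
          exact Submodule.mem_span_singleton_self h
        rwa [LinearMap.mem_ker, Matrix.toLin'_apply] at hmem
      have hki : ∀ i, k i = h i * (∑ j, W i j * h j) - ∑ j, W i j := by
        intro i
        have h1 : ((∑ j, W i j) + k i) * h i - ∑ j, W i j * h j = 0 := by
          rw [← compLap_mulVec W hdiag k h i, hMh]
          rfl
        linear_combination (h i) * h1 + (-((∑ j, W i j) + k i)) * hh2 i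
      have hle : ∀ i, k i ≤ deltaVec W i := by
        intro i
        rw [hki i, deltaVec, Finset.sum_sub_distrib, Finset.mul_sum]
        have : ∑ j, h i * (W i j * h j) ≤ ∑ j, |W i j| := by
          refine Finset.sum_le_sum fun j _ => ?_
          calc h i * (W i j * h j) ≤ |h i * (W i j * h j)| := le_abs_self _
          _ = |W i j| := by rw [abs_mul, abs_mul, hhabs, hhabs, one_mul, mul_one]
        linarith
      have hgMg : g ⬝ᵥ ((signedLaplacian W + Matrix.diagonal k) *ᵥ g)
          = ∑ i, (k i - deltaVec W i) := by
        simp only [dotProduct, compLap_mulVec W hdiag]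
        refine Finset.sum_congr rfl fun i _ => ?_
        have e1 : g i * ∑ j, W i j * g j = ∑ j, |W i j| := by
          rw [Finset.mul_sum]
          refine Finset.sum_congr rfl fun j _ => ?_
          rw [← habs i j]; ring
        have e2 : deltaVec W i = ∑ j, |W i j| - ∑ j, W i j := by
          rw [deltaVec, Finset.sum_sub_distrib]
        rw [e2]
        linear_combination ((∑ j, W i j) + k i) * hgsq i + (-1 : ℝ) * e1
      have hge : 0 ≤ ∑ i, (k i - deltaVec W i) := by
        have h2 := hpsd.dotProduct_mulVec_nonneg g
        have : star g = g := by funext i; simp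
        rw [this, hgMg] at h2
        exact h2
      have hzero : ∑ i, (deltaVec W i - k i) = 0 := by
        have h1 : ∑ i, (deltaVec W i - k i) = -∑ i, (k i - deltaVec W i) := by
          rw [← Finset.sum_neg_distrib]
          exact Finset.sum_congr rfl fun i _ => by ring
        have h2 : 0 ≤ ∑ i, (deltaVec W i - k i) :=
          Finset.sum_nonneg fun i _ => by linarith [hle i]
        linarith
      funext i
      have := (Finset.sum_eq_zero_iff_of_nonneg (fun i _ => by linarith [hle i] :
        ∀ i ∈ Finset.univ, 0 ≤ deltaVec W i - k i)).mp hzero i (Finset.mem_univ i)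
      linarith
    · rintro rfl
      exact ⟨hpsdM, g, hg, hker⟩
  · -- the limit
    intro x0
    -- spectral data
    set lam : Fin n → ℝ := hHerm.eigenvalues with hlamdef
    set U : Matrix (Fin n) (Fin n) ℝ := (hHerm.eigenvectorUnitary : Matrix (Fin n) (Fin n) ℝ)
      with hUdef
    have hspec : M = U * Matrix.diagonal lam * star U := by
      have h := hHerm.spectral_theorem
      rwa [RCLike.ofReal_real_eq_id, Function.id_comp] at h
    have hU1 : U * star U = 1 := Matrix.mem_unitaryGroup_iff.mp hHerm.eigenvectorUnitary.2
    have hU2 : star U * U = 1 := Matrix.mem_unitaryGroup_iff'.mp hHerm.eigenvectorUnitary.2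
    have hlamnn : ∀ p, 0 ≤ lam p := fun p => hpsdM.eigenvalues_nonneg p
    set Uu : (Matrix (Fin n) (Fin n) ℝ)ˣ := ⟨U, star U, hU1, hU2⟩ with hUudef
    have hexp : ∀ t : ℝ, NormedSpace.exp ((-t) • M)
        = U * Matrix.diagonal (fun p => Real.exp (-t * lam p)) * star U := by
      intro t
      have hdsmul : Matrix.diagonal (fun p => -t * lam p) = (-t) • Matrix.diagonal lam := by
        ext i j
        rcases eq_or_ne i j with rfl | h
        · simp
        · simp [Matrix.diagonal_apply_ne _ h]
      have h1 : (-t) • M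
          = Uu.val * Matrix.diagonal (fun p => -t * lam p) * (Uu⁻¹).val := by
        show (-t) • M = U * Matrix.diagonal (fun p => -t * lam p) * star U
        rw [hspec, hdsmul, mul_smul_comm, smul_mul_assoc]
      rw [h1, Matrix.exp_units_conj Uu, Matrix.exp_diagonal]
      show (U : Matrix (Fin n) (Fin n) ℝ) * _ * star U = _
      congr 1
      congr 1
      rw [Pi.exp_def]
      funext p
      rw [← Real.exp_eq_exp_ℝ]
    set chi : Fin n → ℝ := fun p => if lam p = 0 then (1:ℝ) else 0 with hchidef
    have hchi1 : ∀ p, lam p = 0 → chi p = 1 := fun p h => by simp [hchidef, h]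
    have hchi0 : ∀ p, lam p ≠ 0 → chi p = 0 := fun p h => by simp [hchidef, h]
    set w : Fin n → ℝ := star U *ᵥ x0 with hwdef
    have hrwd : ∀ (d : Fin n → ℝ) (i : Fin n), ((U * Matrix.diagonal d * star U) *ᵥ x0) i
        = ∑ p, U i p * (d p * w p) := by
      intro d i
      rw [← Matrix.mulVec_mulVec, ← Matrix.mulVec_mulVec, ← hwdef]
      have hdw : Matrix.diagonal d *ᵥ w = fun p => d p * w p :=
        funext fun p => Matrix.mulVec_diagonal d w p
      rw [hdw]
      simp [Matrix.mulVec, dotProduct]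
    have hPlim : Filter.Tendsto
        (fun t : ℝ => (U * Matrix.diagonal (fun p => Real.exp (-t * lam p)) * star U) *ᵥ x0)
        Filter.atTop (nhds ((U * Matrix.diagonal chi * star U) *ᵥ x0)) := by
      rw [tendsto_pi_nhds]
      intro i
      simp only [hrwd]
      refine tendsto_finset_sum _ fun p _ => ?_
      rcases (hlamnn p).eq_or_lt with hl | hl
      · have hexp1 : ∀ t : ℝ, Real.exp (-t * lam p) = 1 := by
          intro t; rw [← hl]; simp
        simp only [hexp1, hchi1 p hl.symm]
        exact tendsto_const_nhds
      · have hexp0 : Filter.Tendsto (fun t : ℝ => Real.exp (-t * lam p))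
            Filter.atTop (nhds 0) := by
          have h1 : Filter.Tendsto (fun t : ℝ => t * lam p) Filter.atTop Filter.atTop :=
            Filter.Tendsto.atTop_mul_const hl tendsto_id
          have h2 : Filter.Tendsto (fun t : ℝ => -t * lam p) Filter.atTop Filter.atBot := by
            have := tendsto_neg_atTop_atBot.comp h1
            simpa [Function.comp_def, neg_mul] using this
          exact Real.tendsto_exp_atBot.comp h2
        have := (hexp0.mul_const (w p)).const_mul (U i p)
        simpa [hchi0 p hl.ne'] using this
    set P : Matrix (Fin n) (Fin n) ℝ := U * Matrix.diagonal chi * star U with hPdef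
    -- identify the limit
    have hMP : M * P = 0 := by
      have hdd : Matrix.diagonal lam * Matrix.diagonal chi = 0 := by
        rw [Matrix.diagonal_mul_diagonal]
        have he : (fun p => lam p * chi p) = fun _ => (0:ℝ) := by
          funext p
          rcases eq_or_ne (lam p) 0 with h | h
          · rw [h]; ring
          · rw [hchi0 p h]; ring
        rw [he, Matrix.diagonal_zero]
      calc M * P = (U * Matrix.diagonal lam * star U) * (U * Matrix.diagonal chi * star U) := by
            rw [← hspec, ← hPdef]
        _ = U * (Matrix.diagonal lam * ((star U * U) * (Matrix.diagonal chi * star U))) := by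
            simp only [Matrix.mul_assoc]
        _ = 0 := by
            rw [hU2, one_mul,
              ← Matrix.mul_assoc (Matrix.diagonal lam) (Matrix.diagonal chi) (star U),
              hdd, zero_mul, mul_zero]
    have hPg : P *ᵥ g = g := by
      have hz : Matrix.diagonal lam *ᵥ (star U *ᵥ g) = 0 := by
        have h1 : U *ᵥ (Matrix.diagonal lam *ᵥ (star U *ᵥ g)) = 0 := by
          rw [Matrix.mulVec_mulVec, Matrix.mulVec_mulVec, ← hspec, hMg]
        have h2 : star U *ᵥ (U *ᵥ (Matrix.diagonal lam *ᵥ (star U *ᵥ g))) = 0 := by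
          rw [h1, Matrix.mulVec_zero]
        rwa [Matrix.mulVec_mulVec (Matrix.diagonal lam *ᵥ (star U *ᵥ g)) (star U) U,
          hU2, Matrix.one_mulVec] at h2
      have hchiw : Matrix.diagonal chi *ᵥ (star U *ᵥ g) = star U *ᵥ g := by
        funext p
        rw [Matrix.mulVec_diagonal]
        rcases eq_or_ne (lam p) 0 with h | h
        · rw [hchi1 p h, one_mul]
        · have hp := congrFun hz p
          rw [Matrix.mulVec_diagonal] at hp
          simp only [Pi.zero_apply] at hp
          have hz2 : (star U *ᵥ g) p = 0 := by
            rcases mul_eq_zero.mp hp with h' | h'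
            · exact absurd h' h
            · exact h'
          rw [hz2]; ring
      calc P *ᵥ g = U *ᵥ (Matrix.diagonal chi *ᵥ (star U *ᵥ g)) := by
            rw [hPdef, ← Matrix.mulVec_mulVec, ← Matrix.mulVec_mulVec]
        _ = U *ᵥ (star U *ᵥ g) := by rw [hchiw]
        _ = g := by rw [Matrix.mulVec_mulVec, hU1, Matrix.one_mulVec]
    have hPsym : Pᵀ = P := by
      have hsU : star U = Uᵀ := by
        rw [Matrix.star_eq_conjTranspose, Matrix.conjTranspose_eq_transpose_of_trivial]
      rw [hPdef, hsU, Matrix.transpose_mul, Matrix.transpose_mul, Matrix.transpose_transpose,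
        Matrix.diagonal_transpose, Matrix.mul_assoc]
    have hMPv : M *ᵥ (P *ᵥ x0) = 0 := by
      rw [Matrix.mulVec_mulVec, hMP, Matrix.zero_mulVec]
    obtain ⟨c, hc⟩ := hker_char (P *ᵥ x0) hMPv
    have hgg : ∑ i, g i * g i = (n : ℝ) := by
      rw [Finset.sum_congr rfl fun i _ => hgsq i]
      simp
    have hcval : c * n = ∑ j, g j * x0 j := by
      have way1 : g ⬝ᵥ (P *ᵥ x0) = c * n := by
        rw [hc]
        simp only [dotProduct, Pi.smul_apply, smul_eq_mul]
        rw [show ∑ i, g i * (c * g i) = c * ∑ i, g i * g i from by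
          rw [Finset.mul_sum]; exact Finset.sum_congr rfl fun i _ => by ring]
        rw [hgg]
      have way2 : g ⬝ᵥ (P *ᵥ x0) = ∑ j, g j * x0 j := by
        rw [dotProduct_mulVec, ← Matrix.mulVec_transpose, hPsym, hPg]
        rfl
      rw [← way1, way2]
    have hfinal : P *ᵥ x0 = fun i => g i * (∑ j, g j * x0 j) / n := by
      rw [hc]
      funext i
      simp only [Pi.smul_apply, smul_eq_mul]
      rw [← hcval]
      field_simp
    rw [← hfinal]
    refine hPlim.congr fun t => ?_
    rw [hexp t]
end

section
/- Let W define a structurally balanced, connected signed network with signed Laplacian L, realized by the sign vector g ∈ {−1,1}ⁿ (so g_i W_{ij} g_j ≥ 0 for all i,j), and let k ∈ ℝⁿ be a compensation vector (k_i ≥ 0 for all i). Then L^k = L + diag(k) is positive semidefinite with 0 a simple eigenvalue whose eigenspace is spanned by g (equivalently, ker(L^k) = span{g} and L^k ⪰ 0) if and only if k = δ. -/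
open Matrix Finset Filter

/-- Row computation: `g i * ((L + diag k) g)_i = k i - δ i` when `g` is a
balancing sign vector. -/
lemma sl_row_lemma {n : ℕ} (W : Matrix (Fin n) (Fin n) ℝ) (hdiag : ∀ i, W i i = 0)
    (g : Fin n → ℝ) (hg2 : ∀ i, g i * g i = 1)
    (habs : ∀ i j, g i * W i j * g j = |W i j|)
    (k : Fin n → ℝ) (i : Fin n) :
    g i * ((signedLaplacian W + Matrix.diagonal k).mulVec g) i = k i - deltaVec W i := by
  have hterm : ∀ j ∈ Finset.univ, g i * ((signedLaplacian W + Matrix.diagonal k) i j * g j)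
      = ((if j = i then (∑ m, W i m) + k i else 0) - |W i j|) := by
    intro j _
    by_cases h : i = j
    · subst h
      simp only [Matrix.add_apply, signedLaplacian, Matrix.of_apply, eq_self_iff_true, if_true,
        Matrix.diagonal_apply_eq]
      have : g i * (((∑ m, W i m) + k i) * g i) = ((∑ m, W i m) + k i) * (g i * g i) := by ring
      rw [this, hg2, hdiag i]
      simp
    · simp only [Matrix.add_apply, signedLaplacian, Matrix.of_apply, if_neg h,
        Matrix.diagonal_apply_ne _ h, if_neg (Ne.symm h), add_zero]
      have h2 : g i * (-W i j * g j) = -(g i * W i j * g j) := by ring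
      rw [h2, habs]
      ring
  have hexp : g i * ((signedLaplacian W + Matrix.diagonal k).mulVec g) i
      = ∑ j, g i * ((signedLaplacian W + Matrix.diagonal k) i j * g j) := by
    simp [Matrix.mulVec, dotProduct, Finset.mul_sum]
  rw [hexp, Finset.sum_congr rfl hterm, Finset.sum_sub_distrib,
    Finset.sum_ite_eq' Finset.univ i]
  simp [deltaVec, Finset.sum_sub_distrib]
  ring

/-- Symmetrization identity for the Laplacian quadratic form. -/
lemma sl_quad_sym {n : ℕ} (A : Matrix (Fin n) (Fin n) ℝ) (hA : ∀ i j, A j i = A i j)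
    (y : Fin n → ℝ) :
    ∑ i, ∑ j, A i j * (y i - y j) ^ 2
      = 2 * ∑ i, ∑ j, A i j * (y i ^ 2 - y i * y j) := by
  have h2 : ∑ i, ∑ j, A i j * (y j ^ 2 - y i * y j)
      = ∑ i, ∑ j, A i j * (y i ^ 2 - y i * y j) := by
    rw [Finset.sum_comm]
    refine Finset.sum_congr rfl fun i _ => Finset.sum_congr rfl fun j _ => ?_
    rw [hA i j]; ring
  have h1 : ∑ i, ∑ j, A i j * (y i - y j) ^ 2
      = (∑ i, ∑ j, A i j * (y i ^ 2 - y i * y j))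
        + ∑ i, ∑ j, A i j * (y j ^ 2 - y i * y j) := by
    rw [← Finset.sum_add_distrib]
    refine Finset.sum_congr rfl fun i _ => ?_
    rw [← Finset.sum_add_distrib]
    refine Finset.sum_congr rfl fun j _ => ?_
    ring
  rw [h1, h2]; ring

/-- The quadratic form of the compensated Laplacian with `k = δ`. -/
lemma sl_quad_form {n : ℕ} (W : Matrix (Fin n) (Fin n) ℝ) (hdiag : ∀ i, W i i = 0)
    (g : Fin n → ℝ) (hg2 : ∀ i, g i * g i = 1)
    (hWg : ∀ i j, W i j = g i * g j * |W i j|) (x : Fin n → ℝ) :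
    x ⬝ᵥ ((signedLaplacian W + Matrix.diagonal (deltaVec W)).mulVec x)
      = ∑ i, ∑ j, |W i j| * ((g i * x i) ^ 2 - (g i * x i) * (g j * x j)) := by
  have hMii : ∀ i, (signedLaplacian W + Matrix.diagonal (deltaVec W)) i i = ∑ m, |W i m| := by
    intro i
    simp [signedLaplacian, Matrix.add_apply, Matrix.diagonal_apply_eq, deltaVec,
      Finset.sum_sub_distrib]
  have hterm : ∀ i, ∀ j ∈ Finset.univ,
      x i * ((signedLaplacian W + Matrix.diagonal (deltaVec W)) i j * x j)
      = ((if j = i then (∑ m, |W i m|) * (g i * x i) ^ 2 else 0)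
          - |W i j| * ((g i * x i) * (g j * x j))) := by
    intro i j _
    by_cases h : i = j
    · subst h
      rw [hMii i, if_pos rfl]
      have hx : (g i * x i) ^ 2 = x i * x i := by
        have : (g i * x i) ^ 2 = (g i * g i) * (x i * x i) := by ring
        rw [this, hg2]; ring
      have hx2 : (g i * x i) * (g i * x i) = x i * x i := by
        have : (g i * x i) * (g i * x i) = (g i * g i) * (x i * x i) := by ring
        rw [this, hg2]; ring
      rw [hx, hx2, hdiag i, abs_zero]
      ring
    · simp only [Matrix.add_apply, signedLaplacian, Matrix.of_apply, if_neg h,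
        Matrix.diagonal_apply_ne _ h, if_neg (Ne.symm h), add_zero]
      have h3 : |W i j| * ((g i * x i) * (g j * x j))
          = (g i * g j * |W i j|) * (x i * x j) := by ring
      rw [h3, ← hWg i j]
      ring
  have hexp : x ⬝ᵥ ((signedLaplacian W + Matrix.diagonal (deltaVec W)).mulVec x)
      = ∑ i, ∑ j, x i * ((signedLaplacian W + Matrix.diagonal (deltaVec W)) i j * x j) := by
    simp [Matrix.mulVec, dotProduct, Finset.mul_sum]
  rw [hexp]
  refine Finset.sum_congr rfl fun i _ => ?_
  rw [Finset.sum_congr rfl (hterm i), Finset.sum_sub_distrib,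
    Finset.sum_ite_eq' Finset.univ i]
  have hrhs : ∑ j, |W i j| * ((g i * x i) ^ 2 - (g i * x i) * (g j * x j))
      = (∑ j, |W i j|) * (g i * x i) ^ 2
        - ∑ j, |W i j| * ((g i * x i) * (g j * x j)) := by
    rw [Finset.sum_mul, ← Finset.sum_sub_distrib]
    refine Finset.sum_congr rfl fun j _ => ?_
    ring
  rw [hrhs]
  simp

theorem posSemidef_simple_kernel_iff_k_eq_delta
    {n : ℕ} (W : Matrix (Fin n) (Fin n) ℝ)
    (hsymm : W.IsSymm) (hdiag : ∀ i, W i i = 0)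
    (hconn : (underlyingGraph W).Connected)
    (g : Fin n → ℝ) (hg : ∀ i, g i = 1 ∨ g i = -1)
    (hbal : ∀ i j, 0 ≤ g i * W i j * g j)
    (L : Matrix (Fin n) (Fin n) ℝ) (hLdef : L = signedLaplacian W)
    (k : Fin n → ℝ) (hk0 : ∀ i, 0 ≤ k i) :
    ((L + Matrix.diagonal k).PosSemidef ∧
      LinearMap.ker (Matrix.toLin' (L + Matrix.diagonal k)) = Submodule.span ℝ {g}) ↔
    k = deltaVec W := by
  subst hLdef
  have hW : ∀ i j, W j i = W i j := fun i j => by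
    conv_lhs => rw [← hsymm]
    rw [Matrix.transpose_apply]
  have hg2 : ∀ i, g i * g i = 1 := by
    intro i; rcases hg i with h | h <;> rw [h] <;> norm_num
  have habs : ∀ i j, g i * W i j * g j = |W i j| := by
    intro i j
    have h1 : |g i * W i j * g j| = |W i j| := by
      rcases hg i with h | h <;> rcases hg j with h' | h' <;> simp [h, h']
    rw [← h1, abs_of_nonneg (hbal i j)]
  have hWg : ∀ i j, W i j = g i * g j * |W i j| := by
    intro i j
    rw [← habs i j]
    have : g i * g j * (g i * W i j * g j) = (g i * g i) * (g j * g j) * W i j := by ring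
    rw [this, hg2, hg2]; ring
  constructor
  · rintro ⟨-, hker⟩
    funext i
    have hgmem : g ∈ LinearMap.ker (Matrix.toLin' (signedLaplacian W + Matrix.diagonal k)) :=
      hker ▸ Submodule.mem_span_singleton_self g
    have h0 : (signedLaplacian W + Matrix.diagonal k).mulVec g = 0 := by
      rwa [LinearMap.mem_ker, Matrix.toLin'_apply] at hgmem
    have hr := sl_row_lemma W hdiag g hg2 habs k i
    rw [h0] at hr
    simp at hr
    linarith
  · rintro rfl
    set M := signedLaplacian W + Matrix.diagonal (deltaVec W) with hM
    have hAsym : ∀ i j, |W j i| = |W i j| := fun i j => by rw [hW]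
    have hnn : ∀ x : Fin n → ℝ, 0 ≤ x ⬝ᵥ M.mulVec x := by
      intro x
      have hq := sl_quad_form W hdiag g hg2 hWg x
      have hs := sl_quad_sym (Matrix.of fun i j => |W i j|) (fun i j => hAsym i j)
        (fun i => g i * x i)
      simp only [Matrix.of_apply] at hs
      have hnn2 : 0 ≤ ∑ i, ∑ j, |W i j| * ((g i * x i) - (g j * x j)) ^ 2 :=
        Finset.sum_nonneg fun i _ => Finset.sum_nonneg fun j _ =>
          mul_nonneg (abs_nonneg _) (sq_nonneg _)
      have heq : ∑ i, ∑ j, |W i j| * ((g i * x i) ^ 2 - (g i * x i) * (g j * x j))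
          = ∑ i, ∑ j, |W i j| * ((fun i => g i * x i) i ^ 2
              - (fun i => g i * x i) i * (fun i => g i * x i) j) := rfl
      rw [hq]
      rw [heq]
      linarith [hs]
    have hherm : M.IsHermitian := by
      rw [hM]
      ext i j
      simp only [Matrix.conjTranspose_apply, star_trivial, Matrix.add_apply]
      by_cases h : i = j
      · subst h; rfl
      · simp [signedLaplacian, Matrix.of_apply, h, Ne.symm h,
          Matrix.diagonal_apply_ne, hW i j]
    have hMg : M.mulVec g = 0 := by
      funext i
      have hr := sl_row_lemma W hdiag g hg2 habs (deltaVec W) i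
      rw [sub_self] at hr
      rcases mul_eq_zero.mp hr with h | h
      · rcases hg i with h' | h' <;> rw [h'] at h <;> norm_num at h
      · simpa using h
    refine ⟨Matrix.posSemidef_iff_dotProduct_mulVec.mpr ⟨hherm, ?_⟩, ?_⟩
    · intro x
      have := hnn x
      simpa [star_trivial] using this
    · apply le_antisymm
      · intro x hx
        rw [LinearMap.mem_ker, Matrix.toLin'_apply] at hx
        have h0 : x ⬝ᵥ M.mulVec x = 0 := by rw [hx]; simp [dotProduct]
        have hq := sl_quad_form W hdiag g hg2 hWg x
        have hs := sl_quad_sym (Matrix.of fun i j => |W i j|) (fun i j => hAsym i j)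
          (fun i => g i * x i)
        simp only [Matrix.of_apply] at hs
        have hz : ∑ i, ∑ j, |W i j| * ((g i * x i) - (g j * x j)) ^ 2 = 0 := by
          have heq : ∑ i, ∑ j, |W i j| * ((g i * x i) ^ 2 - (g i * x i) * (g j * x j))
              = ∑ i, ∑ j, |W i j| * ((fun i => g i * x i) i ^ 2
                  - (fun i => g i * x i) i * (fun i => g i * x i) j) := rfl
          rw [← hM] at hq
          rw [h0] at hq
          rw [hs, ← heq, ← hq]
          ring
        have hterm0 : ∀ i j, |W i j| * ((g i * x i) - (g j * x j)) ^ 2 = 0 := by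
          intro i j
          have houter := (Finset.sum_eq_zero_iff_of_nonneg
            (fun i _ => Finset.sum_nonneg fun j _ =>
              mul_nonneg (abs_nonneg _) (sq_nonneg _))).mp hz
          have hinner := (Finset.sum_eq_zero_iff_of_nonneg
            (fun j _ => mul_nonneg (abs_nonneg _) (sq_nonneg _))).mp
            (houter i (Finset.mem_univ i))
          exact hinner j (Finset.mem_univ j)
        have hstep : ∀ a b, (underlyingGraph W).Adj a b → g a * x a = g b * x b := by
          intro a b hab
          rw [underlyingGraph, SimpleGraph.fromRel_adj] at hab
          have hWab : W a b ≠ 0 := by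
            rcases hab.2 with h | h
            · exact h
            · rwa [hW a b] at h
          have habs0 : |W a b| ≠ 0 := abs_ne_zero.mpr hWab
          have hsq : ((g a * x a) - (g b * x b)) ^ 2 = 0 := by
            rcases mul_eq_zero.mp (hterm0 a b) with h | h
            · exact absurd h habs0
            · exact h
          have := pow_eq_zero_iff (n := 2) (by norm_num) |>.mp hsq
          linarith [sub_eq_zero.mp this]
        have hreach : ∀ a b, (underlyingGraph W).Reachable a b → g a * x a = g b * x b := by
          intro a b h
          obtain ⟨w⟩ := h
          induction w with
          | nil => rfl
          | cons h p ih => exact (hstep _ _ h).trans ih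
        haveI : Nonempty (Fin n) := hconn.nonempty
        set i0 := Classical.arbitrary (Fin n) with hi0
        refine Submodule.mem_span_singleton.mpr ⟨g i0 * x i0, ?_⟩
        funext i
        have hy := hreach i0 i (hconn.preconnected i0 i)
        simp only [Pi.smul_apply, smul_eq_mul]
        rw [hy]
        have : (g i * x i) * g i = (g i * g i) * x i := by ring
        rw [this, hg2]; ring
      · rw [Submodule.span_le, Set.singleton_subset_iff]
        rw [SetLike.mem_coe, LinearMap.mem_ker, Matrix.toLin'_apply]
        exact hMg
end

section
/- (Optimality of self-loop compensation) Let W define a structurally balanced, connected signed network with signed Laplacian L, and let k ∈ ℝⁿ be a compensation vector (k_i ≥ 0 for all i) such that L^k = L + diag(k) is positive semidefinite. Then ‖k‖₁ ≥ ‖δ‖₁, i.e., Σ_{i=1}^n k_i ≥ Σ_{i=1}^n δ_i. -/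
open Matrix Finset Filter

theorem compensation_optimality
    {n : ℕ} (W : Matrix (Fin n) (Fin n) ℝ)
    (hsymm : W.IsSymm) (hdiag : ∀ i, W i i = 0)
    (hconn : (underlyingGraph W).Connected)
    (hbal : StructurallyBalanced W)
    (L : Matrix (Fin n) (Fin n) ℝ) (hLdef : L = signedLaplacian W)
    (k : Fin n → ℝ) (hk0 : ∀ i, 0 ≤ k i)
    (hpsd : (L + Matrix.diagonal k).PosSemidef) :
    ∑ i, deltaVec W i ≤ ∑ i, k i := by

  obtain ⟨g, hg1, hg2⟩ := hbal
  have hgsq : ∀ i, g i * g i = 1 := by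
    intro i; rcases hg1 i with h | h <;> rw [h] <;> ring
  have hgW : ∀ i j, g i * W i j * g j = |W i j| := by
    intro i j
    have h1 : |g i * W i j * g j| = |W i j| := by
      rcases hg1 i with h | h <;> rcases hg1 j with h' | h' <;>
        rw [h, h'] <;> simp [abs_neg]
    rw [← h1, abs_of_nonneg (hg2 i j)]
  have key := hpsd.dotProduct_mulVec_nonneg g
  have expand : star g ⬝ᵥ ((L + Matrix.diagonal k) *ᵥ g)
      = (∑ i, ∑ j, (W i j - |W i j|)) + ∑ i, k i := by
    simp only [star_trivial, dotProduct, Matrix.mulVec, Matrix.add_apply,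
      dotProduct, Finset.mul_sum, hLdef, signedLaplacian, Matrix.of_apply,
      Matrix.diagonal_apply]
    rw [← Finset.sum_add_distrib]
    apply Finset.sum_congr rfl
    intro i _
    have : ∀ j ∈ Finset.univ, g i * (((if i = j then ∑ m, W i m else -W i j)
        + if i = j then k i else 0) * g j)
        = (if i = j then g i * (∑ m, W i m + k i) * g i else 0) + (if i = j then 0 else - (g i * W i j * g j)) := by
      intro j _
      by_cases h : i = j
      · subst h; simp; ring
      · simp [h]; ring
    rw [Finset.sum_congr rfl this, Finset.sum_add_distrib, Finset.sum_ite_eq Finset.univ i]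
    simp only [Finset.mem_univ, if_true]
    have h2 : ∑ j, (if i = j then (0:ℝ) else -(g i * W i j * g j))
        = ∑ j, (-(g i * W i j * g j)) := by
      apply Finset.sum_congr rfl
      intro j _
      by_cases h : i = j
      · subst h; simp [hdiag]
      · simp [h]
    rw [h2]
    have h3 : g i * (∑ m, W i m + k i) * g i = (∑ m, W i m) + k i := by
      calc g i * (∑ m, W i m + k i) * g i = (g i * g i) * (∑ m, W i m + k i) := by ring
        _ = _ := by rw [hgsq i]; ring
    rw [h3]
    have h4 : ∀ j, -(g i * W i j * g j) = - |W i j| := by intro j; rw [hgW]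
    simp only [h4]
    rw [Finset.sum_neg_distrib, Finset.sum_sub_distrib]
    ring
  rw [expand] at key
  have hδ : ∑ i, deltaVec W i = - ∑ i, ∑ j, (W i j - |W i j|) := by
    simp only [deltaVec, ← Finset.sum_neg_distrib]
    apply Finset.sum_congr rfl
    intro i _
    apply Finset.sum_congr rfl
    intro j _
    ring
  rw [hδ]
  linarith
end

section
/- Let W define a structurally imbalanced, connected signed network with signed Laplacian L. Then there exists a compensation vector k′ ∈ ℝⁿ with 0 ≤ k′ ≤ δ entrywise and k′ ≠ δ such that L + diag(k′) is positive definite (equivalently, −(L + diag(k′)) is a stable matrix); that is, strictly less self-loop compensation than δ suffices to stabilize a structurally imbalanced network. -/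
open Matrix Finset Filter

/-- auxiliary: a property that propagates along edges propagates along reachability. -/
lemma aux_reach {n : ℕ} {W : Matrix (Fin n) (Fin n) ℝ} {x : Fin n → ℝ}
    (hadj : ∀ u v, (underlyingGraph W).Adj u v → x u = x v ∨ x u = -x v) :
    ∀ {u v : Fin n}, (underlyingGraph W).Reachable u v → x u = x v ∨ x u = -x v := by
  intro u v h
  obtain ⟨p⟩ := h
  induction p with
  | nil => exact Or.inl rfl
  | cons h p ih =>
    rcases hadj _ _ h with h1 | h1 <;> rcases ih with h2 | h2 <;> simp [h1, h2]

theorem imbalanced_stabilizable_below_delta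
    {n : ℕ} (W : Matrix (Fin n) (Fin n) ℝ)
    (hsymm : W.IsSymm) (hdiag : ∀ i, W i i = 0)
    (hconn : (underlyingGraph W).Connected)
    (himbal : ¬ StructurallyBalanced W)
    (L : Matrix (Fin n) (Fin n) ℝ) (hLdef : L = signedLaplacian W) :
    ∃ k' : Fin n → ℝ, (∀ i, 0 ≤ k' i) ∧ (∀ i, k' i ≤ deltaVec W i) ∧
      k' ≠ deltaVec W ∧ (L + Matrix.diagonal k').PosDef := by
  subst hLdef
  have hWsymm : ∀ i j, W j i = W i j := fun i j => hsymm.apply i j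
  have hstar : ∀ y : Fin n → ℝ, star y = y := fun y => funext fun i => star_trivial _
  set M : Matrix (Fin n) (Fin n) ℝ := signedLaplacian W + Matrix.diagonal (deltaVec W)
    with hMdef
  -- entries of M
  have hMapply : ∀ i j, M i j = (if i = j then ∑ k, |W i k| else 0) - W i j := by
    intro i j
    by_cases h : i = j
    · subst h
      have hd : deltaVec W i = (∑ k, |W i k|) - ∑ k, W i k := by
        simp [deltaVec, Finset.sum_sub_distrib]
      simp [hMdef, signedLaplacian, Matrix.add_apply, hd, hdiag i]
    · simp [hMdef, signedLaplacian, Matrix.add_apply, h]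
  have hMv : ∀ (x : Fin n → ℝ) i, (M *ᵥ x) i = (∑ k, |W i k|) * x i - ∑ j, W i j * x j := by
    intro x i
    simp only [Matrix.mulVec, dotProduct, hMapply, sub_mul, ite_mul, zero_mul,
      Finset.sum_sub_distrib, Finset.sum_ite_eq, Finset.mem_univ, if_true]
  -- quadratic form formula
  have hqf : ∀ x : Fin n → ℝ, 2 * (x ⬝ᵥ (M *ᵥ x)) =
      ∑ i, ∑ j, (|W i j| * x i ^ 2 + |W i j| * x j ^ 2 - 2 * W i j * (x i * x j)) := by
    intro x
    have h1 : x ⬝ᵥ (M *ᵥ x) = ∑ i, ∑ j, (|W i j| * x i ^ 2 - W i j * (x i * x j)) := by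
      simp only [dotProduct, hMv]
      refine Finset.sum_congr rfl fun i _ => ?_
      have e1 : x i * ((∑ k, |W i k|) * x i) = ∑ j, |W i j| * x i ^ 2 := by
        rw [Finset.sum_mul, Finset.mul_sum]
        exact Finset.sum_congr rfl fun j _ => by ring
      have e2 : x i * (∑ j, W i j * x j) = ∑ j, W i j * (x i * x j) := by
        rw [Finset.mul_sum]
        exact Finset.sum_congr rfl fun j _ => by ring
      rw [mul_sub, e1, e2, ← Finset.sum_sub_distrib]
    have h2 : (∑ i, ∑ j, (|W i j| * x j ^ 2 - W i j * (x i * x j)))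
        = ∑ i, ∑ j, (|W i j| * x i ^ 2 - W i j * (x i * x j)) := by
      rw [Finset.sum_comm]
      refine Finset.sum_congr rfl fun i _ => Finset.sum_congr rfl fun j _ => ?_
      rw [hWsymm i j]; ring
    calc 2 * (x ⬝ᵥ (M *ᵥ x))
        = (∑ i, ∑ j, (|W i j| * x i ^ 2 - W i j * (x i * x j)))
          + ∑ i, ∑ j, (|W i j| * x j ^ 2 - W i j * (x i * x j)) := by rw [h1, h2]; ring
      _ = ∑ i, ∑ j, (|W i j| * x i ^ 2 + |W i j| * x j ^ 2 - 2 * W i j * (x i * x j)) := by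
          rw [← Finset.sum_add_distrib]
          refine Finset.sum_congr rfl fun i _ => ?_
          rw [← Finset.sum_add_distrib]
          exact Finset.sum_congr rfl fun j _ => by ring
  -- each summand is nonnegative
  have hSnn : ∀ (x : Fin n → ℝ) i j,
      0 ≤ |W i j| * x i ^ 2 + |W i j| * x j ^ 2 - 2 * W i j * (x i * x j) := by
    intro x i j
    have h1 : 0 ≤ (|W i j| - W i j) * (x i + x j) ^ 2 :=
      mul_nonneg (by linarith [le_abs_self (W i j)]) (sq_nonneg _)
    have h2 : 0 ≤ (|W i j| + W i j) * (x i - x j) ^ 2 :=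
      mul_nonneg (by linarith [neg_abs_le (W i j)]) (sq_nonneg _)
    nlinarith [h1, h2]
  -- M is positive definite
  have hMherm : M.IsHermitian := by
    rw [Matrix.IsHermitian]
    ext i j
    rw [Matrix.conjTranspose_apply, hMapply, hMapply, star_trivial]
    by_cases h : i = j
    · subst h; rfl
    · simp [h, Ne.symm h, hWsymm i j]
  have hMPD : M.PosDef := by
    refine Matrix.PosDef.of_dotProduct_mulVec_pos hMherm fun x hx => ?_
    rw [hstar x]
    by_contra hle
    push_neg at hle
    have hzero : ∑ i, ∑ j, (|W i j| * x i ^ 2 + |W i j| * x j ^ 2 - 2 * W i j * (x i * x j)) = 0 := by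
      refine le_antisymm (by rw [← hqf x]; linarith) ?_
      exact Finset.sum_nonneg fun i _ => Finset.sum_nonneg fun j _ => hSnn x i j
    have hS0 : ∀ i j, |W i j| * x i ^ 2 + |W i j| * x j ^ 2 - 2 * W i j * (x i * x j) = 0 := by
      intro i j
      have h1 := (Finset.sum_eq_zero_iff_of_nonneg
        (fun i _ => Finset.sum_nonneg fun j _ => hSnn x i j)).mp hzero i (Finset.mem_univ i)
      exact (Finset.sum_eq_zero_iff_of_nonneg (fun j _ => hSnn x i j)).mp h1 j (Finset.mem_univ j)
    have hedge : ∀ i j, (0 < W i j → x i = x j) ∧ (W i j < 0 → x i = -x j) := by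
      intro i j
      constructor
      · intro hw
        have h0 := hS0 i j
        rw [abs_of_pos hw] at h0
        have h2 : W i j * (x i - x j) ^ 2 = 0 := by nlinarith [h0]
        have h3 : (x i - x j) ^ 2 = 0 := by
          rcases mul_eq_zero.mp h2 with h | h
          · exact absurd h (ne_of_gt hw)
          · exact h
        have := pow_eq_zero_iff two_ne_zero |>.mp h3
        linarith [this]
      · intro hw
        have h0 := hS0 i j
        rw [abs_of_neg hw] at h0
        have h2 : W i j * (x i + x j) ^ 2 = 0 := by nlinarith [h0]
        have h3 : (x i + x j) ^ 2 = 0 := by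
          rcases mul_eq_zero.mp h2 with h | h
          · exact absurd h (ne_of_lt hw)
          · exact h
        have := pow_eq_zero_iff two_ne_zero |>.mp h3
        linarith [this]
    have hadj : ∀ u v, (underlyingGraph W).Adj u v → x u = x v ∨ x u = -x v := by
      intro u v huv
      rw [underlyingGraph, SimpleGraph.fromRel_adj] at huv
      obtain ⟨hne, h | h⟩ := huv
      all_goals {
        first
        | have hW : W u v ≠ 0 := h
        | have hW : W u v ≠ 0 := by rw [← hWsymm u v]; exact h
        rcases lt_trichotomy (W u v) 0 with hw | hw | hw
        · exact Or.inr ((hedge u v).2 hw)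
        · exact absurd hw hW
        · exact Or.inl ((hedge u v).1 hw) }
    obtain ⟨i0, hx0⟩ := Function.ne_iff.mp hx
    have hval : ∀ i, x i = x i0 ∨ x i = -x i0 :=
      fun i => aux_reach hadj (hconn.preconnected i i0)
    apply himbal
    set g : Fin n → ℝ := fun i => if x i = x i0 then 1 else -1 with hg
    refine ⟨g, fun i => by by_cases h : x i = x i0 <;> simp [hg, h], fun i j => ?_⟩
    have hgi : ∀ i, x i = g i * x i0 := by
      intro i
      by_cases h : x i = x i0
      · simp [hg, h]
      · have h2 := (hval i).resolve_left h
        rw [hg]; simp only [if_neg h]; rw [h2]; ring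
    have hWx : 0 ≤ W i j * (x i * x j) := by
      rcases lt_trichotomy (W i j) 0 with hw | hw | hw
      · have h2 := (hedge i j).2 hw; rw [h2]; nlinarith [sq_nonneg (x j)]
      · simp [hw]
      · have h2 := (hedge i j).1 hw; rw [h2]; nlinarith [sq_nonneg (x j)]
    have hsq : 0 < x i0 * x i0 := mul_self_pos.mpr hx0
    have key : W i j * (x i * x j) = (g i * W i j * g j) * (x i0 * x i0) := by
      rw [hgi i, hgi j]; ring
    nlinarith [hWx, hsq, key]
  -- a negative edge exists
  have hneg : ∃ a b, W a b < 0 := by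
    by_contra h
    push_neg at h
    exact himbal ⟨fun _ => 1, fun i => Or.inl rfl, fun i j => by simpa using h i j⟩
  obtain ⟨a, b, hab⟩ := hneg
  have hδnn : ∀ i, 0 ≤ deltaVec W i :=
    fun i => Finset.sum_nonneg fun j _ => by linarith [le_abs_self (W i j)]
  have hδa : 0 < deltaVec W a := by
    refine Finset.sum_pos' (fun j _ => by linarith [le_abs_self (W a j)])
      ⟨b, Finset.mem_univ b, ?_⟩
    rw [abs_of_neg hab]; linarith
  -- minimum of the quadratic form on the unit sphere
  haveI : Nonempty (Fin n) := ⟨a⟩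
  set f : (Fin n → ℝ) → ℝ := fun y => y ⬝ᵥ (M *ᵥ y) with hf
  have hfc : Continuous f := by
    have he : f = fun y => ∑ i, y i * ∑ j, M i j * y j := by
      funext y; simp [hf, dotProduct, Matrix.mulVec]
    rw [he]
    exact continuous_finset_sum _ fun i _ => (continuous_apply i).mul
      (continuous_finset_sum _ fun j _ => continuous_const.mul (continuous_apply j))
  have hne : (Metric.sphere (0 : Fin n → ℝ) 1).Nonempty :=
    NormedSpace.sphere_nonempty.mpr zero_le_one
  obtain ⟨x₀, hx₀s, hmin⟩ := (isCompact_sphere (0 : Fin n → ℝ) 1).exists_isMinOn hne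
    hfc.continuousOn
  have hx₀norm : ‖x₀‖ = 1 := mem_sphere_zero_iff_norm.mp hx₀s
  have hx₀ne : x₀ ≠ 0 := by
    intro h; rw [h] at hx₀norm; simp at hx₀norm
  set c : ℝ := f x₀ with hc
  have hcpos : 0 < c := by
    have := hMPD.dotProduct_mulVec_pos hx₀ne
    rwa [hstar x₀] at this
  have hlow : ∀ y : Fin n → ℝ, c * ‖y‖ ^ 2 ≤ f y := by
    intro y
    rcases eq_or_ne y 0 with rfl | hy
    · simp [hf]
    · have hny : 0 < ‖y‖ := norm_pos_iff.mpr hy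
      have hz : (‖y‖⁻¹ • y) ∈ Metric.sphere (0 : Fin n → ℝ) 1 := by
        rw [mem_sphere_zero_iff_norm, norm_smul, norm_inv, norm_norm,
          inv_mul_cancel₀ hny.ne']
      have h1 : c ≤ f (‖y‖⁻¹ • y) := hmin hz
      have h2 : f (‖y‖⁻¹ • y) = ‖y‖⁻¹ * (‖y‖⁻¹ * f y) := by
        rw [hf]
        simp only [Matrix.mulVec_smul, smul_dotProduct, dotProduct_smul,
          smul_eq_mul]
      rw [h2] at h1
      have h3 := mul_le_mul_of_nonneg_right h1 (sq_nonneg ‖y‖)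
      calc c * ‖y‖ ^ 2 ≤ ‖y‖⁻¹ * (‖y‖⁻¹ * f y) * ‖y‖ ^ 2 := h3
        _ = f y := by
            rw [show ‖y‖⁻¹ * (‖y‖⁻¹ * f y) * ‖y‖ ^ 2
                = f y * ((‖y‖ * ‖y‖⁻¹) * (‖y‖ * ‖y‖⁻¹)) from by ring,
              mul_inv_cancel₀ hny.ne']
            ring
  -- the compensation vector
  set ε : ℝ := min (c / 2) (deltaVec W a) with hε
  have hεpos : 0 < ε := lt_min (by linarith) hδa
  have hεδ : ε ≤ deltaVec W a := min_le_right _ _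
  have hεc : ε ≤ c / 2 := min_le_left _ _
  refine ⟨Function.update (deltaVec W) a (deltaVec W a - ε), ?_, ?_, ?_, ?_⟩
  · intro i
    rcases eq_or_ne i a with rfl | h
    · rw [Function.update_self]; linarith
    · rw [Function.update_of_ne h]; exact hδnn i
  · intro i
    rcases eq_or_ne i a with rfl | h
    · rw [Function.update_self]; linarith
    · rw [Function.update_of_ne h]
  · intro h
    have := congrFun h a
    rw [Function.update_self] at this
    linarith
  · set k' : Fin n → ℝ := Function.update (deltaVec W) a (deltaVec W a - ε) with hk'
    have hherm : (signedLaplacian W + Matrix.diagonal k').IsHermitian := by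
      rw [Matrix.IsHermitian]
      ext i j
      rw [Matrix.conjTranspose_apply, star_trivial]
      by_cases h : i = j
      · subst h; rfl
      · simp [signedLaplacian, Matrix.add_apply, Matrix.diagonal_apply, h, Ne.symm h,
          hWsymm i j]
    have hsplit : ∀ x : Fin n → ℝ,
        x ⬝ᵥ ((signedLaplacian W + Matrix.diagonal k') *ᵥ x) = f x - ε * x a ^ 2 := by
      intro x
      have h1 : signedLaplacian W + Matrix.diagonal k'
          = M - Matrix.diagonal (fun i => if i = a then ε else 0) := by
        rw [hMdef]
        ext i j
        by_cases h : i = j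
        · subst h
          rcases eq_or_ne i a with rfl | h2
          · simp [Matrix.add_apply, Matrix.sub_apply, hk', Function.update_self]
            ring
          · simp [Matrix.add_apply, Matrix.sub_apply, hk', Function.update_of_ne h2, h2]
        · simp [Matrix.add_apply, Matrix.sub_apply, Matrix.diagonal_apply_ne _ h]
      rw [h1, Matrix.sub_mulVec, dotProduct_sub]
      congr 1
      simp only [dotProduct, Matrix.mulVec_diagonal]
      rw [Finset.sum_congr rfl (fun j _ =>
        show x j * ((if j = a then ε else 0) * x j) = if j = a then ε * x j ^ 2 else 0 from by
          split_ifs <;> ring)]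
      simp
    refine Matrix.PosDef.of_dotProduct_mulVec_pos hherm fun x hx => ?_
    rw [hstar x, hsplit x]
    have h1 : c * ‖x‖ ^ 2 ≤ f x := hlow x
    have h0 : |x a| ≤ ‖x‖ := by
      simpa [Real.norm_eq_abs] using norm_le_pi_norm x a
    have h2 : x a ^ 2 ≤ ‖x‖ ^ 2 := by nlinarith [abs_nonneg (x a), sq_abs (x a)]
    have hnx : 0 < ‖x‖ := norm_pos_iff.mpr hx
    have h3 : ε * x a ^ 2 ≤ c / 2 * ‖x‖ ^ 2 := by nlinarith [hεpos.le, sq_nonneg ‖x‖]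
    have h4 : 0 < c / 2 * ‖x‖ ^ 2 := by positivity
    linarith
end

section
/- Let W define a structurally imbalanced, connected signed network with signed Laplacian L. Then L^δ = L + diag(δ) is symmetric positive definite; let λ₁ > 0 denote its smallest eigenvalue and let E ⊆ ℝⁿ be the λ₁-eigenspace of L^δ, of dimension p ≥ 1. With the compensation vector k = δ − λ₁·𝟙 (𝟙 the all-ones vector), the compensated Laplacian L^k = L + diag(k) = L^δ − λ₁ I is positive semidefinite, its kernel equals E (so 0 is an eigenvalue of L^k of multiplicity exactly p), and for every initial state x(0) ∈ ℝⁿ the trajectory x(t) = e^{−t L^k} x(0) converges as t → ∞ to P x(0), where P is the orthogonal projection of ℝⁿ onto E. -/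
open Matrix Finset Filter

lemma exp_mulVec_eig {n : ℕ} (A : Matrix (Fin n) (Fin n) ℝ) (v : Fin n → ℝ) (d : ℝ)
    (h : A.mulVec v = d • v) :
    (NormedSpace.exp A).mulVec v = Real.exp d • v := by
  letI : SeminormedRing (Matrix (Fin n) (Fin n) ℝ) := Matrix.linftyOpSemiNormedRing
  letI : NormedRing (Matrix (Fin n) (Fin n) ℝ) := Matrix.linftyOpNormedRing
  letI : NormedAlgebra ℝ (Matrix (Fin n) (Fin n) ℝ) := Matrix.linftyOpNormedAlgebra
  have hpow : ∀ k : ℕ, (A ^ k).mulVec v = d ^ k • v := by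
    intro k
    induction k with
    | zero => simp
    | succ k ih =>
      rw [pow_succ, pow_succ, ← Matrix.mulVec_mulVec, h, Matrix.mulVec_smul, ih,
        smul_smul, mul_comm]
  let f : Matrix (Fin n) (Fin n) ℝ →ₗ[ℝ] (Fin n → ℝ) :=
    { toFun := fun M => M.mulVec v
      map_add' := fun M N => Matrix.add_mulVec M N v
      map_smul' := fun c M => Matrix.smul_mulVec c M v }
  have hf : Continuous f := f.continuous_of_finiteDimensional
  have hsum : Summable (fun k : ℕ => ((k.factorial : ℝ))⁻¹ • A ^ k) :=
    NormedSpace.expSeries_summable' (𝕂 := ℝ) A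
  have h1 : (NormedSpace.exp A).mulVec v
      = ∑' k : ℕ, f (((k.factorial : ℝ))⁻¹ • A ^ k) := by
    rw [NormedSpace.exp_eq_tsum ℝ]
    exact (hsum.hasSum.map f hf).tsum_eq.symm
  rw [h1]
  have h2 : ∀ k : ℕ, f (((k.factorial : ℝ))⁻¹ • A ^ k) = (((k.factorial : ℝ))⁻¹ * d ^ k) • v := by
    intro k
    show (((k.factorial : ℝ))⁻¹ • A ^ k).mulVec v = _
    rw [Matrix.smul_mulVec, hpow, smul_smul]
  simp_rw [h2]
  have hsum2 : Summable (fun k : ℕ => ((k.factorial : ℝ))⁻¹ * d ^ k) := by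
    simpa [smul_eq_mul] using NormedSpace.expSeries_summable' (𝕂 := ℝ) d
  rw [hsum2.tsum_smul_const]
  congr 1
  rw [Real.exp_eq_exp_ℝ, NormedSpace.exp_eq_tsum ℝ]
  simp [smul_eq_mul]


noncomputable def sgnW {n : ℕ} (W : Matrix (Fin n) (Fin n) ℝ) (i j : Fin n) : ℝ :=
  if W i j < 0 then -1 else 1

lemma sgnW_mul_abs {n : ℕ} (W : Matrix (Fin n) (Fin n) ℝ) (i j : Fin n) :
    sgnW W i j * |W i j| = W i j := by
  unfold sgnW
  rcases lt_trichotomy (W i j) 0 with h | h | h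
  · simp [h, abs_of_neg h]
  · simp [h]
  · simp [not_lt.mpr h.le, abs_of_pos h]

lemma abs_sgnW {n : ℕ} (W : Matrix (Fin n) (Fin n) ℝ) (i j : Fin n) :
    |sgnW W i j| = 1 := by
  unfold sgnW; split <;> simp

lemma Msplit {n : ℕ} (W : Matrix (Fin n) (Fin n) ℝ) (hdiag : ∀ i, W i i = 0) :
    signedLaplacian W + Matrix.diagonal (deltaVec W)
      = Matrix.diagonal (fun i => ∑ k, |W i k|) - W := by
  ext i j
  by_cases h : i = j
  · subst h
    simp [signedLaplacian, deltaVec, Matrix.diagonal_apply_eq, hdiag i,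
      Finset.sum_sub_distrib]
  · simp [signedLaplacian, deltaVec, Matrix.diagonal_apply_ne _ h, h]

lemma quadForm {n : ℕ} (W : Matrix (Fin n) (Fin n) ℝ) (hsymm : W.IsSymm)
    (hdiag : ∀ i, W i i = 0) (x : Fin n → ℝ) :
    2 * (x ⬝ᵥ (signedLaplacian W + Matrix.diagonal (deltaVec W)) *ᵥ x)
      = ∑ i, ∑ j, |W i j| * (x i - sgnW W i j * x j) ^ 2 := by
  have hW : ∀ i j, W j i = W i j := fun i j => by
    conv_lhs => rw [← hsymm]
    rfl
  have hQ : x ⬝ᵥ (signedLaplacian W + Matrix.diagonal (deltaVec W)) *ᵥ x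
      = ∑ i, ∑ j, (|W i j| * x i ^ 2 - W i j * (x i * x j)) := by
    rw [Msplit W hdiag, Matrix.sub_mulVec, dotProduct_sub]
    have h1 : x ⬝ᵥ (Matrix.diagonal fun i => ∑ k, |W i k|) *ᵥ x
        = ∑ i, ∑ j, |W i j| * x i ^ 2 := by
      simp only [dotProduct, Matrix.mulVec_diagonal]
      refine Finset.sum_congr rfl fun i _ => ?_
      rw [Finset.sum_mul, Finset.mul_sum]
      exact Finset.sum_congr rfl fun j _ => by ring
    have h2 : x ⬝ᵥ W *ᵥ x = ∑ i, ∑ j, W i j * (x i * x j) := by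
      simp only [dotProduct, Matrix.mulVec]
      refine Finset.sum_congr rfl fun i _ => ?_
      rw [Finset.mul_sum]
      exact Finset.sum_congr rfl fun j _ => by ring
    rw [h1, h2, ← Finset.sum_sub_distrib]
    exact Finset.sum_congr rfl fun i _ => (Finset.sum_sub_distrib _ _).symm
  have key : ∀ i j, |W i j| * (x i - sgnW W i j * x j) ^ 2
      = (|W i j| * x i ^ 2 - W i j * (x i * x j))
        + (|W i j| * x j ^ 2 - W i j * (x i * x j)) := by
    intro i j
    have h1 := sgnW_mul_abs W i j
    have h2 : sgnW W i j * sgnW W i j = 1 := by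
      unfold sgnW; split <;> norm_num
    linear_combination (-2 * x i * x j) * h1 + (|W i j| * x j ^ 2) * h2
  rw [hQ]
  have hswap : ∑ i, ∑ j, (|W i j| * x j ^ 2 - W i j * (x i * x j))
      = ∑ i, ∑ j, (|W i j| * x i ^ 2 - W i j * (x i * x j)) := by
    rw [Finset.sum_comm]
    refine Finset.sum_congr rfl fun i _ => Finset.sum_congr rfl fun j _ => ?_
    rw [hW i j]; ring
  calc 2 * ∑ i, ∑ j, (|W i j| * x i ^ 2 - W i j * (x i * x j))
      = ∑ i, ∑ j, (|W i j| * x i ^ 2 - W i j * (x i * x j))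
        + ∑ i, ∑ j, (|W i j| * x j ^ 2 - W i j * (x i * x j)) := by rw [hswap]; ring
    _ = ∑ i, ∑ j, ((|W i j| * x i ^ 2 - W i j * (x i * x j))
        + (|W i j| * x j ^ 2 - W i j * (x i * x j))) := by
        rw [← Finset.sum_add_distrib]
        exact Finset.sum_congr rfl fun i _ => (Finset.sum_add_distrib).symm
    _ = ∑ i, ∑ j, |W i j| * (x i - sgnW W i j * x j) ^ 2 := by
        exact Finset.sum_congr rfl fun i _ => Finset.sum_congr rfl fun j _ => (key i j).symm

lemma posDefM {n : ℕ} (W : Matrix (Fin n) (Fin n) ℝ) (hsymm : W.IsSymm)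
    (hdiag : ∀ i, W i i = 0) (hconn : (underlyingGraph W).Connected)
    (himbal : ¬ StructurallyBalanced W) :
    (signedLaplacian W + Matrix.diagonal (deltaVec W)).PosDef := by
  have hW : ∀ i j, W j i = W i j := fun i j => by
    conv_lhs => rw [← hsymm]
    rfl
  have hherm : (signedLaplacian W + Matrix.diagonal (deltaVec W)).IsHermitian := by
    rw [Msplit W hdiag]
    refine Matrix.IsHermitian.sub (Matrix.isHermitian_diagonal _) ?_
    rw [Matrix.IsHermitian, Matrix.conjTranspose_eq_transpose_of_trivial]
    ext i j
    exact hW i j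
  refine Matrix.PosDef.of_dotProduct_mulVec_pos hherm fun x hx => ?_
  rw [star_trivial]
  have hterm_nonneg : ∀ i : Fin n, ∀ j : Fin n,
      0 ≤ |W i j| * (x i - sgnW W i j * x j) ^ 2 :=
    fun i j => mul_nonneg (abs_nonneg _) (sq_nonneg _)
  have hnn : 0 ≤ x ⬝ᵥ (signedLaplacian W + Matrix.diagonal (deltaVec W)) *ᵥ x := by
    have h := quadForm W hsymm hdiag x
    nlinarith [Finset.sum_nonneg (fun i (_ : i ∈ Finset.univ) =>
      Finset.sum_nonneg fun j (_ : j ∈ Finset.univ) => hterm_nonneg i j)]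
  rcases hnn.lt_or_eq with h | h
  · exact h
  exfalso
  have hzero : ∀ i j, W i j ≠ 0 → x i = sgnW W i j * x j := by
    have h2 : ∑ i, ∑ j, |W i j| * (x i - sgnW W i j * x j) ^ 2 = 0 := by
      have hq := quadForm W hsymm hdiag x
      rw [← h] at hq
      linarith
    intro i j hij
    have h3 := (Finset.sum_eq_zero_iff_of_nonneg (fun i _ =>
      Finset.sum_nonneg fun j _ => hterm_nonneg i j)).mp h2 i (Finset.mem_univ i)
    have hterm := (Finset.sum_eq_zero_iff_of_nonneg (fun j _ =>
      hterm_nonneg i j)).mp h3 j (Finset.mem_univ j)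
    have habs : |W i j| ≠ 0 := abs_ne_zero.mpr hij
    have h4 := (mul_eq_zero.mp hterm).resolve_left habs
    have h5 := sq_eq_zero_iff.mp h4
    linarith [h5]
  have habsw : ∀ i j : Fin n, (underlyingGraph W).Walk i j → |x i| = |x j| := by
    intro i j w
    induction w with
    | nil => rfl
    | @cons a b c hadj _ ih =>
      have hWab : W a b ≠ 0 := by
        rw [underlyingGraph, SimpleGraph.fromRel_adj] at hadj
        rcases hadj.2 with h' | h'
        · exact h'
        · rw [hW a b] at h'
          exact h'
      have h1 : |x a| = |x b| := by
        rw [hzero a b hWab, abs_mul, abs_sgnW, one_mul]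
      rw [h1]
      exact ih
  obtain ⟨i0, hi0⟩ := Function.ne_iff.mp hx
  have hconst : ∀ i, |x i| = |x i0| := fun i =>
    (hconn.preconnected i i0).elim (habsw i i0)
  set cns : ℝ := |x i0| with hcns
  have hcpos : 0 < cns := abs_pos.mpr hi0
  apply himbal
  refine ⟨fun i => x i / cns, fun i => ?_, fun i j => ?_⟩
  · rcases (abs_eq hcpos.le).mp (hconst i) with h' | h'
    · left; show x i / cns = 1; rw [h']; field_simp
    · right; show x i / cns = -1; rw [h']; field_simp
  · by_cases hij : W i j = 0
    · simp [hij]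
    have hsW : sgnW W i j * W i j = |W i j| := by
      unfold sgnW
      split
      · rename_i hs
        rw [abs_of_neg hs]; ring
      · rename_i hs
        rw [abs_of_nonneg (not_lt.mp hs)]; ring
    have hgoal : x i / cns * W i j * (x j / cns) = |W i j| * (x j / cns) ^ 2 := by
      rw [hzero i j hij, ← hsW]
      field_simp
    rw [hgoal]
    positivity

-- main theorem part, to be appended after helpers
lemma mulVec_sum_smul {n : ℕ} (N : Matrix (Fin n) (Fin n) ℝ) (c : Fin n → ℝ)
    (f : Fin n → (Fin n → ℝ)) :
    N.mulVec (∑ i, c i • f i) = ∑ i, c i • N.mulVec (f i) := by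
  funext j
  simp only [Matrix.mulVec, dotProduct, Finset.sum_apply, Pi.smul_apply, smul_eq_mul,
    Finset.mul_sum]
  rw [Finset.sum_comm]
  refine Finset.sum_congr rfl fun i _ => ?_
  exact Finset.sum_congr rfl fun k _ => by ring

lemma sum_dotProduct' {n : ℕ} (f : Fin n → (Fin n → ℝ)) (v : Fin n → ℝ) :
    (∑ i, f i) ⬝ᵥ v = ∑ i, f i ⬝ᵥ v := by
  simp only [dotProduct, Finset.sum_apply, Finset.sum_mul]
  exact Finset.sum_comm

theorem imbalanced_shifted_compensation_cluster_consensus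
    {n : ℕ} (W : Matrix (Fin n) (Fin n) ℝ)
    (hsymm : W.IsSymm) (hdiag : ∀ i, W i i = 0)
    (hconn : (underlyingGraph W).Connected)
    (himbal : ¬ StructurallyBalanced W)
    (L : Matrix (Fin n) (Fin n) ℝ) (hLdef : L = signedLaplacian W)
    (lam : ℝ)
    (hlam : Module.End.HasEigenvalue
      (Matrix.toLin' (L + Matrix.diagonal (deltaVec W))) lam)
    (hlam_min : ∀ μ : ℝ, Module.End.HasEigenvalue
      (Matrix.toLin' (L + Matrix.diagonal (deltaVec W))) μ → lam ≤ μ) :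
    (L + Matrix.diagonal (deltaVec W)).PosDef ∧ 0 < lam ∧
    (L + Matrix.diagonal (fun i => deltaVec W i - lam)).PosSemidef ∧
    LinearMap.ker (Matrix.toLin' (L + Matrix.diagonal (fun i => deltaVec W i - lam))) =
      Module.End.eigenspace (Matrix.toLin' (L + Matrix.diagonal (deltaVec W))) lam ∧
    (∀ x0 : Fin n → ℝ, ∃ y : Fin n → ℝ,
      y ∈ Module.End.eigenspace (Matrix.toLin' (L + Matrix.diagonal (deltaVec W))) lam ∧
      (∀ v ∈ Module.End.eigenspace
          (Matrix.toLin' (L + Matrix.diagonal (deltaVec W))) lam,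
        ∑ i, (x0 i - y i) * v i = 0) ∧
      Filter.Tendsto
        (fun t : ℝ => (NormedSpace.exp
          ((-t) • (L + Matrix.diagonal (fun i => deltaVec W i - lam)))).mulVec x0)
        Filter.atTop (nhds y)) := by
  subst hLdef
  have hW : ∀ i j, W j i = W i j := fun i j => by
    conv_lhs => rw [← hsymm]
    rfl
  set M := signedLaplacian W + Matrix.diagonal (deltaVec W) with hMdef
  set A := signedLaplacian W + Matrix.diagonal (fun i => deltaVec W i - lam) with hAdef
  have hposdef : M.PosDef := posDefM W hsymm hdiag hconn himbal
  have hMherm : M.IsHermitian := hposdef.1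
  have hAeqM : A = M - lam • (1 : Matrix (Fin n) (Fin n) ℝ) := by
    rw [hAdef, hMdef]
    ext i j
    by_cases h : i = j
    · subst h
      simp [Matrix.diagonal_apply_eq, Matrix.one_apply_eq]
      ring
    · simp [Matrix.diagonal_apply_ne _ h, Matrix.one_apply_ne h]
  have hAmulVec : ∀ v : Fin n → ℝ, A.mulVec v = M.mulVec v - lam • v := by
    intro v
    rw [hAeqM, Matrix.sub_mulVec, Matrix.smul_mulVec, Matrix.one_mulVec]
  have hAherm : A.IsHermitian := by
    rw [hAeqM]
    have h1 : (lam • (1 : Matrix (Fin n) (Fin n) ℝ)).IsHermitian := by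
      rw [Matrix.IsHermitian, Matrix.conjTranspose_eq_transpose_of_trivial]
      ext i j
      by_cases h : i = j
      · subst h; simp
      · simp [Matrix.transpose_apply, Matrix.one_apply_ne h, Matrix.one_apply_ne (Ne.symm h)]
    exact hMherm.sub h1
  have hAT : Aᵀ = A := by
    rw [← Matrix.conjTranspose_eq_transpose_of_trivial]
    exact hAherm
  -- eigenbasis of A
  set d := hAherm.eigenvalues with hd
  set b := hAherm.eigenvectorBasis with hb
  set vb : Fin n → (Fin n → ℝ) := fun i => ⇑(b i) with hvb
  have hAv : ∀ i, A.mulVec (vb i) = d i • vb i := fun i => hAherm.mulVec_eigenvectorBasis i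
  have hMv : ∀ i, M.mulVec (vb i) = (d i + lam) • vb i := by
    intro i
    have h := hAmulVec (vb i)
    rw [hAv i, eq_sub_iff_add_eq] at h
    rw [← h, add_smul]
  have hbne : ∀ i, vb i ≠ (0 : Fin n → ℝ) := by
    intro i h
    have h0 : b i = 0 := by
      ext j
      exact congrFun h j
    have := b.toBasis.ne_zero i
    rw [OrthonormalBasis.coe_toBasis] at this
    exact this h0
  have hd_nonneg : ∀ i, 0 ≤ d i := by
    intro i
    have hev : Module.End.HasEigenvalue (Matrix.toLin' M) (d i + lam) := by
      apply Module.End.hasEigenvalue_of_hasEigenvector (x := vb i)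
      refine ⟨Module.End.mem_eigenspace_iff.mpr ?_, hbne i⟩
      rw [Matrix.toLin'_apply]
      exact hMv i
    linarith [hlam_min _ hev]
  -- 0 < lam
  have hlampos : 0 < lam := by
    obtain ⟨v, hv⟩ := hlam.exists_hasEigenvector
    have hv1 : M.mulVec v = lam • v := by
      have := Module.End.mem_eigenspace_iff.mp hv.1
      rwa [Matrix.toLin'_apply] at this
    have hpos := hposdef.dotProduct_mulVec_pos hv.2
    rw [star_trivial, hv1, dotProduct_smul] at hpos
    have hvv : 0 < v ⬝ᵥ v := by
      rcases (Finset.sum_nonneg fun i _ => mul_self_nonneg (v i)).lt_or_eq with h | h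
      · exact h
      · exfalso
        apply hv.2
        funext i
        have := (Finset.sum_eq_zero_iff_of_nonneg
          (fun i _ => mul_self_nonneg (v i))).mp h.symm i (Finset.mem_univ i)
        exact mul_self_eq_zero.mp this
    rw [smul_eq_mul] at hpos
    nlinarith [hpos, hvv]
  -- positive semidefinite
  have hpsd : A.PosSemidef := hAherm.posSemidef_iff_eigenvalues_nonneg.mpr hd_nonneg
  -- kernel = eigenspace
  have hker : LinearMap.ker (Matrix.toLin' A)
      = Module.End.eigenspace (Matrix.toLin' M) lam := by
    ext x
    rw [LinearMap.mem_ker, Module.End.mem_eigenspace_iff, Matrix.toLin'_apply,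
      Matrix.toLin'_apply, hAmulVec x, sub_eq_zero]
  refine ⟨hposdef, hlampos, hpsd, hker, ?_⟩
  -- convergence
  intro x0
  set c : Fin n → ℝ := fun i => b.repr ((WithLp.equiv 2 (Fin n → ℝ)).symm x0) i with hc
  have hx0sum : ∑ i, c i • vb i = x0 := by
    have h := b.sum_repr ((WithLp.equiv 2 (Fin n → ℝ)).symm x0)
    funext j
    have h2 := congrFun (congrArg (WithLp.equiv 2 (Fin n → ℝ)) h) j
    simpa [hvb, hc, Finset.sum_apply] using h2
  set e : Fin n → ℝ := fun i => if d i = 0 then 1 else 0 with he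
  set y : Fin n → ℝ := ∑ i, (c i * e i) • vb i with hy
  refine ⟨y, ?_, ?_, ?_⟩
  · -- y in eigenspace
    rw [Module.End.mem_eigenspace_iff, Matrix.toLin'_apply, hy, mulVec_sum_smul]
    rw [Finset.smul_sum]
    refine Finset.sum_congr rfl fun i _ => ?_
    rw [hMv i]
    by_cases hdi : d i = 0
    · rw [hdi, zero_add, smul_comm]
    · simp [he, hdi]
  · -- orthogonality
    intro v hv
    have hAv0 : A.mulVec v = 0 := by
      have h1 := Module.End.mem_eigenspace_iff.mp hv
      rw [Matrix.toLin'_apply] at h1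
      rw [hAmulVec v, h1, sub_self]
    have hbv : ∀ i, d i ≠ 0 → vb i ⬝ᵥ v = 0 := by
      intro i hdi
      have h1 : d i * (vb i ⬝ᵥ v) = 0 := by
        have e1 : d i * (vb i ⬝ᵥ v) = (d i • vb i) ⬝ᵥ v := by
          rw [smul_dotProduct, smul_eq_mul]
        rw [e1, ← hAv i, dotProduct_comm, Matrix.dotProduct_mulVec, ← hAT,
          Matrix.vecMul_transpose, hAv0, zero_dotProduct]
      exact (mul_eq_zero.mp h1).resolve_left hdi
    have hxy : x0 - y = ∑ i, (c i * (1 - e i)) • vb i := by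
      rw [← hx0sum, hy, ← Finset.sum_sub_distrib]
      refine Finset.sum_congr rfl fun i _ => ?_
      rw [← sub_smul]
      congr 1
      ring
    have hdp : ∑ i, (x0 i - y i) * v i = (x0 - y) ⬝ᵥ v := rfl
    rw [hdp, hxy, sum_dotProduct']
    refine Finset.sum_eq_zero fun i _ => ?_
    by_cases hdi : d i = 0
    · simp [he, hdi]
    · rw [smul_dotProduct, hbv i hdi, smul_zero]
  · -- convergence
    have hTraj : ∀ t : ℝ, (NormedSpace.exp ((-t) • A)).mulVec x0
        = ∑ i, (c i * Real.exp (-t * d i)) • vb i := by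
      intro t
      rw [← hx0sum, mulVec_sum_smul]
      refine Finset.sum_congr rfl fun i _ => ?_
      have h1 : ((-t) • A).mulVec (vb i) = (-t * d i) • vb i := by
        rw [Matrix.smul_mulVec, hAv i, smul_smul]
      rw [exp_mulVec_eig _ _ _ h1, smul_smul]
    have hlim : Filter.Tendsto
        (fun t : ℝ => ∑ i, (c i * Real.exp (-t * d i)) • vb i)
        Filter.atTop (nhds y) := by
      rw [hy]
      refine tendsto_finset_sum _ fun i _ => ?_
      by_cases hdi : d i = 0
      · simp only [hdi, mul_zero, neg_zero, Real.exp_zero]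
        simp only [he, hdi, if_pos, mul_one]
        exact tendsto_const_nhds
      · have hdpos : 0 < d i := lt_of_le_of_ne (hd_nonneg i) (Ne.symm hdi)
        have h1 : Filter.Tendsto (fun t : ℝ => -t * d i) Filter.atTop Filter.atBot := by
          have h2 : Filter.Tendsto (fun t : ℝ => t * d i) Filter.atTop Filter.atTop :=
            Filter.Tendsto.atTop_mul_const hdpos Filter.tendsto_id
          have h3 : Filter.Tendsto (fun t : ℝ => -(t * d i)) Filter.atTop Filter.atBot :=
            Filter.tendsto_neg_atTop_atBot.comp h2
          simpa [neg_mul] using h3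
        have h2 : Filter.Tendsto (fun t : ℝ => Real.exp (-t * d i))
            Filter.atTop (nhds 0) := Real.tendsto_exp_atBot.comp h1
        have h3 : Filter.Tendsto (fun t : ℝ => c i * Real.exp (-t * d i))
            Filter.atTop (nhds (c i * 0)) := h2.const_mul (c i)
        have h4 := h3.smul_const (vb i)
        simpa [he, hdi] using h4
    exact hlim.congr (fun t => (hTraj t).symm)
end
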